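/- arXiv:1309.4186 — 13 statements merged into one kernel-verified Lean document; each statement's English description precedes it below -/
import Mathlib

section
/- Let M be an n-by-n matrix with entries in {0,1}. The following are equivalent: (f) M has no 2-by-2 submatrix consisting only of ones, i.e., there are no row indices i < i' and column indices j < j' with M i j = M i j' = M i' j = M i' j' = 1; (g) for every real number b ≠ 0 there exists a totally nonsingular n-by-n real matrix A such that for all (i,j), A i j = b if and only if M i j = 1. -/
open Matrix

/-- An n-by-n real matrix is totally nonsingular if every minor of it
(of every size) is nonzero. -/
def TotallyNonsingular {n : ℕ} (A : Matrix (Fin n) (Fin n) ℝ) : Prop :=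
  ∀ (k : ℕ) (f g : Fin k → Fin n), StrictMono f → StrictMono g →
    (A.submatrix f g).det ≠ 0


lemma det_updateRow_single {m : ℕ} (S : Matrix (Fin (m+1)) (Fin (m+1)) ℝ) (r c : Fin (m+1)) :
    (S.updateRow r (Pi.single c 1)).det =
      (-1 : ℝ) ^ ((r : ℕ) + (c : ℕ)) * (S.submatrix r.succAbove c.succAbove).det := by
  rw [Matrix.det_succ_row _ r, Finset.sum_eq_single c]
  · have h1 : (S.updateRow r (Pi.single c 1)).submatrix r.succAbove c.succAbove
        = S.submatrix r.succAbove c.succAbove := by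
      ext i j
      simp [Matrix.submatrix, Matrix.updateRow_ne (Fin.succAbove_ne r i)]
    rw [h1]
    simp [Matrix.updateRow_self]
  · intro j _ hj
    simp [Matrix.updateRow_self, Pi.single_eq_of_ne hj]
  · intro h; exact absurd (Finset.mem_univ c) h

lemma key_lemma (n : ℕ) (M : Matrix (Fin n) (Fin n) ℕ)
    (hM2 : ¬ ∃ (i i' : Fin n) (j j' : Fin n), i < i' ∧ j < j' ∧
        M i j = 1 ∧ M i j' = 1 ∧ M i' j = 1 ∧ M i' j' = 1)
    (b : ℝ) (hb : b ≠ 0) (F : Finset (Fin n × Fin n)) :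
    (∀ e ∈ F, M e.1 e.2 ≠ 1) →
    ∃ A : Matrix (Fin n) (Fin n) ℝ,
      (∀ i j, M i j = 1 → A i j = b) ∧ (∀ i j, M i j ≠ 1 → A i j ≠ b) ∧
      ∀ (k : ℕ) (f g : Fin k → Fin n), StrictMono f → StrictMono g →
        (∀ i j, M (f i) (g j) ≠ 1 → (f i, g j) ∈ F) → (A.submatrix f g).det ≠ 0 := by
  induction F using Finset.induction_on with
  | empty =>
    intro _
    refine ⟨fun i j => if M i j = 1 then b else b + 1, fun i j h => by simp [h],
      fun i j h => by simp [h], ?_⟩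
    intro k f g hf hg hfree
    have hall : ∀ i j, M (f i) (g j) = 1 := by
      intro i j
      by_contra h
      exact absurd (hfree i j h) (by simp)
    match k with
    | 0 => simp [Matrix.det_isEmpty]
    | 1 =>
      rw [Matrix.det_fin_one]
      simp [Matrix.submatrix, hall 0 0, hb]
    | (m+2) =>
      exact absurd ⟨f 0, f 1, g 0, g 1, hf (by norm_num [Fin.lt_def]),
        hg (by norm_num [Fin.lt_def]), hall 0 0, hall 0 1, hall 1 0, hall 1 1⟩ hM2
  | @insert e F he IH =>
    intro hFree
    obtain ⟨A, hA1, hA2, hA3⟩ := IH (fun e' h => hFree e' (Finset.mem_insert_of_mem h))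
    have heFree : M e.1 e.2 ≠ 1 := hFree e (Finset.mem_insert_self e F)
    -- family of candidate matrices
    set Amat : ℝ → Matrix (Fin n) (Fin n) ℝ :=
      fun x i j => if i = e.1 ∧ j = e.2 then x else A i j with hAmat
    -- affine structure of minors through e
    have hsub : ∀ (x : ℝ) (k : ℕ) (f g : Fin k → Fin n), Function.Injective f →
        Function.Injective g → ∀ r c, f r = e.1 → g c = e.2 →
        (Amat x).submatrix f g = (A.submatrix f g).updateRow r
          (Function.update (fun j => A (f r) (g j)) c x) := by
      intro x k f g hf hg r c hr hc
      ext i j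
      by_cases hi : i = r
      · subst hi
        rw [Matrix.updateRow_self]
        by_cases hj : j = c
        · subst hj
          simp [hAmat, Matrix.submatrix, hr, hc]
        · have : ¬ (f i = e.1 ∧ g j = e.2) := by
            rintro ⟨-, h2⟩
            exact hj (hg (h2.trans hc.symm))
          simp [hAmat, Matrix.submatrix, this, Function.update_of_ne hj]
      · have : ¬ (f i = e.1 ∧ g j = e.2) := by
          rintro ⟨h1, -⟩
          exact hi (hf (h1.trans hr.symm))
        simp [hAmat, Matrix.submatrix, this, Matrix.updateRow_ne hi]
    have haffine : ∀ (k : ℕ) (f g : Fin k → Fin n), StrictMono f → StrictMono g →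
        (∀ i j, M (f i) (g j) ≠ 1 → (f i, g j) ∈ insert e F) → ∀ r c : Fin k,
        f r = e.1 → g c = e.2 →
        ∃ d s : ℝ, s ≠ 0 ∧ ∀ x, ((Amat x).submatrix f g).det = d + x * s := by
      intro k f g hf hg hfr r c hr hc
      match k, f, g, r, c with
      | (m+1), f, g, r, c =>
        refine ⟨((A.submatrix f g).updateRow r
            (Function.update (fun j => A (f r) (g j)) c 0)).det,
          (-1 : ℝ) ^ ((r : ℕ) + (c : ℕ)) *
            (A.submatrix (f ∘ r.succAbove) (g ∘ c.succAbove)).det, ?_, ?_⟩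
        · apply mul_ne_zero (pow_ne_zero _ (by norm_num))
          apply hA3 m (f ∘ r.succAbove) (g ∘ c.succAbove)
            (hf.comp (Fin.strictMono_succAbove r)) (hg.comp (Fin.strictMono_succAbove c))
          intro i j hij
          have h1 : (f (r.succAbove i), g (c.succAbove j)) ∈ insert e F := hfr _ _ hij
          rcases Finset.mem_insert.1 h1 with h2 | h2
          · exfalso
            have : f (r.succAbove i) = f r := by rw [hr]; exact congrArg Prod.fst h2
            exact Fin.succAbove_ne r i (hf.injective this)
          · exact h2
        · intro x
          rw [hsub x _ f g hf.injective hg.injective r c hr hc]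
          have hrow : Function.update (fun j => A (f r) (g j)) c x =
              (Function.update (fun j => A (f r) (g j)) c 0) + x • (Pi.single c 1 : Fin (m+1) → ℝ) := by
            ext j
            by_cases hj : j = c
            · subst hj; simp
            · simp [Function.update_of_ne hj, Pi.single_eq_of_ne hj]
          rw [hrow, Matrix.det_updateRow_add, Matrix.det_updateRow_smul,
            det_updateRow_single, Matrix.submatrix_submatrix]
    -- the finitely many bad values
    let Idx := Σ k : Fin (n+1), (Fin (k : ℕ) → Fin n) × (Fin (k : ℕ) → Fin n)
    let R : Idx → Set ℝ := fun p =>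
      {x | StrictMono p.2.1 ∧ StrictMono p.2.2 ∧
        (∀ i j, M (p.2.1 i) (p.2.2 j) ≠ 1 → (p.2.1 i, p.2.2 j) ∈ insert e F) ∧
        (∃ r c, p.2.1 r = e.1 ∧ p.2.2 c = e.2) ∧
        ((Amat x).submatrix p.2.1 p.2.2).det = 0}
    have hRfin : ∀ p, (R p).Finite := by
      intro p
      apply Set.Subsingleton.finite
      rintro x ⟨hf, hg, hfr, ⟨r, c, hr, hc⟩, hx⟩ y ⟨-, -, -, -, hy⟩
      obtain ⟨d, s, hs, hform⟩ := haffine _ p.2.1 p.2.2 hf hg hfr r c hr hc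
      rw [hform x] at hx
      rw [hform y] at hy
      have := hx.trans hy.symm
      exact mul_right_cancel₀ hs (by linarith)
    have hBad : ((⋃ p, R p) ∪ {b}).Finite :=
      (Set.finite_iUnion hRfin).union (Set.finite_singleton b)
    obtain ⟨x, hx⟩ := hBad.infinite_compl.nonempty
    have hxb : x ≠ b := by
      intro h; exact hx (Set.mem_union_right _ (by simp [h]))
    have hxR : ∀ p, x ∉ R p := by
      intro p hp
      exact hx (Set.mem_union_left _ (Set.mem_iUnion_of_mem p hp))
    refine ⟨Amat x, ?_, ?_, ?_⟩
    · intro i j h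
      have : ¬ (i = e.1 ∧ j = e.2) := by
        rintro ⟨h1, h2⟩; subst h1; subst h2; exact heFree h
      simp [hAmat, this, hA1 i j h]
    · intro i j h
      by_cases hij : i = e.1 ∧ j = e.2
      · simp [hAmat, hij, hxb]
      · simp [hAmat, hij, hA2 i j h]
    · intro k f g hf hg hfr
      by_cases hcase : ∃ r c, f r = e.1 ∧ g c = e.2
      · obtain ⟨r, c, hr, hc⟩ := hcase
        intro hzero
        have hk : k < n + 1 := by
          have := Fintype.card_le_of_injective f hf.injective
          simpa using Nat.lt_succ_of_le (by simpa using this)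
        exact hxR ⟨⟨k, hk⟩, f, g⟩ ⟨hf, hg, hfr, ⟨r, c, hr, hc⟩, hzero⟩
      · have hsame : (Amat x).submatrix f g = A.submatrix f g := by
          ext i j
          have : ¬ (f i = e.1 ∧ g j = e.2) := fun h => hcase ⟨i, j, h⟩
          simp [hAmat, Matrix.submatrix, this]
        rw [hsame]
        apply hA3 k f g hf hg
        intro i j hij
        rcases Finset.mem_insert.1 (hfr i j hij) with h2 | h2
        · exact absurd ⟨congrArg Prod.fst h2, congrArg Prod.snd h2⟩ (fun h => hcase ⟨i, j, h⟩)
        · exact h2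

/-- For a zero-one n-by-n matrix M, having no 2-by-2 submatrix of
ones is equivalent to: for every b ≠ 0 there is a totally nonsingular real
matrix A whose configuration of b is exactly M. -/
theorem stmt_1 (n : ℕ) (M : Matrix (Fin n) (Fin n) ℕ)
    (hM : ∀ i j, M i j = 0 ∨ M i j = 1) :
    (¬ ∃ (i i' : Fin n) (j j' : Fin n), i < i' ∧ j < j' ∧
        M i j = 1 ∧ M i j' = 1 ∧ M i' j = 1 ∧ M i' j' = 1) ↔
    (∀ b : ℝ, b ≠ 0 → ∃ A : Matrix (Fin n) (Fin n) ℝ,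
        TotallyNonsingular A ∧ ∀ i j, (A i j = b ↔ M i j = 1)) := by
  constructor
  · intro hM2 b hb
    obtain ⟨A, hA1, hA2, hA3⟩ := key_lemma n M hM2 b hb
      (Finset.univ.filter (fun e => ¬ M e.1 e.2 = 1)) (by simp)
    refine ⟨A, ?_, ?_⟩
    · intro k f g hf hg
      exact hA3 k f g hf hg (fun i j h => by simp [h])
    · intro i j
      constructor
      · intro h
        by_contra hne
        exact hA2 i j hne h
      · exact hA1 i j
  · intro h hex
    obtain ⟨i, i', j, j', hii, hjj, h1, h2, h3, h4⟩ := hex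
    obtain ⟨A, hTNS, hconf⟩ := h 1 one_ne_zero
    have hf : StrictMono (![i, i'] : Fin 2 → Fin n) := by
      rw [Fin.strictMono_iff_lt_succ]
      intro t
      fin_cases t
      simpa using hii
    have hg : StrictMono (![j, j'] : Fin 2 → Fin n) := by
      rw [Fin.strictMono_iff_lt_succ]
      intro t
      fin_cases t
      simpa using hjj
    apply hTNS 2 ![i, i'] ![j, j'] hf hg
    rw [Matrix.det_fin_two]
    simp only [Matrix.submatrix_apply, Matrix.cons_val_zero, Matrix.cons_val_one,
      Matrix.head_cons]
    rw [(hconf i j).2 h1, (hconf i j').2 h2, (hconf i' j).2 h3, (hconf i' j').2 h4]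
    ring
end

section
/- There exists a constant C > 0 such that for every n ≥ 1, every totally nonsingular n-by-n real matrix A, and every real number b, the multiplicity of b in A is at most C · n^{3/2}. -/
lemma key {n : ℕ} {A : Matrix (Fin n) (Fin n) ℝ} (h : TotallyNonsingular A) {b : ℝ}
    {i i' j j' : Fin n} (hii : i < i') (hjj : j < j')
    (h1 : A i j = b) (h2 : A i j' = b) (h3 : A i' j = b) (h4 : A i' j' = b) : False := by
  apply h 2 ![i, i'] ![j, j']
  · intro a c hac
    fin_cases a <;> fin_cases c <;> simp_all
  · intro a c hac
    fin_cases a <;> fin_cases c <;> simp_all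
  · rw [Matrix.det_fin_two]
    simp [Matrix.submatrix_apply, h1, h2, h3, h4]


/-- the multiplicity of any value b in an n-by-n totally
nonsingular matrix is O(n^{3/2}). -/
theorem stmt_2 : ∃ C : ℝ, 0 < C ∧ ∀ n : ℕ, 1 ≤ n →
    ∀ A : Matrix (Fin n) (Fin n) ℝ, TotallyNonsingular A → ∀ b : ℝ,
      ((Finset.univ.filter fun q : Fin n × Fin n => A q.1 q.2 = b).card : ℝ)
        ≤ C * (n : ℝ) ^ ((3 : ℝ) / 2) := by
  refine ⟨2, by norm_num, ?_⟩
  intro n hn A hA b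
  classical
  set R : Fin n → Finset (Fin n) := fun i => Finset.univ.filter (fun j => A i j = b) with hR
  set d : Fin n → ℕ := fun i => (R i).card with hd
  -- total count as sum of row counts
  have hT : (Finset.univ.filter fun q : Fin n × Fin n => A q.1 q.2 = b).card = ∑ i, d i := by
    rw [Finset.card_filter, Fintype.sum_prod_type]
    exact Finset.sum_congr rfl fun i _ => (Finset.card_filter _ _).symm
  -- for distinct columns, at most one common row
  have hcount : ∀ p : Fin n × Fin n, p ∈ (Finset.univ : Finset (Fin n)).offDiag →
      (Finset.univ.filter (fun i => A i p.1 = b ∧ A i p.2 = b)).card ≤ 1 := by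
    intro p hp
    rw [Finset.card_le_one]
    intro i hi i' hi'
    simp only [Finset.mem_filter, Finset.mem_univ, true_and] at hi hi'
    by_contra hne
    have hpne : p.1 ≠ p.2 := (Finset.mem_offDiag.mp hp).2.2
    rcases lt_or_gt_of_ne hpne with hj | hj
    · rcases lt_or_gt_of_ne hne with hlt | hlt
      · exact key hA hlt hj hi.1 hi.2 hi'.1 hi'.2
      · exact key hA hlt hj hi'.1 hi'.2 hi.1 hi.2
    · rcases lt_or_gt_of_ne hne with hlt | hlt
      · exact key hA hlt hj hi.2 hi.1 hi'.2 hi'.1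
      · exact key hA hlt hj hi'.2 hi'.1 hi.2 hi.1
  -- offDiag of row sets
  have hOD : ∀ i, (R i).offDiag =
      (Finset.univ : Finset (Fin n)).offDiag.filter (fun p => A i p.1 = b ∧ A i p.2 = b) := by
    intro i
    ext p
    simp only [Finset.mem_offDiag, Finset.mem_filter, Finset.mem_univ, true_and, hR,
      Finset.mem_filter]
    tauto
  have hsum : ∑ i, (R i).offDiag.card ≤ n * n - n := by
    calc ∑ i, (R i).offDiag.card
        = ∑ i, ∑ p ∈ (Finset.univ : Finset (Fin n)).offDiag,
            (if A i p.1 = b ∧ A i p.2 = b then 1 else 0) := by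
          refine Finset.sum_congr rfl fun i _ => ?_
          rw [hOD i, Finset.card_filter]
      _ = ∑ p ∈ (Finset.univ : Finset (Fin n)).offDiag, ∑ i : Fin n,
            (if A i p.1 = b ∧ A i p.2 = b then 1 else 0) := Finset.sum_comm
      _ ≤ ∑ p ∈ (Finset.univ : Finset (Fin n)).offDiag, 1 := by
          refine Finset.sum_le_sum fun p hp => ?_
          rw [← Finset.card_filter]
          exact hcount p hp
      _ = (Finset.univ : Finset (Fin n)).offDiag.card := by simp
      _ = n * n - n := by rw [Finset.offDiag_card]; simp
  have hdd : ∀ i, d i ≤ d i * d i := by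
    intro i
    rcases Nat.eq_zero_or_pos (d i) with h0 | h0
    · simp [h0]
    · exact Nat.le_mul_of_pos_left _ h0
  have hsq : ∀ i, d i * d i = (R i).offDiag.card + d i := by
    intro i
    rw [Finset.offDiag_card, Nat.sub_add_cancel (hdd i)]
  -- pass to reals
  set T : ℝ := ((Finset.univ.filter fun q : Fin n × Fin n => A q.1 q.2 = b).card : ℝ) with hTdef
  have hTsum : T = ∑ i, (d i : ℝ) := by rw [hTdef, hT]; push_cast; ring
  have hT0 : 0 ≤ T := by rw [hTdef]; positivity
  have hCS : T ^ 2 ≤ (n : ℝ) * ∑ i, (d i : ℝ) ^ 2 := by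
    rw [hTsum]
    have := sq_sum_le_card_mul_sum_sq (s := (Finset.univ : Finset (Fin n)))
      (f := fun i => (d i : ℝ))
    simpa using this
  have hsum2 : ∑ i, (d i : ℝ) ^ 2 ≤ T + (n : ℝ) ^ 2 := by
    have h1 : ∑ i, d i * d i ≤ (n * n - n) + ∑ i, d i := by
      calc ∑ i, d i * d i = ∑ i, ((R i).offDiag.card + d i) := by
            exact Finset.sum_congr rfl fun i _ => hsq i
        _ = (∑ i, (R i).offDiag.card) + ∑ i, d i := Finset.sum_add_distrib
        _ ≤ (n * n - n) + ∑ i, d i := Nat.add_le_add_right hsum _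
    have h2 : (n * n - n : ℕ) ≤ n * n := Nat.sub_le _ _
    have h3 : ∑ i, d i * d i ≤ n * n + ∑ i, d i := le_trans h1 (by omega)
    have := (Nat.cast_le (α := ℝ)).mpr h3
    push_cast at this
    rw [hTsum]
    calc ∑ i, (d i : ℝ) ^ 2 = ∑ i, ((d i : ℝ) * d i) := by
          refine Finset.sum_congr rfl fun i _ => pow_two (d i : ℝ)
      _ ≤ (n : ℝ) * n + ∑ i, (d i : ℝ) := this
      _ = (∑ i, (d i : ℝ)) + (n : ℝ) ^ 2 := by ring
  -- arithmetic finish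
  have hn1 : (1 : ℝ) ≤ (n : ℝ) := by exact_mod_cast hn
  have hnpos : (0 : ℝ) < n := by linarith
  set s : ℝ := Real.sqrt n with hsdef
  have hss : s * s = (n : ℝ) := Real.mul_self_sqrt (le_of_lt hnpos)
  have hs1 : (1 : ℝ) ≤ s := by
    rw [hsdef]
    exact Real.one_le_sqrt.mpr hn1
  have hrpow : (n : ℝ) ^ ((3 : ℝ) / 2) = (n : ℝ) * s := by
    rw [show ((3 : ℝ) / 2) = 1 + 1 / 2 by norm_num, Real.rpow_add hnpos, Real.rpow_one,
      hsdef, Real.sqrt_eq_rpow]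
  rw [hrpow]
  have hkey : T ^ 2 ≤ (n : ℝ) * T + (n : ℝ) ^ 3 := by
    calc T ^ 2 ≤ (n : ℝ) * ∑ i, (d i : ℝ) ^ 2 := hCS
      _ ≤ (n : ℝ) * (T + (n : ℝ) ^ 2) := by gcongr
      _ = (n : ℝ) * T + (n : ℝ) ^ 3 := by ring
  by_contra hcon
  push_neg at hcon
  nlinarith [mul_pos hnpos (lt_of_lt_of_le zero_lt_one hs1), sq_nonneg (T - n * s),
    mul_le_mul_of_nonneg_left hs1 (le_of_lt hnpos)]
end

section
/- There exists a constant c > 0 such that for infinitely many n there is a totally nonsingular n-by-n real matrix A and a real number b whose multiplicity in A is at least c · n^{3/2}. -/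
/-
A `0/1` pattern without a `2 × 2` rectangle of ones restricts to a rectangle-free pattern on
every square submatrix, and a rectangle-free `k × k` pattern can be completed to a nonsingular
matrix: pick a position outside the pattern, complete the complementary minor by induction, and
put `0` or `1` there, since the determinant is affine in that entry with slope `± det C`. Hence
every minor of the generic matrix (ones on the pattern, independent variables elsewhere) is a
nonzero polynomial, and over the infinite field `ℝ` a single point avoids all their zero sets.
The point-line incidences of the affine plane over `𝔽_p` form a rectangle-free pattern with
`p³ = n^{3/2}` ones in an `n × n` grid, `n = p²`.
-/

def RectangleFree {α β : Type*} (S : Set (α × β)) : Prop :=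
  ∀ ⦃a a' : α⦄ ⦃b b' : β⦄, (a, b) ∈ S → (a, b') ∈ S → (a', b) ∈ S → (a', b') ∈ S →
    a = a' ∨ b = b'

namespace RectangleFree

variable {α β γ δ : Type*} {S : Set (α × β)}

theorem preimage_prodMap (hS : RectangleFree S) {f : γ → α} {g : δ → β}
    (hf : f.Injective) (hg : g.Injective) : RectangleFree (Prod.map f g ⁻¹' S) :=
  fun _ _ _ _ h₁ h₂ h₃ h₄ => (hS h₁ h₂ h₃ h₄).imp (@hf _ _) (@hg _ _)

theorem subsingleton_of_eq_univ {S : Set (α × α)} (hS : RectangleFree S)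
    (huniv : S = Set.univ) : Subsingleton α :=
  ⟨fun a a' => by
    subst huniv
    simpa using hS (a := a) (a' := a') (b := a) (b' := a') trivial trivial trivial trivial⟩

end RectangleFree

open Matrix

variable {R : Type*} [CommRing R]

theorem Matrix.det_updateRow_add_single {k : ℕ} (B : Matrix (Fin (k + 1)) (Fin (k + 1)) R)
    (i j : Fin (k + 1)) :
    (B.updateRow i (B i + Pi.single j 1)).det
      = B.det + (-1) ^ (i + j : ℕ) * (B.submatrix i.succAbove j.succAbove).det := by
  rw [det_updateRow_add, updateRow_eq_self, ← adjugate_apply, adjugate_fin_succ_eq_det_submatrix]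

/-- Filling the free entry `(i, j)` with `0` or `1` changes the determinant by `± det C`,
so one of the two choices is nonsingular. -/
theorem exists_eq_one_on_det_ne_zero_of_minor {k : ℕ} {S : Set (Fin (k + 1) × Fin (k + 1))}
    {i j : Fin (k + 1)} (hij : (i, j) ∉ S) (C : Matrix (Fin k) (Fin k) R)
    (hC : ∀ q ∈ Prod.map i.succAbove j.succAbove ⁻¹' S, C q.1 q.2 = 1) (hCdet : C.det ≠ 0) :
    ∃ B : Matrix (Fin (k + 1)) (Fin (k + 1)) R, (∀ q ∈ S, B q.1 q.2 = 1) ∧ B.det ≠ 0 := by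
  classical
  let B₀ : Matrix (Fin (k + 1)) (Fin (k + 1)) R := fun a b =>
    if (a, b) ∈ S then 1 else Function.extend (Prod.map i.succAbove j.succAbove)
      (fun q => C q.1 q.2) 0 (a, b)
  let B₁ := B₀.updateRow i (B₀ i + Pi.single j 1)
  have hB₀ : ∀ q ∈ S, B₀ q.1 q.2 = 1 := fun q hq => if_pos hq
  have hB₁ : ∀ q ∈ S, B₁ q.1 q.2 = 1 := by
    rintro ⟨a, b⟩ hq
    rcases eq_or_ne a i with rfl | ha
    · have hb : b ≠ j := by rintro rfl; exact hij hq
      simp [B₁, hB₀ _ hq, hb]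
    · simp [B₁, updateRow_ne ha, hB₀ _ hq]
  have hminor : B₀.submatrix i.succAbove j.succAbove = C := by
    ext a b
    change (if (i.succAbove a, j.succAbove b) ∈ S then 1 else Function.extend _
      (fun q : Fin k × Fin k => C q.1 q.2) (0 : Fin (k + 1) × Fin (k + 1) → R)
      (Prod.map i.succAbove j.succAbove (a, b))) = C a b
    split_ifs with hq
    · exact (hC (a, b) hq).symm
    · exact (Fin.succAbove_right_injective.prodMap Fin.succAbove_right_injective).extend_apply
        _ _ _
  have hdet : B₁.det = B₀.det + (-1) ^ (i + j : ℕ) * C.det := by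
    rw [← hminor]; exact det_updateRow_add_single B₀ i j
  by_cases h₀ : B₀.det = 0
  · refine ⟨B₁, hB₁, ?_⟩
    rw [hdet, h₀, zero_add, Ne, (isUnit_neg_one.pow _).mul_right_eq_zero]
    exact hCdet
  · exact ⟨B₀, hB₀, h₀⟩

theorem RectangleFree.exists_eq_one_on_det_ne_zero [Nontrivial R] :
    ∀ {k : ℕ} {S : Set (Fin k × Fin k)}, RectangleFree S →
      ∃ B : Matrix (Fin k) (Fin k) R, (∀ q ∈ S, B q.1 q.2 = 1) ∧ B.det ≠ 0
  | 0, _, _ => ⟨0, fun q => q.1.elim0, by simp⟩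
  | k + 1, S, hS => by
    by_cases hfull : S = Set.univ
    · have := hS.subsingleton_of_eq_univ hfull
      exact ⟨1, fun q _ => by rw [Subsingleton.elim q.1 q.2, one_apply_eq], by simp⟩
    · obtain ⟨⟨i, j⟩, hij⟩ := (Set.ne_univ_iff_exists_notMem S).1 hfull
      obtain ⟨C, hC, hCdet⟩ := (hS.preimage_prodMap (Fin.succAbove_right_injective (p := i))
        (Fin.succAbove_right_injective (p := j))).exists_eq_one_on_det_ne_zero
      exact exists_eq_one_on_det_ne_zero_of_minor hij C hC hCdet

theorem MvPolynomial.exists_forall_eval_ne_zero {σ ι : Type*} [IsDomain R] [Infinite R]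
    [Fintype ι] {P : ι → MvPolynomial σ R} (hP : ∀ i, P i ≠ 0) :
    ∃ x : σ → R, ∀ i, eval x (P i) ≠ 0 := by
  have hprod : ∏ i, P i ≠ 0 := Finset.prod_ne_zero_iff.2 fun i _ => hP i
  obtain ⟨x, hx⟩ : ∃ x, eval x (∏ i, P i) ≠ 0 := by
    by_contra! h
    exact hprod (MvPolynomial.funext fun x => by rw [h x, map_zero])
  rw [MvPolynomial.eval_prod, Finset.prod_ne_zero_iff] at hx
  exact ⟨x, fun i => hx i (Finset.mem_univ i)⟩

section GenericCompletion

open MvPolynomial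

variable {ι κ : Type*} (R)

open Classical in
noncomputable def genericCompletion (S : Set (ι × κ)) : Matrix ι κ (MvPolynomial (ι × κ) R) :=
  Matrix.of fun a b => if (a, b) ∈ S then 1 else X (a, b)

variable {R} {S : Set (ι × κ)}

theorem genericCompletion_apply_of_mem {a : ι} {b : κ} (h : (a, b) ∈ S) :
    genericCompletion R S a b = 1 := by
  simp [genericCompletion, h]

theorem genericCompletion_apply_of_notMem {a : ι} {b : κ} (h : (a, b) ∉ S) :
    genericCompletion R S a b = X (a, b) := by
  simp [genericCompletion, h]

theorem RectangleFree.det_submatrix_genericCompletion_ne_zero [Nontrivial R]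
    (hS : RectangleFree S) {k : ℕ} {f : Fin k → ι} {g : Fin k → κ}
    (hf : f.Injective) (hg : g.Injective) :
    ((genericCompletion R S).submatrix f g).det ≠ 0 := by
  obtain ⟨B, hB, hBdet⟩ := (hS.preimage_prodMap hf hg).exists_eq_one_on_det_ne_zero (R := R)
  let x : ι × κ → R := Function.extend (Prod.map f g) (fun q => B q.1 q.2) 0
  have hx : ((genericCompletion R S).submatrix f g).map (eval x) = B := by
    ext a b
    rw [map_apply, submatrix_apply]
    by_cases hq : (f a, g b) ∈ S
    · rw [genericCompletion_apply_of_mem hq, map_one]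
      exact (hB (a, b) hq).symm
    · rw [genericCompletion_apply_of_notMem hq, eval_X]
      exact (hf.prodMap hg).extend_apply _ _ (a, b)
  intro h
  apply hBdet
  rw [← hx, ← RingHom.mapMatrix_apply, ← RingHom.map_det, h, map_zero]

theorem RectangleFree.exists_eq_one_on_det_submatrix_ne_zero [IsDomain R] [Infinite R]
    [Fintype ι] [Fintype κ] (hS : RectangleFree S) :
    ∃ A : Matrix ι κ R, (∀ q ∈ S, A q.1 q.2 = 1) ∧
      ∀ (k : ℕ) (f : Fin k → ι) (g : Fin k → κ), f.Injective → g.Injective →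
        (A.submatrix f g).det ≠ 0 := by
  classical
  let minor (m : Σ k : Fin (Fintype.card ι + 1), (Fin k ↪ ι) × (Fin k ↪ κ)) :=
    ((genericCompletion R S).submatrix m.2.1 m.2.2).det
  obtain ⟨x, hx⟩ := MvPolynomial.exists_forall_eval_ne_zero (P := minor) fun m =>
    hS.det_submatrix_genericCompletion_ne_zero m.2.1.injective m.2.2.injective
  refine ⟨(genericCompletion R S).map (eval x), fun q hq => ?_, fun k f g hf hg => ?_⟩
  · rw [map_apply, genericCompletion_apply_of_mem hq, map_one]
  · have hk : k < Fintype.card ι + 1 :=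
      Nat.lt_succ_of_le (by simpa using Fintype.card_le_of_injective f hf)
    have := hx ⟨⟨k, hk⟩, ⟨f, hf⟩, ⟨g, hg⟩⟩
    rwa [RingHom.map_det, RingHom.mapMatrix_apply] at this

end GenericCompletion

section Incidences

variable (F : Type*) [Field F] [Fintype F] [DecidableEq F]

/-- Incidences `((x, y), (m, c))` between points and non-vertical lines `y = m x + c` of the
affine plane over `F`. -/
def affineIncidences : Finset ((F × F) × (F × F)) :=
  Finset.univ.filter fun q => q.1.2 = q.2.1 * q.1.1 + q.2.2

theorem card_affineIncidences : (affineIncidences F).card = Fintype.card F ^ 3 := by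
  have : (affineIncidences F).card = (Finset.univ : Finset ((F × F) × F)).card := by
    refine Finset.card_nbij' (fun q => (q.1, q.2.1)) (fun r => (r.1, r.2, r.1.2 - r.2 * r.1.1))
      (fun _ _ => Finset.mem_coe.2 (Finset.mem_univ _)) (fun r _ => by simp [affineIncidences])
      (fun q hq => ?_) (fun _ _ => rfl)
    simp only [affineIncidences, Finset.coe_filter, Set.mem_ofPred_eq, Finset.mem_univ,
      true_and] at hq
    simp [hq]
  rw [this, Finset.card_univ, Fintype.card_prod, Fintype.card_prod]
  ring

/-- Two distinct points lie on at most one common line. -/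
theorem rectangleFree_affineIncidences :
    RectangleFree (↑(affineIncidences F) : Set ((F × F) × (F × F))) := by
  rintro ⟨x, y⟩ ⟨x', y'⟩ ⟨m, c⟩ ⟨m', c'⟩ h₁ h₂ h₃ h₄
  simp only [affineIncidences, Finset.coe_filter, Finset.mem_univ, true_and,
    Set.mem_ofPred_eq] at h₁ h₂ h₃ h₄
  by_cases hm : m = m'
  · subst hm
    exact Or.inr (Prod.ext rfl (by linear_combination h₂ - h₁))
  · have hx : x = x' :=
      mul_left_cancel₀ (sub_ne_zero.2 hm) (by linear_combination h₃ + h₂ - h₁ - h₄)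
    subst hx
    exact Or.inl (Prod.ext rfl (h₃.trans h₁.symm).symm)

end Incidences

theorem exists_rectangleFree_finset_card_eq_pow_three {ι : Type*} [Fintype ι] (F : Type*)
    [Field F] [Fintype F] (hι : Fintype.card ι = Fintype.card F ^ 2) :
    ∃ S : Finset (ι × ι), RectangleFree (S : Set (ι × ι)) ∧ S.card = Fintype.card F ^ 3 := by
  classical
  let e : ι ≃ F × F := Fintype.equivOfCardEq (by rw [hι, Fintype.card_prod, sq])
  refine ⟨(affineIncidences F).map (e.prodCongr e).symm.toEmbedding, ?_, ?_⟩
  · rw [Finset.coe_map, Equiv.coe_toEmbedding, Equiv.image_symm_eq_preimage]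
    exact (rectangleFree_affineIncidences F).preimage_prodMap e.injective e.injective
  · rw [Finset.card_map, card_affineIncidences]

/-- for infinitely many n there is an n-by-n totally nonsingular
matrix with some value of multiplicity at least c·n^{3/2}. -/
theorem stmt_3 : ∃ c : ℝ, 0 < c ∧ ∀ N : ℕ, ∃ n : ℕ, N ≤ n ∧
    ∃ (A : Matrix (Fin n) (Fin n) ℝ) (b : ℝ), TotallyNonsingular A ∧
      c * (n : ℝ) ^ ((3 : ℝ) / 2)
        ≤ ((Finset.univ.filter fun q : Fin n × Fin n => A q.1 q.2 = b).card : ℝ) := by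
  refine ⟨1, one_pos, fun N => ?_⟩
  obtain ⟨p, hNp, hp⟩ := Nat.exists_infinite_primes N
  have : Fact p.Prime := ⟨hp⟩
  obtain ⟨S, hS, hcard⟩ := exists_rectangleFree_finset_card_eq_pow_three (ι := Fin (p ^ 2))
    (ZMod p) (by rw [Fintype.card_fin, ZMod.card])
  rw [ZMod.card] at hcard
  obtain ⟨A, hA1, hA⟩ := hS.exists_eq_one_on_det_submatrix_ne_zero (R := ℝ)
  refine ⟨p ^ 2, hNp.trans (Nat.le_self_pow two_ne_zero p), A, 1,
    fun k f g hf hg => hA k f g hf.injective hg.injective, ?_⟩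
  have hS1 : S ⊆ Finset.univ.filter fun q => A q.1 q.2 = 1 := fun q hq =>
    Finset.mem_filter.2 ⟨Finset.mem_univ q, hA1 q hq⟩
  calc 1 * ((p ^ 2 : ℕ) : ℝ) ^ ((3 : ℝ) / 2) = (S.card : ℝ) := by
        rw [hcard, one_mul, Nat.cast_pow, ← Real.rpow_natCast_mul (Nat.cast_nonneg p)]
        norm_num
    _ ≤ _ := by exact_mod_cast Finset.card_le_card hS1
end

section
/- There exists a constant C > 0 such that for every n ≥ 1, every totally positive n-by-n real matrix A, and every real number b, the multiplicity of b in A is at most C · n^{4/3}. -/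
/-!
Fix the value `b` and join consecutive entries equal to `b` in each column by an edge, an arc
of the graph of the column over the rows. A column with `m` such entries carries `m - 1`
edges, so the multiplicity of `b` is at most the number `e` of edges plus `n`.

Positivity of the `2 × 2` minors makes the ratio of two columns increasing in the row, so two
columns cross at most once and there are at most `n ^ 2` crossings.

Without crossings, the vertical order of the edges over a slab between consecutive rows is the
same in every slab they share. All but one of the edges ending at a row are the lower member of
a pair adjacent just before that row, and each such pair is charged to a row where it became
adjacent with the level `b` between its two edges; a row receives at most two pairs. So a
crossing-free system with endpoints in `s` rows has at most `3 s` edges, and, deleting one edge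
per crossing, a system with `X` crossings has at most `3 s + X`. Averaging this over the
subsystems on all `k`-subsets of the rows, as in the crossing lemma, gives
`e ≲ n ^ 2 / k + X k ^ 2 / n ^ 2`, and `k ≈ n ^ (2 / 3)` yields `e = O(n ^ (4 / 3))`.
-/

/-- An m-by-n real matrix is totally positive if every minor of it
(of every size) is strictly positive. -/
def TotallyPositive {m n : ℕ} (A : Matrix (Fin m) (Fin n) ℝ) : Prop :=
  ∀ (k : ℕ) (f : Fin k → Fin m) (g : Fin k → Fin n),
    StrictMono f → StrictMono g → 0 < (A.submatrix f g).det

theorem TotallyPositive.entry_pos {m n : ℕ} {A : Matrix (Fin m) (Fin n) ℝ}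
    (hA : TotallyPositive A) (i : Fin m) (j : Fin n) : 0 < A i j := by
  simpa using hA 1 (fun _ => i) (fun _ => j) (Subsingleton.strictMono _)
    (Subsingleton.strictMono _)

theorem TotallyPositive.mul_lt_mul_of_lt_of_lt {m n : ℕ} {A : Matrix (Fin m) (Fin n) ℝ}
    (hA : TotallyPositive A) {i i' : Fin m} {j j' : Fin n} (hi : i < i') (hj : j < j') :
    A i j' * A i' j < A i j * A i' j' := by
  have h := hA 2 ![i, i'] ![j, j'] (by simp [StrictMono, Fin.forall_fin_two, hi])
    (by simp [StrictMono, Fin.forall_fin_two, hj])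
  rw [Matrix.det_fin_two] at h
  simp only [Matrix.submatrix_apply, Matrix.cons_val_zero, Matrix.cons_val_one] at h
  linarith

/-- Two columns of a totally positive matrix cross at most once: their ratio is increasing. -/
theorem TotallyPositive.lt_of_le {m n : ℕ} {A : Matrix (Fin m) (Fin n) ℝ}
    (hA : TotallyPositive A) {i i' : Fin m} {j j' : Fin n} (hi : i < i') (hj : j < j')
    (h : A i j ≤ A i j') : A i' j < A i' j' := by
  have h' := mul_le_mul_of_nonneg_right h (hA.entry_pos i' j).le
  exact lt_of_mul_lt_mul_left (h'.trans_lt (hA.mul_lt_mul_of_lt_of_lt hi hj))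
    (hA.entry_pos i j).le

open Finset

namespace TPMultiplicity

lemma card_le_card_add_one_of_consecutive {α β : Type*} [LinearOrder β] {f : α → β}
    {D : Finset α} (hf : Set.InjOn f D) {P : Finset (α × α)}
    (hP : ∀ x ∈ D, ∀ y ∈ D, f x < f y → (∀ z ∈ D, ¬ (f x < f z ∧ f z < f y)) → (x, y) ∈ P) :
    #D ≤ #P + 1 := by
  classical
  rcases D.eq_empty_or_nonempty with rfl | hD
  · simp
  obtain ⟨m, hm, hmax⟩ := D.exists_max_image f hD
  have hsub : D.erase m ⊆ P.image Prod.fst := by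
    intro x hx
    obtain ⟨hxm, hxD⟩ := mem_erase.1 hx
    have hlt : f x < f m := (hmax x hxD).lt_of_ne fun h => hxm (hf hxD hm h)
    obtain ⟨y, hy, hymin⟩ :=
      (D.filter (f x < f ·)).exists_min_image f ⟨m, mem_filter.2 ⟨hm, hlt⟩⟩
    rw [mem_filter] at hy
    refine mem_image.2 ⟨(x, y), hP x hxD y hy.1 hy.2 fun z hz hxzy => ?_, rfl⟩
    exact (hymin z (mem_filter.2 ⟨hz, hxzy.1⟩)).not_gt hxzy.2
  calc #D = #(D.erase m) + 1 := (card_erase_add_one hm).symm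
    _ ≤ #(P.image Prod.fst) + 1 := by gcongr
    _ ≤ #P + 1 := by gcongr; exact card_image_le

lemma sum_card_filter_subset_powersetCard {α ι : Type*} [DecidableEq α] (U : Finset α)
    {j k : ℕ} (hjk : j ≤ k) (X : Finset ι) (V : ι → Finset α)
    (hV : ∀ i ∈ X, V i ⊆ U ∧ #(V i) = j) :
    ∑ T ∈ U.powersetCard k, #(X.filter fun i => V i ⊆ T) = #X * (#U - j).choose (k - j) := by
  classical
  calc ∑ T ∈ U.powersetCard k, #(X.filter fun i => V i ⊆ T)
      = ∑ i ∈ X, #((U.powersetCard k).filter fun T => V i ⊆ T) := by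
        simp only [card_filter]
        exact sum_comm
    _ = ∑ _i ∈ X, (#U - j).choose (k - j) := sum_congr rfl fun i hi => by
        rw [card_filter_powersetCard_subset _ _ _ (hV i hi).1 ((hV i hi).2.le.trans hjk),
          (hV i hi).2]
    _ = #X * (#U - j).choose (k - j) := by rw [sum_const, smul_eq_mul]

def SignMono (N : ℕ) (f g : ℕ → ℝ) : Prop :=
  ∀ i j, i < j → j ≤ N → f i ≤ g i → f j < g j

namespace SignMono

variable {N i j : ℕ} {f g : ℕ → ℝ}

lemma lt_of_lt (h : SignMono N f g) (hij : i ≤ j) (hj : j ≤ N) (hi : f i < g i) :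
    f j < g j := by
  rcases hij.eq_or_lt with rfl | hlt
  · exact hi
  · exact h i j hlt hj hi.le

lemma le_of_le (h : SignMono N f g) (hij : i ≤ j) (hj : j ≤ N) (hi : f i ≤ g i) :
    f j ≤ g j := by
  rcases hij.eq_or_lt with rfl | hlt
  · exact hi
  · exact (h i j hlt hj hi).le

lemma lt_of_lt_backward (h : SignMono N g f) (hij : i ≤ j) (hj : j ≤ N) (hj' : f j < g j) :
    f i < g i :=
  not_le.1 fun hi => (h.le_of_le hij hj hi).not_gt hj'

lemma le_of_le_backward (h : SignMono N g f) (hij : i ≤ j) (hj : j ≤ N) (hj' : f j ≤ g j) :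
    f i ≤ g i := by
  rcases hij.eq_or_lt with rfl | hlt
  · exact hj'
  · exact not_lt.1 fun hi => (h i j hlt hj hi.le).not_ge hj'

lemma ne_of_eq (h : SignMono N f g) (hij : i < j) (hj : j ≤ N) (hi : f i = g i) :
    f j ≠ g j :=
  (h i j hij hj hi.le).ne

lemma flip_of_not_iff {p q : ℕ} (h : SignMono N f g) (hpq : p ≤ q) (hq : q ≤ N)
    (hp : f p ≠ g p) (hflip : ¬ (f p < g p ↔ f q < g q)) : g p < f p ∧ f q < g q := by
  have hgp : g p < f p := hp.lt_or_gt.resolve_left fun hfp =>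
    hflip (iff_of_true hfp (h.lt_of_lt hpq hq hfp))
  exact ⟨hgp, by_contra fun hfq => hflip (iff_of_false hgp.not_gt hfq)⟩

end SignMono

/-! ### Edge systems -/

@[ext] structure Edge where
  left : ℕ
  right : ℕ
  col : ℕ
  deriving DecidableEq

def IsNextHit (f : ℕ → ℝ) (b : ℝ) (l r : ℕ) : Prop :=
  l < r ∧ f l = b ∧ f r = b ∧ ∀ i, l < i → i < r → f i ≠ b

lemma IsNextHit.eq_of_max_lt_min {f : ℕ → ℝ} {b : ℝ} {l r l' r' : ℕ}
    (h : IsNextHit f b l r) (h' : IsNextHit f b l' r') (hlr : max l l' < min r r') :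
    l = l' ∧ r = r' := by
  obtain ⟨-, hl, hr, hne⟩ := h
  obtain ⟨-, hl', hr', hne'⟩ := h'
  simp only [max_lt_iff, lt_min_iff] at hlr
  have hll : l = l' := by
    rcases lt_trichotomy l l' with hlt | heq | hgt
    · exact absurd hl' (hne l' hlt hlr.1.2)
    · exact heq
    · exact absurd hl (hne' l hgt hlr.2.1)
  subst hll
  refine ⟨rfl, ?_⟩
  rcases lt_trichotomy r r' with hlt | heq | hgt
  · exact absurd hr (hne' r hlr.1.1 hlt)
  · exact heq
  · exact absurd hr' (hne r' hlr.2.2 hgt)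

lemma isNextHit_sInf {f : ℕ → ℝ} {b : ℝ} {l : ℕ} (hl : f l = b)
    (h : ∃ j, l < j ∧ f j = b) : IsNextHit f b l (sInf {j | l < j ∧ f j = b}) := by
  have hmem : sInf {j | l < j ∧ f j = b} ∈ {j | l < j ∧ f j = b} := Nat.sInf_mem h
  exact ⟨hmem.1, hl, hmem.2, fun i hli hir hi => Nat.notMem_of_lt_sInf hir ⟨hli, hi⟩⟩

namespace Edge

def Alive (x : Edge) (s : ℕ) : Prop := x.left ≤ s ∧ s < x.right

def overlapStart (x y : Edge) : ℕ := max x.left y.left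

def overlapEnd (x y : Edge) : ℕ := min x.right y.right

def Overlap (x y : Edge) : Prop := overlapStart x y < overlapEnd x y

/-- The position of `x` in the slab between rows `s` and `s + 1`. -/
def key (H : ℕ → ℕ → ℝ) (x : Edge) (s : ℕ) : ℝ ×ₗ ℝ := toLex (H x.col s, H x.col (s + 1))

lemma overlap_of_alive {x y : Edge} {s : ℕ} (hx : x.Alive s) (hy : y.Alive s) :
    x.Overlap y := by
  unfold Alive at hx hy; unfold Overlap overlapStart overlapEnd; omega

lemma overlapStart_le_of_alive {x y : Edge} {s : ℕ} (hx : x.Alive s) (hy : y.Alive s) :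
    overlapStart x y ≤ s := max_le hx.1 hy.1

lemma lt_overlapEnd_of_alive {x y : Edge} {s : ℕ} (hx : x.Alive s) (hy : y.Alive s) :
    s < overlapEnd x y := lt_min hx.2 hy.2

lemma key_lt_of_val_lt {H : ℕ → ℕ → ℝ} {x y : Edge} {s : ℕ} (h : H x.col s < H y.col s) :
    x.key H s < y.key H s :=
  Prod.Lex.lt_iff.2 (Or.inl h)

lemma val_le_of_key_lt {H : ℕ → ℕ → ℝ} {x y : Edge} {s : ℕ} (h : x.key H s < y.key H s) :
    H x.col s ≤ H y.col s := by
  rcases Prod.Lex.lt_iff.1 h with h | h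
  · exact h.le
  · exact h.1.le

end Edge

open Edge

variable (H : ℕ → ℕ → ℝ)

def Crosses (x y : Edge) : Prop :=
  x.col < y.col ∧ x.Overlap y ∧ x.left ≠ y.left ∧ x.right ≠ y.right ∧
    ¬ (H x.col (overlapStart x y) < H y.col (overlapStart x y) ↔
        H x.col (overlapEnd x y) < H y.col (overlapEnd x y))

def CrossingFree (E : Finset Edge) : Prop := ∀ x ∈ E, ∀ y ∈ E, ¬ Crosses H x y

def Adjacent (E : Finset Edge) (s : ℕ) (x y : Edge) : Prop :=
  x.Alive s ∧ y.Alive s ∧ x.key H s < y.key H s ∧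
    ∀ z ∈ E, z.Alive s → ¬ (x.key H s < z.key H s ∧ z.key H s < y.key H s)

open scoped Classical in
noncomputable def crossings (E : Finset Edge) : Finset (Edge × Edge) :=
  (E ×ˢ E).filter fun q => Crosses H q.1 q.2

open scoped Classical in
noncomputable def dyingPairs (E : Finset Edge) : Finset (Edge × Edge) :=
  (E ×ˢ E).filter fun q => q.1.right = q.2.right ∧ Adjacent H E (q.1.right - 1) q.1 q.2

/-- An edge `x` is the arc of the column `H x.col` between consecutive rows where it takes the
value `b`; rows run up to `N`. -/
structure EdgeSystem (b : ℝ) (N : ℕ) (E : Finset Edge) : Prop where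
  isNextHit : ∀ x ∈ E, IsNextHit (H x.col) b x.left x.right
  right_le : ∀ x ∈ E, x.right ≤ N
  signMono : ∀ x ∈ E, ∀ y ∈ E, x.col < y.col → SignMono N (H x.col) (H y.col)

variable {H}

lemma mem_crossings {E : Finset Edge} {q : Edge × Edge} :
    q ∈ crossings H E ↔ q.1 ∈ E ∧ q.2 ∈ E ∧ Crosses H q.1 q.2 := by
  classical
  simp only [crossings, mem_filter, mem_product, and_assoc]

lemma mem_dyingPairs {E : Finset Edge} {q : Edge × Edge} :
    q ∈ dyingPairs H E ↔
      q.1 ∈ E ∧ q.2 ∈ E ∧ q.1.right = q.2.right ∧ Adjacent H E (q.1.right - 1) q.1 q.2 := by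
  classical
  simp only [dyingPairs, mem_filter, mem_product, and_assoc]

namespace EdgeSystem

variable {b : ℝ} {N : ℕ} {E : Finset Edge} {x y z w : Edge} {s : ℕ}

lemma left_lt_right (hE : EdgeSystem H b N E) (hx : x ∈ E) : x.left < x.right :=
  (hE.isNextHit x hx).1

lemma val_left (hE : EdgeSystem H b N E) (hx : x ∈ E) : H x.col x.left = b :=
  (hE.isNextHit x hx).2.1

lemma val_right (hE : EdgeSystem H b N E) (hx : x ∈ E) : H x.col x.right = b :=
  (hE.isNextHit x hx).2.2.1

lemma val_ne (hE : EdgeSystem H b N E) (hx : x ∈ E) {i : ℕ} (hli : x.left < i)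
    (hir : i < x.right) : H x.col i ≠ b :=
  (hE.isNextHit x hx).2.2.2 i hli hir

lemma mono (hE : EdgeSystem H b N E) {F : Finset Edge} (hF : F ⊆ E) : EdgeSystem H b N F :=
  ⟨fun x hx => hE.isNextHit x (hF hx), fun x hx => hE.right_le x (hF hx),
    fun x hx y hy => hE.signMono x (hF hx) y (hF hy)⟩

lemma signMono_or (hE : EdgeSystem H b N E) (hx : x ∈ E) (hy : y ∈ E) (hc : x.col ≠ y.col) :
    SignMono N (H x.col) (H y.col) ∨ SignMono N (H y.col) (H x.col) :=
  hc.lt_or_gt.imp (hE.signMono x hx y hy) (hE.signMono y hy x hx)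

lemma val_ne_of_val_eq (hE : EdgeSystem H b N E) (hx : x ∈ E) (hy : y ∈ E)
    (hc : x.col ≠ y.col) {i j : ℕ} (hij : i < j) (hj : j ≤ N)
    (hi : H x.col i = H y.col i) : H x.col j ≠ H y.col j := by
  rcases hE.signMono_or hx hy hc with h | h
  · exact h.ne_of_eq hij hj hi
  · exact (h.ne_of_eq hij hj hi.symm).symm

lemma eq_of_overlap_of_col_eq (hE : EdgeSystem H b N E) (hx : x ∈ E) (hy : y ∈ E)
    (hc : x.col = y.col) (ho : x.Overlap y) : x = y := by
  have hy' := hE.isNextHit y hy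
  rw [← hc] at hy'
  obtain ⟨hl, hr⟩ := (hE.isNextHit x hx).eq_of_max_lt_min hy' ho
  exact Edge.ext hl hr hc

lemma eq_of_left_eq_of_right_eq (hE : EdgeSystem H b N E) (hx : x ∈ E) (hy : y ∈ E)
    (hl : x.left = y.left) (hr : x.right = y.right) : x = y := by
  by_contra hne
  have hc : x.col ≠ y.col := fun hc => hne (Edge.ext hl hr hc)
  refine hE.val_ne_of_val_eq hx hy hc (hE.left_lt_right hx) (hE.right_le x hx) ?_ ?_
  · rw [hE.val_left hx, hl, hE.val_left hy]
  · rw [hE.val_right hx, hr, hE.val_right hy]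

lemma col_ne_of_alive (hE : EdgeSystem H b N E) (hx : x ∈ E) (hy : y ∈ E) (hne : x ≠ y)
    (hxs : x.Alive s) (hys : y.Alive s) : x.col ≠ y.col :=
  fun hc => hne (hE.eq_of_overlap_of_col_eq hx hy hc (overlap_of_alive hxs hys))

lemma key_ne (hE : EdgeSystem H b N E) (hx : x ∈ E) (hy : y ∈ E) (hne : x ≠ y)
    (hxs : x.Alive s) (hys : y.Alive s) : x.key H s ≠ y.key H s := fun h => by
  obtain ⟨h₀, h₁⟩ := Prod.ext_iff.1 (toLex.injective h)
  exact hE.val_ne_of_val_eq hx hy (hE.col_ne_of_alive hx hy hne hxs hys) s.lt_succ_self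
    (hxs.2.trans_le (hE.right_le x hx)) h₀ h₁

lemma val_overlapStart_ne (hE : EdgeSystem H b N E) (hx : x ∈ E) (hy : y ∈ E)
    (ho : x.Overlap y) (hl : x.left ≠ y.left) :
    H x.col (overlapStart x y) ≠ H y.col (overlapStart x y) := by
  simp only [Overlap, overlapStart, overlapEnd] at ho ⊢
  rcases hl.lt_or_gt with h | h
  · rw [max_eq_right h.le] at ho ⊢
    rw [hE.val_left hy]
    exact hE.val_ne hx h (ho.trans_le (min_le_left _ _))
  · rw [max_eq_left h.le] at ho ⊢
    rw [hE.val_left hx]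
    exact (hE.val_ne hy h (ho.trans_le (min_le_right _ _))).symm

lemma val_overlapEnd_ne (hE : EdgeSystem H b N E) (hx : x ∈ E) (hy : y ∈ E)
    (ho : x.Overlap y) (hr : x.right ≠ y.right) :
    H x.col (overlapEnd x y) ≠ H y.col (overlapEnd x y) := by
  simp only [Overlap, overlapStart, overlapEnd] at ho ⊢
  rcases hr.lt_or_gt with h | h
  · rw [min_eq_left h.le] at ho ⊢
    rw [hE.val_right hx]
    exact (hE.val_ne hy ((le_max_right _ _).trans_lt ho) h).symm
  · rw [min_eq_right h.le] at ho ⊢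
    rw [hE.val_right hy]
    exact hE.val_ne hx ((le_max_left _ _).trans_lt ho) h

/-! ### Crossing-free systems -/

lemma lt_iff_lt_of_crossingFree (hE : EdgeSystem H b N E) (hfree : CrossingFree H E)
    (hx : x ∈ E) (hy : y ∈ E) (hc : x.col ≠ y.col) (ho : x.Overlap y) (hl : x.left ≠ y.left)
    (hr : x.right ≠ y.right) :
    H x.col (overlapStart x y) < H y.col (overlapStart x y) ↔
      H x.col (overlapEnd x y) < H y.col (overlapEnd x y) := by
  rcases hc.lt_or_gt with hlt | hgt
  · exact not_not.1 fun h => hfree x hx y hy ⟨hlt, ho, hl, hr, h⟩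
  · have hyx : y.Overlap x := by
      rwa [Overlap, overlapStart, overlapEnd, max_comm, min_comm]
    have h := not_not.1 fun h => hfree y hy x hx ⟨hgt, hyx, hl.symm, hr.symm, h⟩
    rw [overlapStart, overlapEnd, max_comm, min_comm] at h
    rw [← not_le, ← not_le, (hE.val_overlapStart_ne hx hy ho hl).symm.le_iff_lt,
      (hE.val_overlapEnd_ne hx hy ho hr).symm.le_iff_lt]
    exact not_congr h

/-- Sign-monotonicity lets the order of the two columns flip at most once on the common span,
and a flip away from a shared endpoint would be a crossing. -/
theorem le_on_overlap_of_key_lt (hE : EdgeSystem H b N E) (hfree : CrossingFree H E) (hx : x ∈ E)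
    (hy : y ∈ E) (hne : x ≠ y) (hxs : x.Alive s) (hys : y.Alive s)
    (hlt : x.key H s < y.key H s) {i : ℕ} (hpi : overlapStart x y ≤ i)
    (hiq : i ≤ overlapEnd x y) : H x.col i ≤ H y.col i := by
  have hc := hE.col_ne_of_alive hx hy hne hxs hys
  have ho := overlap_of_alive hxs hys
  have hps := overlapStart_le_of_alive hxs hys
  have hsq := lt_overlapEnd_of_alive hxs hys
  have hqN : overlapEnd x y ≤ N := (min_le_left _ _).trans (hE.right_le x hx)
  obtain ⟨i₀, hpi₀, hi₀q, hi₀⟩ : ∃ i₀, overlapStart x y ≤ i₀ ∧ i₀ ≤ overlapEnd x y ∧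
      H x.col i₀ < H y.col i₀ := by
    rcases Prod.Lex.lt_iff.1 hlt with h | h
    · exact ⟨s, hps, hsq.le, h⟩
    · exact ⟨s + 1, by omega, hsq, h.2⟩
  rcases hE.signMono_or hx hy hc with h | h
  · refine h.le_of_le hpi (hiq.trans hqN) ?_
    have hq := h.lt_of_lt hi₀q hqN hi₀
    by_cases hl : x.left = y.left
    · rw [show overlapStart x y = x.left by simp [overlapStart, hl], hE.val_left hx, hl,
        hE.val_left hy]
    · have hr : x.right ≠ y.right := fun hr => by
        rw [show overlapEnd x y = x.right by simp [overlapEnd, hr], hE.val_right hx, hr,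
          hE.val_right hy] at hq
        exact lt_irrefl _ hq
      exact ((hE.lt_iff_lt_of_crossingFree hfree hx hy hc ho hl hr).2 hq).le
  · refine h.le_of_le_backward hiq hqN ?_
    have hp := h.lt_of_lt_backward hpi₀ (hi₀q.trans hqN) hi₀
    by_cases hr : x.right = y.right
    · rw [show overlapEnd x y = x.right by simp [overlapEnd, hr], hE.val_right hx, hr,
        hE.val_right hy]
    · have hl : x.left ≠ y.left := fun hl => by
        rw [show overlapStart x y = x.left by simp [overlapStart, hl], hE.val_left hx, hl,
          hE.val_left hy] at hp
        exact lt_irrefl _ hp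
      exact ((hE.lt_iff_lt_of_crossingFree hfree hx hy hc ho hl hr).1 hp).le

lemma key_lt_of_key_lt (hE : EdgeSystem H b N E) (hfree : CrossingFree H E) (hx : x ∈ E)
    (hy : y ∈ E) (hne : x ≠ y) (hxs : x.Alive s) (hys : y.Alive s)
    (hlt : x.key H s < y.key H s) {s' : ℕ} (hxs' : x.Alive s') (hys' : y.Alive s') :
    x.key H s' < y.key H s' := by
  have hps := overlapStart_le_of_alive hxs' hys'
  have hsq := lt_overlapEnd_of_alive hxs' hys'
  have hle : x.key H s' ≤ y.key H s' := Prod.Lex.toLex_mono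
    ⟨hE.le_on_overlap_of_key_lt hfree hx hy hne hxs hys hlt hps hsq.le,
      hE.le_on_overlap_of_key_lt hfree hx hy hne hxs hys hlt (by omega) hsq⟩
  exact hle.lt_of_ne (hE.key_ne hx hy hne hxs' hys')

lemma eq_of_adjacent_left (hE : EdgeSystem H b N E) (hx : x ∈ E) (hx' : z ∈ E)
    (h : Adjacent H E s x y) (h' : Adjacent H E s z y) : x = z := by
  by_contra hne
  rcases (hE.key_ne hx hx' hne h.1 h'.1).lt_or_gt with hlt | hgt
  · exact h.2.2.2 z hx' h'.1 ⟨hlt, h'.2.2.1⟩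
  · exact h'.2.2.2 x hx h.1 ⟨hgt, h.2.2.1⟩

lemma eq_of_adjacent_right (hE : EdgeSystem H b N E) (hy : y ∈ E) (hy' : z ∈ E)
    (h : Adjacent H E s x y) (h' : Adjacent H E s x z) : y = z := by
  by_contra hne
  rcases (hE.key_ne hy hy' hne h.2.1 h'.2.1).lt_or_gt with hlt | hgt
  · exact h'.2.2.2 y hy h.2.1 ⟨h.2.2.1, hlt⟩
  · exact h.2.2.2 z hy' h'.2.1 ⟨h'.2.2.1, hgt⟩

lemma key_lt_of_adjacent_of_val_lt (hE : EdgeSystem H b N E) (hx : x ∈ E) (hw : w ∈ E)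
    (h : Adjacent H E s x y) {a : ℝ} (hya : a ≤ H y.col s) (hws : w.Alive s)
    (hwa : H w.col s < a) (hwx : w ≠ x) : w.key H s < x.key H s := by
  refine (hE.key_ne hw hx hwx hws h.1).lt_or_gt.resolve_right fun hgt => ?_
  exact h.2.2.2 w hw hws ⟨hgt, key_lt_of_val_lt (hwa.trans_le hya)⟩

lemma key_lt_of_adjacent_of_lt_val (hE : EdgeSystem H b N E) (hy : y ∈ E) (hw : w ∈ E)
    (h : Adjacent H E s x y) {a : ℝ} (hxa : H x.col s ≤ a) (hws : w.Alive s)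
    (haw : a < H w.col s) (hwy : w ≠ y) : y.key H s < w.key H s := by
  refine (hE.key_ne hw hy hwy hws h.2.1).lt_or_gt.resolve_left fun hlt => ?_
  exact h.2.2.2 w hw hws ⟨key_lt_of_val_lt (hxa.trans_lt haw), hlt⟩

lemma eq_of_adjacent_of_val_lt (hE : EdgeSystem H b N E) {x' y' : Edge} (hx : x ∈ E)
    (hy : y ∈ E) (hx' : x' ∈ E) (hy' : y' ∈ E) (h : Adjacent H E s x y)
    (h' : Adjacent H E s x' y') {a : ℝ} (hxa : H x.col s < a) (hya : a ≤ H y.col s)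
    (hxa' : H x'.col s < a) (hya' : a ≤ H y'.col s) : (x, y) = (x', y') := by
  obtain rfl : x = x' := by
    by_contra hne
    exact lt_asymm (hE.key_lt_of_adjacent_of_val_lt hx' hx h' hya' h.1 hxa hne)
      (hE.key_lt_of_adjacent_of_val_lt hx hx' h hya h'.1 hxa' (Ne.symm hne))
  rw [hE.eq_of_adjacent_right hy hy' h h']

lemma eq_of_adjacent_of_lt_val (hE : EdgeSystem H b N E) {x' y' : Edge} (hx : x ∈ E)
    (hy : y ∈ E) (hx' : x' ∈ E) (hy' : y' ∈ E) (h : Adjacent H E s x y)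
    (h' : Adjacent H E s x' y') {a : ℝ} (hxa : H x.col s ≤ a) (hya : a < H y.col s)
    (hxa' : H x'.col s ≤ a) (hya' : a < H y'.col s) : (x, y) = (x', y') := by
  obtain rfl : y = y' := by
    by_contra hne
    exact lt_asymm (hE.key_lt_of_adjacent_of_lt_val hy hy' h hxa h'.2.1 hya' (Ne.symm hne))
      (hE.key_lt_of_adjacent_of_lt_val hy' hy h' hxa' h.2.1 hya hne)
  rw [hE.eq_of_adjacent_left hx hx' h h']

lemma level_between_of_eq_max_left (hE : EdgeSystem H b N E) (hx : x ∈ E) (hy : y ∈ E)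
    (h : Adjacent H E s x y) (hl : x.left ≠ y.left) (hs : s = max x.left y.left) :
    H x.col s < b ∧ b ≤ H y.col s ∨ H x.col s ≤ b ∧ b < H y.col s := by
  have hle := val_le_of_key_lt h.2.2.1
  rcases hl.lt_or_gt with hlt | hgt
  · rw [max_eq_right hlt.le] at hs
    subst hs
    have hyb := hE.val_left hy
    exact Or.inl ⟨(hle.trans hyb.le).lt_of_ne (hE.val_ne hx hlt h.1.2), hyb.ge⟩
  · rw [max_eq_left hgt.le] at hs
    subst hs
    have hxb := hE.val_left hx
    exact Or.inr ⟨hxb.le, (hxb.ge.trans hle).lt_of_ne (hE.val_ne hy hgt h.2.1.2).symm⟩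

lemma level_between_of_not_adjacent (hE : EdgeSystem H b N E) (hfree : CrossingFree H E)
    (hx : x ∈ E) (hy : y ∈ E) (h : Adjacent H E (s + 1) x y)
    (hs : max x.left y.left < s + 1) (hn : ¬ Adjacent H E s x y) :
    (∃ z ∈ E, z.right = s + 1) ∧ H x.col (s + 1) < b ∧ b ≤ H y.col (s + 1) := by
  have hne : x ≠ y := by rintro rfl; exact lt_irrefl _ h.2.2.1
  have hxs : x.Alive s := ⟨by omega, by have := h.1.2; omega⟩
  have hys : y.Alive s := ⟨by omega, by have := h.2.1.2; omega⟩
  have hlt := hE.key_lt_of_key_lt hfree hx hy hne h.1 h.2.1 h.2.2.1 hxs hys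
  obtain ⟨z, hz, hzs, hxz, hzy⟩ : ∃ z ∈ E, z.Alive s ∧ x.key H s < z.key H s ∧
      z.key H s < y.key H s := by
    by_contra hcon
    exact hn ⟨hxs, hys, hlt, fun z hz hzs hxzy => hcon ⟨z, hz, hzs, hxzy⟩⟩
  have hzx : z ≠ x := by rintro rfl; exact lt_irrefl _ hxz
  have hzy' : z ≠ y := by rintro rfl; exact lt_irrefl _ hzy
  have hzr : z.right = s + 1 := by
    by_contra hzr
    have hzs' : z.Alive (s + 1) := ⟨by have := hzs.1; omega, by have := hzs.2; omega⟩
    exact h.2.2.2 z hz hzs'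
      ⟨hE.key_lt_of_key_lt hfree hx hz hzx.symm hxs hzs hxz h.1 hzs',
        hE.key_lt_of_key_lt hfree hz hy hzy' hzs hys hzy hzs' h.2.1⟩
  have hzb : H z.col (s + 1) = b := hzr ▸ hE.val_right hz
  have hxz' := hE.le_on_overlap_of_key_lt hfree hx hz hzx.symm hxs hzs hxz (i := s + 1)
    (max_le (by omega) (by have := hzs.1; omega)) (le_min h.1.2.le hzr.ge)
  have hzy'' := hE.le_on_overlap_of_key_lt hfree hz hy hzy' hzs hys hzy (i := s + 1)
    (max_le (by have := hzs.1; omega) (by omega)) (le_min hzr.ge h.2.1.2.le)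
  exact ⟨⟨z, hz, hzr⟩, (hxz'.trans hzb.le).lt_of_ne (hE.val_ne hx (by omega) h.1.2),
    hzb.ge.trans hzy''⟩

lemma exists_level_between (hE : EdgeSystem H b N E) (hfree : CrossingFree H E)
    {S : Finset ℕ} (hS : ∀ z ∈ E, z.left ∈ S ∧ z.right ∈ S) (hx : x ∈ E) (hy : y ∈ E)
    (hl : x.left ≠ y.left) (h : Adjacent H E s x y) :
    ∃ v ∈ S, Adjacent H E v x y ∧
      (H x.col v < b ∧ b ≤ H y.col v ∨ H x.col v ≤ b ∧ b < H y.col v) := by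
  have hmax : max x.left y.left ∈ S := by
    rcases max_choice x.left y.left with hm | hm <;> rw [hm]
    exacts [(hS x hx).1, (hS y hy).1]
  induction s with
  | zero =>
    have hs : 0 = max x.left y.left := by have := h.1.1; have := h.2.1.1; omega
    exact ⟨0, hs ▸ hmax, h, hE.level_between_of_eq_max_left hx hy h hl hs⟩
  | succ s ih =>
    by_cases hs : s + 1 = max x.left y.left
    · exact ⟨s + 1, hs ▸ hmax, h, hE.level_between_of_eq_max_left hx hy h hl hs⟩
    by_cases h' : Adjacent H E s x y
    · exact ih h'
    have hlt : max x.left y.left < s + 1 := (max_le h.1.1 h.2.1.1).lt_of_ne (Ne.symm hs)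
    obtain ⟨⟨z, hz, hzr⟩, hxb, hyb⟩ := hE.level_between_of_not_adjacent hfree hx hy h hlt h'
    exact ⟨s + 1, hzr ▸ (hS z hz).2, h, Or.inl ⟨hxb, hyb⟩⟩

/-- Each pair is charged to a row where it is adjacent and straddles the level `b`; a row and
the side of `b` on which the lower edge lies determine the pair. -/
theorem card_le_two_mul_of_adjacent (hE : EdgeSystem H b N E) (hfree : CrossingFree H E)
    {S : Finset ℕ} (hS : ∀ z ∈ E, z.left ∈ S ∧ z.right ∈ S) {P : Finset (Edge × Edge)}
    (hP : ∀ q ∈ P, q.1 ∈ E ∧ q.2 ∈ E ∧ q.1.left ≠ q.2.left ∧ ∃ s, Adjacent H E s q.1 q.2) :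
    #P ≤ 2 * #S := by
  classical
  let below (v : ℕ) := P.filter fun q =>
    Adjacent H E v q.1 q.2 ∧ H q.1.col v < b ∧ b ≤ H q.2.col v
  let above (v : ℕ) := P.filter fun q =>
    Adjacent H E v q.1 q.2 ∧ H q.1.col v ≤ b ∧ b < H q.2.col v
  have hcover : P ⊆ S.biUnion fun v => below v ∪ above v := by
    intro q hq
    obtain ⟨hx, hy, hl, s, hs⟩ := hP q hq
    obtain ⟨v, hv, hadj, hlev | hlev⟩ := hE.exists_level_between hfree hS hx hy hl hs
    · exact mem_biUnion.2 ⟨v, hv, mem_union_left _ (mem_filter.2 ⟨hq, hadj, hlev⟩)⟩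
    · exact mem_biUnion.2 ⟨v, hv, mem_union_right _ (mem_filter.2 ⟨hq, hadj, hlev⟩)⟩
  have hbelow (v : ℕ) : #(below v) ≤ 1 := card_le_one.2 fun q hq q' hq' => by
    obtain ⟨hq, hadj, hxb, hyb⟩ := mem_filter.1 hq
    obtain ⟨hq', hadj', hxb', hyb'⟩ := mem_filter.1 hq'
    obtain ⟨hx, hy, -⟩ := hP q hq
    obtain ⟨hx', hy', -⟩ := hP q' hq'
    exact hE.eq_of_adjacent_of_val_lt hx hy hx' hy' hadj hadj' hxb hyb hxb' hyb'
  have habove (v : ℕ) : #(above v) ≤ 1 := card_le_one.2 fun q hq q' hq' => by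
    obtain ⟨hq, hadj, hxb, hyb⟩ := mem_filter.1 hq
    obtain ⟨hq', hadj', hxb', hyb'⟩ := mem_filter.1 hq'
    obtain ⟨hx, hy, -⟩ := hP q hq
    obtain ⟨hx', hy', -⟩ := hP q' hq'
    exact hE.eq_of_adjacent_of_lt_val hx hy hx' hy' hadj hadj' hxb hyb hxb' hyb'
  calc #P ≤ #(S.biUnion fun v => below v ∪ above v) := card_le_card hcover
    _ ≤ ∑ v ∈ S, #(below v ∪ above v) := card_biUnion_le
    _ ≤ ∑ _v ∈ S, 2 := sum_le_sum fun v _ =>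
      (card_union_le _ _).trans (add_le_add (hbelow v) (habove v))
    _ = 2 * #S := by rw [sum_const, smul_eq_mul, mul_comm]

/-- An edge running on past row `t` cannot pass between two edges ending at `t`: it would take
the value `b` at `t`. -/
lemma not_key_between_of_right_eq (hE : EdgeSystem H b N E) (hfree : CrossingFree H E)
    (hx : x ∈ E) (hy : y ∈ E) (hz : z ∈ E) (hr : x.right = y.right)
    (hzs : z.Alive (x.right - 1)) (hzr : z.right ≠ x.right)
    (hxz : x.key H (x.right - 1) < z.key H (x.right - 1))
    (hzy : z.key H (x.right - 1) < y.key H (x.right - 1)) : False := by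
  have hlx := hE.left_lt_right hx
  have hly := hE.left_lt_right hy
  have hxs : x.Alive (x.right - 1) := ⟨by omega, by omega⟩
  have hys : y.Alive (x.right - 1) := ⟨by omega, by omega⟩
  have hzx : z ≠ x := by rintro rfl; exact lt_irrefl _ hxz
  have hzy' : z ≠ y := by rintro rfl; exact lt_irrefl _ hzy
  have hrz : x.right < z.right := by have := hzs.2; omega
  have h₁ := hE.le_on_overlap_of_key_lt hfree hx hz hzx.symm hxs hzs hxz (i := x.right)
    (max_le hlx.le (by have := hzs.1; omega)) (le_min le_rfl hrz.le)
  have h₂ := hE.le_on_overlap_of_key_lt hfree hz hy hzy' hzs hys hzy (i := x.right)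
    (max_le (by have := hzs.1; omega) (by omega)) (le_min hrz.le hr.le)
  have hyb : H y.col x.right = b := hr ▸ hE.val_right hy
  rw [hE.val_right hx] at h₁
  rw [hyb] at h₂
  exact hE.val_ne hz (by have := hzs.1; omega) hrz (le_antisymm h₂ h₁)

lemma card_filter_right_eq_le (hE : EdgeSystem H b N E) (hfree : CrossingFree H E) (t : ℕ) :
    #(E.filter (·.right = t)) ≤ #((dyingPairs H E).filter (·.1.right = t)) + 1 := by
  have halive : ∀ x ∈ E.filter (·.right = t), x ∈ E ∧ x.right = t ∧ x.Alive (t - 1) := by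
    intro x hx
    obtain ⟨hxE, rfl⟩ := mem_filter.1 hx
    have := hE.left_lt_right hxE
    exact ⟨hxE, rfl, by omega, by omega⟩
  refine card_le_card_add_one_of_consecutive (f := fun x => x.key H (t - 1)) ?_ ?_
  · intro x hx y hy hxy
    obtain ⟨hx, -, hxs⟩ := halive x hx
    obtain ⟨hy, -, hys⟩ := halive y hy
    exact not_not.1 fun hne => hE.key_ne hx hy hne hxs hys hxy
  · intro x hxD y hyD hxy hcons
    obtain ⟨hx, rfl, hxs⟩ := halive x hxD
    obtain ⟨hy, hr, hys⟩ := halive y hyD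
    refine mem_filter.2 ⟨mem_dyingPairs.2 ⟨hx, hy, hr.symm, hxs, hys, hxy, ?_⟩, rfl⟩
    intro z hz hzs hxzy
    by_cases hzr : z.right = x.right
    · exact hcons z (mem_filter.2 ⟨hz, hzr⟩) hxzy
    · exact hE.not_key_between_of_right_eq hfree hx hy hz hr.symm hzs hzr hxzy.1 hxzy.2

/-- The edges ending at a row have distinct positions in the slab just before it, and all but
the highest one form a dying pair with the next one above. -/
lemma card_le_card_add_card_dyingPairs (hE : EdgeSystem H b N E) (hfree : CrossingFree H E)
    {S : Finset ℕ} (hS : ∀ z ∈ E, z.left ∈ S ∧ z.right ∈ S) :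
    #E ≤ #S + #(dyingPairs H E) := by
  have hE' := card_eq_sum_card_fiberwise (f := (·.right)) fun x hx => (hS x hx).2
  have hD := card_eq_sum_card_fiberwise (s := dyingPairs H E) (f := (·.1.right))
    fun q hq => (hS q.1 (mem_dyingPairs.1 hq).1).2
  calc #E = ∑ t ∈ S, #(E.filter (·.right = t)) := hE'
    _ ≤ ∑ t ∈ S, (#((dyingPairs H E).filter (·.1.right = t)) + 1) :=
      sum_le_sum fun t _ => hE.card_filter_right_eq_le hfree t
    _ = #S + #(dyingPairs H E) := by
      rw [sum_add_distrib, ← hD, sum_const, smul_eq_mul, mul_one, add_comm]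

theorem card_le_three_mul (hE : EdgeSystem H b N E) (hfree : CrossingFree H E)
    {S : Finset ℕ} (hS : ∀ z ∈ E, z.left ∈ S ∧ z.right ∈ S) : #E ≤ 3 * #S := by
  have hdying : #(dyingPairs H E) ≤ 2 * #S :=
    hE.card_le_two_mul_of_adjacent hfree hS fun q hq => by
      obtain ⟨hx, hy, hr, hadj⟩ := mem_dyingPairs.1 hq
      refine ⟨hx, hy, fun hl => ?_, _, hadj⟩
      have hxy := hadj.2.2.1
      rw [hE.eq_of_left_eq_of_right_eq hx hy hl hr] at hxy
      exact lt_irrefl _ hxy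
  have := hE.card_le_card_add_card_dyingPairs hfree hS
  omega

/-! ### Crossings -/

lemma right_le_left_or_of_col_eq (hE : EdgeSystem H b N E) (hx : x ∈ E) (hy : y ∈ E)
    (hne : x ≠ y) (hc : x.col = y.col) : x.right ≤ y.left ∨ y.right ≤ x.left := by
  have := hE.left_lt_right hx
  have := hE.left_lt_right hy
  have hno : ¬ x.Overlap y := fun ho => hne (hE.eq_of_overlap_of_col_eq hx hy hc ho)
  simp only [Overlap, overlapStart, overlapEnd, not_lt] at hno
  omega

lemma flip_of_crosses (hE : EdgeSystem H b N E) (hx : x ∈ E) (hy : y ∈ E)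
    (h : Crosses H x y) :
    H y.col (overlapStart x y) < H x.col (overlapStart x y) ∧
      H x.col (overlapEnd x y) < H y.col (overlapEnd x y) :=
  (hE.signMono x hx y hy h.1).flip_of_not_iff h.2.1.le
    ((min_le_left _ _).trans (hE.right_le x hx)) (hE.val_overlapStart_ne hx hy h.2.1 h.2.2.1)
    h.2.2.2.2

/-- Two columns cross at most once, so a crossing is determined by its pair of columns. -/
lemma eq_of_crosses (hE : EdgeSystem H b N E) {x' y' : Edge} (hx : x ∈ E) (hy : y ∈ E)
    (hx' : x' ∈ E) (hy' : y' ∈ E) (h : Crosses H x y) (h' : Crosses H x' y')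
    (hc : x.col = x'.col) (hc' : y.col = y'.col) : x = x' ∧ y = y' := by
  have hf := hE.flip_of_crosses hx hy h
  have hf' := hE.flip_of_crosses hx' hy' h'
  rw [← hc, ← hc'] at hf'
  have hsm := hE.signMono x hx y hy h.1
  have hN : overlapStart x y ≤ N := h.2.1.le.trans ((min_le_left _ _).trans (hE.right_le x hx))
  have hN' : overlapStart x' y' ≤ N :=
    h'.2.1.le.trans ((min_le_left _ _).trans (hE.right_le x' hx'))
  have hsep : ¬ overlapEnd x y ≤ overlapStart x' y' := fun hle =>
    (hsm.lt_of_lt hle hN' hf.2).not_gt hf'.1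
  have hsep' : ¬ overlapEnd x' y' ≤ overlapStart x y := fun hle =>
    (hsm.lt_of_lt hle hN hf'.2).not_gt hf.1
  constructor
  · by_contra hne
    rcases hE.right_le_left_or_of_col_eq hx hx' hne hc with hle | hle
    · exact hsep ((min_le_left _ _).trans (hle.trans (le_max_left _ _)))
    · exact hsep' ((min_le_left _ _).trans (hle.trans (le_max_left _ _)))
  · by_contra hne
    rcases hE.right_le_left_or_of_col_eq hy hy' hne hc' with hle | hle
    · exact hsep ((min_le_right _ _).trans (hle.trans (le_max_right _ _)))
    · exact hsep' ((min_le_right _ _).trans (hle.trans (le_max_right _ _)))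

lemma card_crossings_le (hE : EdgeSystem H b N E) {C : Finset ℕ} (hC : ∀ x ∈ E, x.col ∈ C) :
    #(crossings H E) ≤ #C * #C := by
  rw [← card_product]
  refine card_le_card_of_injOn (fun q => (q.1.col, q.2.col)) (fun q hq => ?_)
    fun q hq q' hq' he => ?_
  · obtain ⟨hx, hy, -⟩ := mem_crossings.1 hq
    exact mem_product.2 ⟨hC _ hx, hC _ hy⟩
  · obtain ⟨hx, hy, h⟩ := mem_crossings.1 hq
    obtain ⟨hx', hy', h'⟩ := mem_crossings.1 hq'
    obtain ⟨h₁, h₂⟩ := Prod.ext_iff.1 he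
    obtain ⟨e₁, e₂⟩ := hE.eq_of_crosses hx hy hx' hy' h h' h₁ h₂
    exact Prod.ext e₁ e₂

/-- Deleting one edge of every crossing leaves a crossing-free system. -/
theorem card_le_three_mul_add_card_crossings (hE : EdgeSystem H b N E) {S : Finset ℕ}
    (hS : ∀ z ∈ E, z.left ∈ S ∧ z.right ∈ S) : #E ≤ 3 * #S + #(crossings H E) := by
  set F := E \ (crossings H E).image Prod.fst
  have hfree : CrossingFree H F := fun x hx y hy hxy =>
    (mem_sdiff.1 hx).2 (mem_image.2
      ⟨(x, y), mem_crossings.2 ⟨(mem_sdiff.1 hx).1, (mem_sdiff.1 hy).1, hxy⟩, rfl⟩)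
  calc #E ≤ #F + #((crossings H E).image Prod.fst) := card_le_card_sdiff_add_card
    _ ≤ 3 * #S + #(crossings H E) :=
      add_le_add ((hE.mono sdiff_subset).card_le_three_mul hfree
        fun x hx => hS x (mem_sdiff.1 hx).1) card_image_le

lemma card_endpoints_of_crosses (hE : EdgeSystem H b N E) {x y : Edge} (hx : x ∈ E)
    (hy : y ∈ E) (h : Crosses H x y) : #({x.left, x.right, y.left, y.right} : Finset ℕ) = 4 := by
  have := hE.left_lt_right hx
  have := hE.left_lt_right hy
  have ho := h.2.1
  have := h.2.2.1
  have := h.2.2.2.1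
  simp only [Overlap, overlapStart, overlapEnd] at ho
  rw [card_insert_of_notMem (by simp only [mem_insert, mem_singleton]; omega),
    card_insert_of_notMem (by simp only [mem_insert, mem_singleton]; omega), card_pair (by omega)]

/-- Sum the bound over the subsystems on all `k`-subsets of the rows: a crossing survives in
fewer subsets than an edge, by a factor of order `(k / n) ^ 2`. -/
theorem card_mul_choose_le (hE : EdgeSystem H b N E) {U : Finset ℕ}
    (hU : ∀ x ∈ E, x.left ∈ U ∧ x.right ∈ U) {k : ℕ} (hk : 4 ≤ k) :
    #E * (#U - 2).choose (k - 2) ≤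
      3 * k * (#U).choose k + #(crossings H E) * (#U - 4).choose (k - 4) := by
  classical
  let ends (x : Edge) : Finset ℕ := {x.left, x.right}
  let ends₂ (q : Edge × Edge) : Finset ℕ := {q.1.left, q.1.right, q.2.left, q.2.right}
  have hsub (T : Finset ℕ) : ∀ x ∈ E.filter (ends · ⊆ T), x.left ∈ T ∧ x.right ∈ T :=
    fun x hx => by simpa [ends, insert_subset_iff] using (mem_filter.1 hx).2
  have hcross (T : Finset ℕ) : crossings H (E.filter (ends · ⊆ T)) ⊆
      (crossings H E).filter (ends₂ · ⊆ T) := by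
    intro q hq
    obtain ⟨hx, hy, h⟩ := mem_crossings.1 hq
    refine mem_filter.2 ⟨mem_crossings.2 ⟨(mem_filter.1 hx).1, (mem_filter.1 hy).1, h⟩, ?_⟩
    obtain ⟨h₁, h₂⟩ := hsub T _ hx
    obtain ⟨h₃, h₄⟩ := hsub T _ hy
    simp [ends₂, insert_subset_iff, *]
  have hper : ∀ T ∈ U.powersetCard k, #(E.filter (ends · ⊆ T)) ≤
      3 * k + #((crossings H E).filter (ends₂ · ⊆ T)) := fun T hT => by
    have h := (hE.mono (filter_subset _ _)).card_le_three_mul_add_card_crossings (hsub T)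
    rw [(mem_powersetCard.1 hT).2] at h
    exact h.trans (add_le_add le_rfl (card_le_card (hcross T)))
  have hedges := sum_card_filter_subset_powersetCard U (by omega : 2 ≤ k) E ends fun x hx =>
    ⟨by simpa [ends, insert_subset_iff] using hU x hx, card_pair (hE.left_lt_right hx).ne⟩
  have hcrossings := sum_card_filter_subset_powersetCard U hk (crossings H E) ends₂ fun q hq => by
    obtain ⟨hx, hy, h⟩ := mem_crossings.1 hq
    refine ⟨?_, hE.card_endpoints_of_crosses hx hy h⟩
    obtain ⟨h₁, h₂⟩ := hU _ hx
    obtain ⟨h₃, h₄⟩ := hU _ hy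
    simp [ends₂, insert_subset_iff, *]
  calc #E * (#U - 2).choose (k - 2) = ∑ T ∈ U.powersetCard k, #(E.filter (ends · ⊆ T)) :=
        hedges.symm
    _ ≤ ∑ T ∈ U.powersetCard k, (3 * k + #((crossings H E).filter (ends₂ · ⊆ T))) :=
        sum_le_sum hper
    _ = 3 * k * (#U).choose k + #(crossings H E) * (#U - 4).choose (k - 4) := by
        rw [sum_add_distrib, hcrossings, sum_const, card_powersetCard, smul_eq_mul, mul_comm]

theorem crossing_lemma (hE : EdgeSystem H b N E) {U : Finset ℕ}
    (hU : ∀ x ∈ E, x.left ∈ U ∧ x.right ∈ U) {k : ℕ} (hk : 4 ≤ k) (hkU : k ≤ #U) :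
    (#E : ℝ) ≤ 3 * #U * (#U - 1) / (k - 1) +
      #(crossings H E) * ((k - 2) * (k - 3)) / ((#U - 2) * (#U - 3)) := by
  set n := #U
  have hchoose := hE.card_mul_choose_le hU hk
  have h₁ := Nat.choose_mul (n := n) (k := k) (s := 2) (by omega)
  have h₂ := Nat.choose_mul (n := n - 2) (k := k - 2) (s := 2) (by omega)
  rw [show n - 2 - 2 = n - 4 by omega, show k - 2 - 2 = k - 4 by omega] at h₂
  have ha : (0 : ℝ) < (n - 2).choose (k - 2) := by exact_mod_cast Nat.choose_pos (by omega)
  have hk' : (4 : ℝ) ≤ k := by exact_mod_cast hk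
  have hn' : (k : ℝ) ≤ n := by exact_mod_cast hkU
  have hcast := (Nat.cast_le (α := ℝ)).2 hchoose
  have h₁' := congrArg (Nat.cast (R := ℝ)) h₁
  have h₂' := congrArg (Nat.cast (R := ℝ)) h₂
  push_cast [Nat.cast_choose_two, Nat.cast_sub (by omega : 2 ≤ n),
    Nat.cast_sub (by omega : 2 ≤ k)] at hcast h₁' h₂'
  have hk1 : (0 : ℝ) < k - 1 := by linarith
  have hn23 : (0 : ℝ) < (n - 2) * (n - 3) := mul_pos (by linarith) (by linarith)
  have hscaled := mul_le_mul_of_nonneg_left hcast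
    (by positivity : (0 : ℝ) ≤ k * (k - 1) * ((n - 2) * (n - 3)) / 16)
  rw [div_add_div _ _ hk1.ne' hn23.ne', le_div_iff₀ (mul_pos hk1 hn23)]
  refine le_of_mul_le_mul_left ?_ (mul_pos ha (by positivity : (0 : ℝ) < k / 16))
  linear_combination hscaled + (3 * k * ((n - 2) * (n - 3)) / 8) * h₁' -
    (#(crossings H E) * (k * (k - 1)) / 8) * h₂'

end EdgeSystem

lemma crossing_bound_le {n k X y : ℝ} (hy : 4 ≤ y) (hn : n = y ^ 3) (hk₁ : y ^ 2 < k - 1)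
    (hk₂ : k - 2 ≤ y ^ 2) (hk : 4 ≤ k) (hX : X ≤ n * n) :
    3 * n * (n - 1) / (k - 1) + X * ((k - 2) * (k - 3)) / ((n - 2) * (n - 3)) ≤ 7 * y ^ 4 := by
  have hn64 : 64 ≤ n := by rw [hn]; nlinarith
  have hterm₁ : 3 * n * (n - 1) / (k - 1) ≤ 3 * y ^ 4 := by
    rw [div_le_iff₀ (by linarith)]
    calc 3 * n * (n - 1) ≤ 3 * y ^ 4 * y ^ 2 := by rw [hn]; nlinarith
      _ ≤ 3 * y ^ 4 * (k - 1) := by gcongr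
  have hterm₂ : X * ((k - 2) * (k - 3)) / ((n - 2) * (n - 3)) ≤ 4 * y ^ 4 := by
    rw [div_le_iff₀ (by nlinarith)]
    have hn2 : n * n ≤ 4 * ((n - 2) * (n - 3)) := by nlinarith
    calc X * ((k - 2) * (k - 3)) ≤ n * n * (y ^ 2 * y ^ 2) := by
          gcongr
          · nlinarith
          · linarith
          · linarith
      _ = y ^ 4 * (n * n) := by ring
      _ ≤ y ^ 4 * (4 * ((n - 2) * (n - 3))) := by gcongr
      _ = 4 * y ^ 4 * ((n - 2) * (n - 3)) := by ring
  linarith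

/-! ### Edges of a totally positive matrix -/

section Matrix

variable {n : ℕ} (A : Matrix (Fin n) (Fin n) ℝ)

def colFun (c i : ℕ) : ℝ := if h : i < n ∧ c < n then A ⟨i, h.1⟩ ⟨c, h.2⟩ else 0

lemma colFun_of_lt {c i : ℕ} (hi : i < n) (hc : c < n) : colFun A c i = A ⟨i, hi⟩ ⟨c, hc⟩ :=
  dif_pos ⟨hi, hc⟩

open scoped Classical in
noncomputable def hitEdges (b : ℝ) : Finset Edge :=
  ((range n ×ˢ range n ×ˢ range n).image fun p => (⟨p.1, p.2.1, p.2.2⟩ : Edge)).filter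
    fun x => IsNextHit (colFun A x.col) b x.left x.right

variable {A}

lemma mem_hitEdges {b : ℝ} {x : Edge} :
    x ∈ hitEdges A b ↔
      x.left < n ∧ x.right < n ∧ x.col < n ∧ IsNextHit (colFun A x.col) b x.left x.right := by
  classical
  simp only [hitEdges, mem_filter, mem_image, mem_product, mem_range]
  constructor
  · rintro ⟨⟨p, ⟨h₁, h₂, h₃⟩, rfl⟩, h⟩
    exact ⟨h₁, h₂, h₃, h⟩
  · rintro ⟨h₁, h₂, h₃, h⟩
    exact ⟨⟨(x.left, x.right, x.col), ⟨h₁, h₂, h₃⟩, rfl⟩, h⟩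

lemma signMono_colFun (hA : TotallyPositive A) {c c' : ℕ} (hcc : c < c') (hc' : c' < n) :
    SignMono (n - 1) (colFun A c) (colFun A c') := by
  intro i j hij hj h
  have hjn : j < n := by omega
  rw [colFun_of_lt A (hij.trans hjn) (hcc.trans hc'), colFun_of_lt A (hij.trans hjn) hc'] at h
  rw [colFun_of_lt A hjn (hcc.trans hc'), colFun_of_lt A hjn hc']
  exact hA.lt_of_le (Fin.mk_lt_mk.2 hij) (Fin.mk_lt_mk.2 hcc) h

lemma edgeSystem_hitEdges (hA : TotallyPositive A) (b : ℝ) :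
    EdgeSystem (colFun A) b (n - 1) (hitEdges A b) where
  isNextHit x hx := (mem_hitEdges.1 hx).2.2.2
  right_le x hx := by have := (mem_hitEdges.1 hx).2.1; omega
  signMono x _ y hy hxy := signMono_colFun hA hxy (mem_hitEdges.1 hy).2.2.1

/-- An entry equal to `b` with another one further down its column starts an edge; the others
are the last ones in their columns. -/
lemma card_filter_eq_le_card_hitEdges_add (b : ℝ) :
    #(univ.filter fun q : Fin n × Fin n => A q.1 q.2 = b) ≤ #(hitEdges A b) + n := by
  classical
  set M := univ.filter fun q : Fin n × Fin n => A q.1 q.2 = b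
  let below (q : Fin n × Fin n) : Prop := ∃ j : Fin n, q.1 < j ∧ A j q.2 = b
  have hbelow : #(M.filter below) ≤ #(hitEdges A b) := by
    refine card_le_card_of_injOn
      (fun q => ⟨q.1, sInf {j | (q.1 : ℕ) < j ∧ colFun A q.2 j = b}, q.2⟩)
      (fun q hq => ?_) fun q _ q' _ he => ?_
    · obtain ⟨hqM, j, hj, hjb⟩ := mem_filter.1 hq
      have hqb : colFun A q.2 q.1 = b := by
        rw [colFun_of_lt A q.1.2 q.2.2]
        exact (mem_filter.1 hqM).2
      have hex : ∃ j : ℕ, (q.1 : ℕ) < j ∧ colFun A q.2 j = b :=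
        ⟨j, hj, by rw [colFun_of_lt A j.2 q.2.2]; exact hjb⟩
      refine mem_hitEdges.2 ⟨q.1.2, ?_, q.2.2, isNextHit_sInf hqb hex⟩
      exact (Nat.sInf_le (⟨hj, by rw [colFun_of_lt A j.2 q.2.2]; exact hjb⟩ :
        (j : ℕ) ∈ {j : ℕ | (q.1 : ℕ) < j ∧ colFun A q.2 j = b})).trans_lt j.2
    · have h := Edge.ext_iff.1 he
      exact Prod.ext (Fin.ext h.1) (Fin.ext h.2.2)
  have hlast : #(M.filter fun q => ¬ below q) ≤ n := by
    refine (card_le_card_of_injOn Prod.snd (fun q _ => mem_univ q.2)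
      fun q hq q' hq' he => ?_).trans_eq (card_fin n)
    obtain ⟨hqM, hq⟩ := mem_filter.1 hq
    obtain ⟨hqM', hq'⟩ := mem_filter.1 hq'
    have hqb := (mem_filter.1 hqM).2
    have hqb' := (mem_filter.1 hqM').2
    refine Prod.ext ?_ he
    rcases lt_trichotomy q.1 q'.1 with hlt | heq | hgt
    · exact absurd ⟨q'.1, hlt, he ▸ hqb'⟩ hq
    · exact heq
    · exact absurd ⟨q.1, hgt, he.symm ▸ hqb⟩ hq'
  rw [← card_filter_add_card_filter_not (s := M) below]
  exact add_le_add hbelow hlast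

/-- The crossing lemma with `k = ⌊y ^ 2⌋₊ + 2 ≈ n ^ (2 / 3)`, writing `n = y ^ 3`. -/
lemma card_hitEdges_le (hA : TotallyPositive A) (b : ℝ) {y : ℝ} (hy : 4 ≤ y)
    (hn : (n : ℝ) = y ^ 3) : (#(hitEdges A b) : ℝ) ≤ 7 * y ^ 4 := by
  have hE := edgeSystem_hitEdges hA b
  have hU : ∀ x ∈ hitEdges A b, x.left ∈ range n ∧ x.right ∈ range n := fun x hx => by
    obtain ⟨h₁, h₂, -⟩ := mem_hitEdges.1 hx
    exact ⟨mem_range.2 h₁, mem_range.2 h₂⟩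
  have hX : (#(crossings (colFun A) (hitEdges A b)) : ℝ) ≤ n * n := by
    have := hE.card_crossings_le (C := range n) fun x hx => mem_range.2 (mem_hitEdges.1 hx).2.2.1
    rw [card_range] at this
    exact_mod_cast this
  set k := ⌊y ^ 2⌋₊ + 2 with hkdef
  have hk₁ : y ^ 2 < (k : ℝ) - 1 := by
    have := Nat.lt_floor_add_one (y ^ 2)
    push_cast [hkdef]
    linarith
  have hk₂ : (k : ℝ) - 2 ≤ y ^ 2 := by
    have := Nat.floor_le (sq_nonneg y)
    push_cast [hkdef]
    linarith
  have hk : 4 ≤ k := by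
    have : 16 ≤ ⌊y ^ 2⌋₊ := Nat.le_floor (by push_cast; nlinarith)
    omega
  have hkn : k ≤ n := by
    have : (k : ℝ) ≤ n := by rw [hn]; nlinarith
    exact_mod_cast this
  have hbound := hE.crossing_lemma hU hk (by rwa [card_range])
  rw [card_range] at hbound
  exact hbound.trans (crossing_bound_le hy hn hk₁ hk₂ (by exact_mod_cast hk) hX)

end Matrix

end TPMultiplicity

/-- the multiplicity of any value b in an n-by-n totally positive
matrix is O(n^{4/3}). -/
theorem stmt_4 : ∃ C : ℝ, 0 < C ∧ ∀ n : ℕ, 1 ≤ n →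
    ∀ A : Matrix (Fin n) (Fin n) ℝ, TotallyPositive A → ∀ b : ℝ,
      ((Finset.univ.filter fun q : Fin n × Fin n => A q.1 q.2 = b).card : ℝ)
        ≤ C * (n : ℝ) ^ ((4 : ℝ) / 3) := by
  refine ⟨16, by norm_num, fun n _ A hA b => ?_⟩
  set y := (n : ℝ) ^ ((3 : ℕ) : ℝ)⁻¹
  have hy : 0 ≤ y := by positivity
  have hn : (n : ℝ) = y ^ 3 := (Real.rpow_inv_natCast_pow (Nat.cast_nonneg n) three_ne_zero).symm
  have hn' : (n : ℝ) ^ ((4 : ℝ) / 3) = y ^ 4 := by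
    rw [← Real.rpow_natCast y 4, ← Real.rpow_mul (Nat.cast_nonneg n)]
    norm_num
  rw [hn']
  rcases lt_or_ge y 4 with hsmall | hlarge
  · have hcard : #(univ.filter fun q : Fin n × Fin n => A q.1 q.2 = b) ≤ n * n :=
      (card_filter_le _ _).trans_eq (by simp)
    calc (#(univ.filter fun q : Fin n × Fin n => A q.1 q.2 = b) : ℝ) ≤ n * n := by
          exact_mod_cast hcard
      _ = y ^ 2 * y ^ 4 := by rw [hn]; ring
      _ ≤ 16 * y ^ 4 := by gcongr; nlinarith
  · have hcard := TPMultiplicity.card_filter_eq_le_card_hitEdges_add (A := A) b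
    have hedges := TPMultiplicity.card_hitEdges_le hA b hlarge hn
    calc (#(univ.filter fun q : Fin n × Fin n => A q.1 q.2 = b) : ℝ)
        ≤ #(TPMultiplicity.hitEdges A b) + n := by exact_mod_cast hcard
      _ ≤ 7 * y ^ 4 + y ^ 3 := by rw [hn] at *; linarith
      _ ≤ 16 * y ^ 4 := by nlinarith
end

section
/- There exists a constant c > 0 such that for infinitely many n there is a totally positive n-by-n real matrix A and a real number b whose multiplicity in A is at least c · n^{4/3}. -/
open Filter Finset Real Matrix Topology

section ExpKernel

variable {ι : Type*} [LinearOrder ι] [Fintype ι]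

theorem sum_comp_perm_mul_lt_sum_mul {x y : ι → ℝ} (hx : StrictMono x)
    (hy : StrictMono y) {σ : Equiv.Perm ι} (hσ : σ ≠ 1) :
    ∑ s, x (σ s) * y s < ∑ s, x s * y s := by
  refine (hx.monotone.monovary hy.monotone).sum_comp_perm_mul_lt_sum_mul_iff.2 fun hM => hσ ?_
  have hσ_mono : Monotone σ := fun i j hij => by
    rcases hij.lt_or_eq with hij | rfl
    · exact hx.le_iff_le.1 (hM (hy hij))
    · rfl
  exact DFunLike.coe_injective (hσ_mono.strictMono_of_injective σ.injective).eq_id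

theorem det_exp_mul_eq_sum (x y : ι → ℝ) (τ : ℝ) :
    det (of fun s t => exp (τ * (x s * y t))) =
      ∑ σ : Equiv.Perm ι, (Equiv.Perm.sign σ : ℝ) * exp (τ * ∑ s, x (σ s) * y s) := by
  rw [det_apply]
  refine sum_congr rfl fun σ _ => ?_
  rw [mul_sum, exp_sum, Units.smul_def, zsmul_eq_mul]
  rfl

theorem eventually_det_exp_mul_pos {x y : ι → ℝ} (hx : StrictMono x)
    (hy : StrictMono y) :
    ∀ᶠ τ in atTop, 0 < det (of fun s t => exp (τ * (x s * y t))) := by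
  set S : Equiv.Perm ι → ℝ := fun σ => ∑ s, x (σ s) * y s
  have hlim : Tendsto (fun τ => ∑ σ : Equiv.Perm ι,
      (Equiv.Perm.sign σ : ℝ) * exp (τ * (S σ - S 1))) atTop
      (𝓝 (∑ σ : Equiv.Perm ι, if σ = 1 then 1 else 0)) := by
    refine tendsto_finsetSum _ fun σ _ => ?_
    split_ifs with hσ
    · subst hσ
      simp
    · have hneg : S σ - S 1 < 0 := sub_neg.2 (sum_comp_perm_mul_lt_sum_mul hx hy hσ)
      simpa using ((tendsto_exp_atBot.comp
        (tendsto_id.atTop_mul_const_of_neg hneg)).const_mul (Equiv.Perm.sign σ : ℝ))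
  rw [sum_ite_eq' univ 1 fun _ => (1 : ℝ), if_pos (mem_univ _)] at hlim
  filter_upwards [hlim.eventually (eventually_gt_nhds one_pos)] with τ hτ
  have hfactor : det (of fun s t => exp (τ * (x s * y t))) = exp (τ * S 1) *
      ∑ σ : Equiv.Perm ι, (Equiv.Perm.sign σ : ℝ) * exp (τ * (S σ - S 1)) := by
    rw [det_exp_mul_eq_sum, mul_sum]
    refine sum_congr rfl fun σ _ => ?_
    rw [mul_left_comm, ← exp_add, ← mul_add, add_sub_cancel]
  rw [hfactor]
  positivity

end ExpKernel

theorem exists_totallyPositive_exp {m n : ℕ} {X : Fin m → ℝ} {Y : Fin n → ℝ}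
    (hX : StrictMono X) (hY : StrictMono Y) (U : Fin m → ℝ) (W : Fin n → ℝ) :
    ∃ τ : ℝ, TotallyPositive (of fun i j => exp (τ * (X i * Y j + U i + W j))) := by
  have hminor : ∀ k (f : Fin k → Fin m) (g : Fin k → Fin n), StrictMono f → StrictMono g →
      ∀ᶠ τ in atTop,
        0 < ((of fun i j => exp (τ * (X i * Y j + U i + W j))).submatrix f g).det := by
    intro k f g hf hg
    filter_upwards [eventually_det_exp_mul_pos (hX.comp hf) (hY.comp hg)] with τ hτ
    have hscale : (of fun i j => exp (τ * (X i * Y j + U i + W j))).submatrix f g =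
        diagonal (fun s => exp (τ * U (f s))) * (of fun s t => exp (τ * ((X ∘ f) s * (Y ∘ g) t))) *
          diagonal (fun t => exp (τ * W (g t))) := by
      ext s t
      simp only [submatrix_apply, of_apply, diagonal_mul, mul_diagonal, Function.comp_apply,
        ← exp_add]
      ring_nf
    rw [hscale, det_mul, det_mul, det_diagonal, det_diagonal]
    positivity
  have hall : ∀ᶠ τ in atTop, ∀ k : Fin (m + 1), ∀ f : Fin k → Fin m, ∀ g : Fin k → Fin n,
      StrictMono f → StrictMono g →
        0 < ((of fun i j => exp (τ * (X i * Y j + U i + W j))).submatrix f g).det := by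
    simp only [eventually_all]
    exact fun k => hminor k
  obtain ⟨τ, hτ⟩ := hall.exists
  refine ⟨τ, fun k f g hf hg => hτ ⟨k, Nat.lt_succ_of_le ?_⟩ f g hf hg⟩
  simpa using Fintype.card_le_of_injective f hf.injective

namespace Grid

variable {m K : ℕ}

/- The pair `p = (a, b)` stands for `(a + 1, b)`. Clearing the denominators,
`slope p * slope q + offset p - offset q = ((a + 1) * (c + 1) + b - d) / (denom p * denom q)`
for `q = (c, d)`; the denominators only serve to make `slope` strictly increasing in the
lexicographic order. -/
noncomputable def denom (p : Fin m × Fin K) : ℝ := 1 - (p.2 : ℝ) / (m * K)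

noncomputable def slope (p : Fin m × Fin K) : ℝ := ((p.1 : ℝ) + 1) / denom p

noncomputable def offset (p : Fin m × Fin K) : ℝ := (p.2 : ℝ) / denom p

lemma snd_lt_mul (p : Fin m × Fin K) : (p.2 : ℝ) < m * K := by
  have h1 : (1 : ℝ) ≤ m := by exact_mod_cast p.1.pos
  have h2 : (p.2 : ℝ) < K := by exact_mod_cast p.2.isLt
  nlinarith

lemma cast_mul_pos (p : Fin m × Fin K) : (0 : ℝ) < m * K :=
  p.2.val.cast_nonneg.trans_lt (snd_lt_mul p)

lemma denom_pos (p : Fin m × Fin K) : 0 < denom p := by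
  rw [denom, sub_pos, div_lt_one (cast_mul_pos p)]
  exact snd_lt_mul p

lemma denom_le_one (p : Fin m × Fin K) : denom p ≤ 1 := by
  unfold denom
  exact sub_le_self _ (by positivity)

lemma denom_lt_denom {p q : Fin m × Fin K} (h : p.2 < q.2) : denom q < denom p := by
  have := cast_mul_pos p
  unfold denom
  gcongr
  exact_mod_cast h

lemma slope_lt_of_fst_lt {p q : Fin m × Fin K} (h : p.1 < q.1) : slope p < slope q := by
  have hpq : (p.1 : ℝ) + 2 ≤ q.1 + 1 := by
    have : (p.1 : ℕ) + 1 ≤ q.1 := h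
    exact_mod_cast Nat.add_le_add_right this 1
  have hm : (p.1 : ℝ) + 2 ≤ m := hpq.trans (by exact_mod_cast q.1.isLt)
  have hb := p.2.val.cast_nonneg (α := ℝ)
  have hK : (p.2 : ℝ) < K := by exact_mod_cast p.2.isLt
  have hp : slope p < p.1 + 2 := by
    have hsmall : ((p.1 : ℝ) + 2) * ((p.2 : ℝ) / (m * K)) < 1 := by
      rw [← mul_div_assoc, div_lt_one (cast_mul_pos p)]
      nlinarith
    rw [slope, div_lt_iff₀ (denom_pos p), denom]
    linarith
  have hq : (q.1 : ℝ) + 1 ≤ slope q := by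
    rw [slope, le_div_iff₀ (denom_pos q)]
    exact mul_le_of_le_one_right (by positivity) (denom_le_one q)
  linarith

lemma slope_lt_of_snd_lt {p q : Fin m × Fin K} (h₁ : p.1 = q.1) (h₂ : p.2 < q.2) :
    slope p < slope q := by
  unfold slope
  rw [h₁]
  exact div_lt_div_of_pos_left (by positivity) (denom_pos q) (denom_lt_denom h₂)

theorem strictMono_slope_comp_finProdFinEquiv_symm :
    StrictMono (slope ∘ (finProdFinEquiv (m := m) (n := K)).symm) := by
  intro i j hij
  obtain ⟨p, rfl⟩ := finProdFinEquiv.surjective i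
  obtain ⟨q, rfl⟩ := finProdFinEquiv.surjective j
  simp only [Function.comp_apply, Equiv.symm_apply_apply]
  rw [Fin.lt_def, finProdFinEquiv_apply_val, finProdFinEquiv_apply_val] at hij
  rcases lt_trichotomy p.1 q.1 with h | h | h
  · exact slope_lt_of_fst_lt h
  · refine slope_lt_of_snd_lt h ?_
    rw [h] at hij
    exact Fin.lt_def.2 (by omega)
  · have : K * q.1 + K ≤ K * p.1 := by
      rw [← Nat.mul_succ]
      exact Nat.mul_le_mul_left _ h
    omega

lemma slope_mul_slope_add_offset_sub_offset_eq_zero {p q : Fin m × Fin K}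
    (h : (q.2 : ℕ) = p.2 + (p.1 + 1) * (q.1 + 1)) :
    slope p * slope q + offset p - offset q = 0 := by
  have := (denom_pos p).ne'
  have := (denom_pos q).ne'
  unfold slope offset
  field_simp
  unfold denom
  rw [h]
  push_cast
  ring

theorem pow_four_le_card_incidences (m : ℕ) :
    m ^ 4 ≤ #{ij : Fin (m * (2 * m ^ 2)) × Fin (m * (2 * m ^ 2)) |
      let p := finProdFinEquiv.symm ij.1
      let q := finProdFinEquiv.symm ij.2
      slope p * slope q + offset p - offset q = 0} := by
  let φ : Fin m × Fin m × Fin (m ^ 2) → Fin (m * (2 * m ^ 2)) × Fin (m * (2 * m ^ 2)) :=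
    fun ⟨a, c, b⟩ => (finProdFinEquiv (a, ⟨b, by omega⟩),
      finProdFinEquiv (c, ⟨b + ((a : ℕ) + 1) * ((c : ℕ) + 1), by
        have : ((a : ℕ) + 1) * ((c : ℕ) + 1) ≤ m ^ 2 := sq m ▸ Nat.mul_le_mul a.isLt c.isLt
        omega⟩))
  have hφ : Function.Injective φ := by
    rintro ⟨a, c, b⟩ ⟨a', c', b'⟩ h
    simp only [φ, Prod.mk.injEq, EmbeddingLike.apply_eq_iff_eq, Fin.mk.injEq] at h
    obtain ⟨⟨rfl, hb⟩, rfl, -⟩ := h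
    rw [Fin.ext hb]
  calc m ^ 4 = #(univ : Finset (Fin m × Fin m × Fin (m ^ 2))) := by
        simp only [card_univ, Fintype.card_prod, Fintype.card_fin]; ring
    _ ≤ _ := card_le_card_of_injOn φ (fun ⟨a, c, b⟩ _ => by
        simp only [coe_filter, mem_univ, true_and, Set.mem_ofPred_eq, φ, Equiv.symm_apply_apply]
        exact slope_mul_slope_add_offset_sub_offset_eq_zero rfl) hφ.injOn

end Grid

theorem two_mul_cube_rpow_four_thirds_le (m : ℕ) :
    ((m * (2 * m ^ 2) : ℕ) : ℝ) ^ ((4 : ℝ) / 3) ≤ 4 * m ^ 4 := by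
  have hcube : ((m * (2 * m ^ 2) : ℕ) : ℝ) = 2 * (m : ℝ) ^ 3 := by push_cast; ring
  have hm : ((m : ℝ) ^ 3) ^ ((4 : ℝ) / 3) = (m : ℝ) ^ 4 := by
    rw [← Real.rpow_natCast, ← Real.rpow_mul (by positivity)]
    norm_num
  have h2 : (2 : ℝ) ^ ((4 : ℝ) / 3) ≤ 4 := by
    calc (2 : ℝ) ^ ((4 : ℝ) / 3) ≤ 2 ^ (2 : ℝ) := by gcongr <;> norm_num
      _ = 4 := by norm_num
  rw [hcube, Real.mul_rpow (by norm_num) (by positivity), hm]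
  gcongr

theorem exists_totallyPositive_card_eq_ge (m : ℕ) :
    ∃ (A : Matrix (Fin (m * (2 * m ^ 2))) (Fin (m * (2 * m ^ 2))) ℝ) (b : ℝ),
      TotallyPositive A ∧ 1 / 4 * ((m * (2 * m ^ 2) : ℕ) : ℝ) ^ ((4 : ℝ) / 3) ≤
        (#{q : Fin _ × Fin _ | A q.1 q.2 = b} : ℝ) := by
  let u := Grid.offset ∘ (finProdFinEquiv (m := m) (n := 2 * m ^ 2)).symm
  obtain ⟨τ, hTP⟩ := exists_totallyPositive_exp Grid.strictMono_slope_comp_finProdFinEquiv_symm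
    Grid.strictMono_slope_comp_finProdFinEquiv_symm u (-u)
  refine ⟨_, 1, hTP, ?_⟩
  calc 1 / 4 * ((m * (2 * m ^ 2) : ℕ) : ℝ) ^ ((4 : ℝ) / 3) ≤ ((m ^ 4 : ℕ) : ℝ) := by
        rw [Nat.cast_pow]
        linarith [two_mul_cube_rpow_four_thirds_le m]
    _ ≤ _ := by
        gcongr
        refine (Grid.pow_four_le_card_incidences m).trans (card_le_card fun q hq => ?_)
        simp only [mem_filter, mem_univ, true_and] at hq ⊢
        simp only [of_apply, Function.comp_apply, Pi.neg_apply, u, ← sub_eq_add_neg, hq,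
          mul_zero, exp_zero]

/-- for infinitely many n there is an n-by-n totally positive
matrix with some value of multiplicity at least c·n^{4/3}. -/
theorem stmt_5 : ∃ c : ℝ, 0 < c ∧ ∀ N : ℕ, ∃ n : ℕ, N ≤ n ∧
    ∃ (A : Matrix (Fin n) (Fin n) ℝ) (b : ℝ), TotallyPositive A ∧
      c * (n : ℝ) ^ ((4 : ℝ) / 3)
        ≤ ((Finset.univ.filter fun q : Fin n × Fin n => A q.1 q.2 = b).card : ℝ) := by
  refine ⟨1 / 4, by norm_num, fun N => ⟨_, ?_, exists_totallyPositive_card_eq_ge (N + 1)⟩⟩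
  exact (Nat.le_succ N).trans (Nat.le_mul_of_pos_right _ (by positivity))
end

section
/- There exists a constant c > 0 such that for infinitely many n there is a totally positive n-by-n real matrix A and a real number v for which the number of pairs (i,j) such that the (n−1)-by-(n−1) minor of A obtained by deleting row i and column j equals v is at least c · n^{4/3}. -/
open Finset Matrix

namespace Matrix

theorem det_succ_eq_mul_det_schur {K : Type*} [Field K] {n : ℕ}
    (A : Matrix (Fin (n + 1)) (Fin (n + 1)) K) (h : A 0 0 ≠ 0) :
    A.det = A 0 0 *
      (of fun i j : Fin n => A i.succ j.succ - A i.succ 0 / A 0 0 * A 0 j.succ).det := by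
  set c : Fin (n + 1) → K := Fin.cons 0 fun i => A i.succ 0 / A 0 0
  set B : Matrix (Fin (n + 1)) (Fin (n + 1)) K := of fun i j => A i j - c i * A 0 j
  have hB0 : ∀ j, B 0 j = A 0 j := fun j => by simp [B, c]
  have hAB : A.det = B.det :=
    det_eq_of_forall_row_eq_smul_add_const c 0 rfl fun i j => by simp [hB0, B]
  rw [hAB, det_succ_column_zero, Fin.sum_univ_succ, sum_eq_zero fun i _ => by simp [B, c, h],
    add_zero, Fin.val_zero, pow_zero, one_mul, hB0]
  rfl

theorem det_vandermonde_succ {R : Type*} [CommRing R] {n : ℕ} (x : Fin (n + 1) → R) :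
    (vandermonde x).det =
      (∏ j : Fin n, (x j.succ - x 0)) * (vandermonde (x ∘ Fin.succ)).det := by
  simp [det_vandermonde, Fin.prod_univ_succ]

theorem det_vandermonde_pos {R : Type*} [CommRing R] [PartialOrder R] [IsStrictOrderedRing R]
    {n : ℕ} {x : Fin n → R} (hx : StrictMono x) : 0 < (vandermonde x).det := by
  rw [det_vandermonde]
  exact prod_pos fun i _ => prod_pos fun j hj => sub_pos.2 (hx (mem_Ioi.1 hj))

variable {K : Type*} [Field K]

def scaledCauchy {m n : Type*} (x : m → K) (y : n → K) (u : m → K) (v : n → K) :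
    Matrix m n K :=
  of fun i j => u i * v j / (x i + y j)

theorem det_scaledCauchy {m : Type*} [Fintype m] [DecidableEq m] (x y u v : m → K) :
    (scaledCauchy x y u v).det = (∏ i, u i) * (∏ j, v j) * (scaledCauchy x y 1 1).det := by
  have : scaledCauchy x y u v =
      of fun i j => u i * (of fun i j => v j * scaledCauchy x y 1 1 i j) i j := by
    ext i j
    simp [scaledCauchy, div_eq_mul_inv, mul_assoc]
  rw [this, det_mul_column, det_mul_row, mul_assoc]

theorem det_scaledCauchy_one_one {n : ℕ} (x y : Fin n → K) (h : ∀ i j, x i + y j ≠ 0) :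
    (scaledCauchy x y 1 1).det =
      (vandermonde x).det * (vandermonde y).det / ∏ i, ∏ j, (x i + y j) := by
  induction n with
  | zero => simp
  | succ n ih =>
    set u : Fin n → K := fun i => (x i.succ - x 0) / (x i.succ + y 0)
    set v : Fin n → K := fun j => (y j.succ - y 0) / (x 0 + y j.succ)
    have hschur : (of fun i j : Fin n => scaledCauchy x y 1 1 i.succ j.succ -
        scaledCauchy x y 1 1 i.succ 0 / scaledCauchy x y 1 1 0 0 * scaledCauchy x y 1 1 0 j.succ) =
        scaledCauchy (x ∘ Fin.succ) (y ∘ Fin.succ) u v := by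
      ext i j
      have := h 0 0; have := h i.succ 0; have := h 0 j.succ; have := h i.succ j.succ
      simp only [scaledCauchy, of_apply, Pi.one_apply, Function.comp_apply, u, v]
      field_simp
      ring
    rw [det_succ_eq_mul_det_schur _ (by simpa [scaledCauchy] using h 0 0), hschur,
      det_scaledCauchy, ih (x ∘ Fin.succ) (y ∘ Fin.succ) fun i j => h _ _,
      det_vandermonde_succ x, det_vandermonde_succ y]
    simp only [Fin.prod_univ_succ, u, v, prod_div_distrib, scaledCauchy, of_apply, Pi.one_apply,
      Function.comp_apply, prod_mul_distrib]
    have : ∏ i : Fin n, (x i.succ + y 0) ≠ 0 := prod_ne_zero_iff.2 fun i _ => h _ _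
    have : ∏ j : Fin n, (x 0 + y j.succ) ≠ 0 := prod_ne_zero_iff.2 fun j _ => h _ _
    have : ∏ i : Fin n, ∏ j : Fin n, (x i.succ + y j.succ) ≠ 0 :=
      prod_ne_zero_iff.2 fun i _ => prod_ne_zero_iff.2 fun j _ => h _ _
    have := h 0 0
    field_simp

theorem det_submatrix_succAbove_scaledCauchy_mul {n : ℕ} (x y u v : Fin (n + 1) → K)
    (h : ∀ i j, x i + y j ≠ 0) (i j : Fin (n + 1)) :
    ((scaledCauchy x y u v).submatrix i.succAbove j.succAbove).det *
        (u i * v j * (x i + y j) * ∏ p, ∏ q, (x p + y q)) =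
      (∏ p, u p) * (∏ q, v q) * ((vandermonde (x ∘ i.succAbove)).det * ∏ q, (x i + y q)) *
        ((vandermonde (y ∘ j.succAbove)).det * ∏ p, (x p + y j)) := by
  have hsub : (scaledCauchy x y u v).submatrix i.succAbove j.succAbove =
      scaledCauchy (x ∘ i.succAbove) (y ∘ j.succAbove) (u ∘ i.succAbove) (v ∘ j.succAbove) := rfl
  have hT : ∏ p, ∏ q, (x p + y q) = (∏ q, (x i + y q)) * (∏ p, (x p + y j)) / (x i + y j) *
      ∏ p, ∏ q, (x (i.succAbove p) + y (j.succAbove q)) := by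
    rw [Fin.prod_univ_succAbove _ i, Fin.prod_univ_succAbove (fun p => x p + y j) i]
    simp only [Fin.prod_univ_succAbove (fun q => x _ + y q) j, prod_mul_distrib]
    field_simp [h i j]
  rw [hsub, det_scaledCauchy,
    det_scaledCauchy_one_one (x ∘ i.succAbove) (y ∘ j.succAbove) fun p q => h _ _, hT,
    Fin.prod_univ_succAbove u i, Fin.prod_univ_succAbove v j]
  have : ∏ p, ∏ q, (x (i.succAbove p) + y (j.succAbove q)) ≠ 0 :=
    prod_ne_zero_iff.2 fun p _ => prod_ne_zero_iff.2 fun q _ => h _ _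
  simp only [Function.comp_apply]
  field_simp [h i j]

theorem det_scaledCauchy_pos {n : ℕ} {x y u v : Fin n → ℝ} (hx : StrictMono x)
    (hy : StrictMono y) (hxy : ∀ i j, 0 < x i + y j) (hu : ∀ i, 0 < u i) (hv : ∀ j, 0 < v j) :
    0 < (scaledCauchy x y u v).det := by
  rw [det_scaledCauchy, det_scaledCauchy_one_one x y fun i j => (hxy i j).ne']
  have := det_vandermonde_pos hx
  have := det_vandermonde_pos hy
  have : 0 < ∏ i, ∏ j, (x i + y j) := prod_pos fun i _ => prod_pos fun j _ => hxy i j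
  have : 0 < ∏ i, u i := prod_pos fun i _ => hu i
  have : 0 < ∏ j, v j := prod_pos fun j _ => hv j
  positivity

end Matrix

theorem totallyPositive_scaledCauchy {m n : ℕ} {x u : Fin m → ℝ} {y v : Fin n → ℝ}
    (hx : StrictMono x) (hy : StrictMono y) (hxy : ∀ i j, 0 < x i + y j)
    (hu : ∀ i, 0 < u i) (hv : ∀ j, 0 < v j) : TotallyPositive (scaledCauchy x y u v) :=
  fun _ _ _ hf hg => det_scaledCauchy_pos (hx.comp hf) (hy.comp hg) (fun _ _ => hxy _ _)
    (fun _ => hu _) (fun _ => hv _)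

theorem exists_totallyPositive_det_submatrix_succAbove_eq {n : ℕ} {x y r s : Fin (n + 1) → ℝ}
    (hx : StrictMono x) (hy : StrictMono y) (hxy : ∀ i j, 0 < x i + y j)
    (hr : ∀ i, 0 < r i) (hs : ∀ j, 0 < s j) :
    ∃ (A : Matrix (Fin (n + 1)) (Fin (n + 1)) ℝ) (c : ℝ), TotallyPositive A ∧
      ∀ i j, (A.submatrix i.succAbove j.succAbove).det = c * (r i * s j / (x i + y j)) := by
  set α : Fin (n + 1) → ℝ := fun i => (vandermonde (x ∘ i.succAbove)).det * ∏ q, (x i + y q)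
  set β : Fin (n + 1) → ℝ := fun j => (vandermonde (y ∘ j.succAbove)).det * ∏ p, (x p + y j)
  have hα : ∀ i, 0 < α i := fun i =>
    mul_pos (det_vandermonde_pos (hx.comp (Fin.strictMono_succAbove i)))
      (prod_pos fun q _ => hxy i q)
  have hβ : ∀ j, 0 < β j := fun j =>
    mul_pos (det_vandermonde_pos (hy.comp (Fin.strictMono_succAbove j)))
      (prod_pos fun p _ => hxy p j)
  -- the `(i, j)` minor is `∏ u / u i * ∏ v / v j * α i * β j / (x i + y j)` up to a constant
  set u : Fin (n + 1) → ℝ := fun i => α i / r i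
  set v : Fin (n + 1) → ℝ := fun j => β j / s j
  have hu : ∀ i, 0 < u i := fun i => div_pos (hα i) (hr i)
  have hv : ∀ j, 0 < v j := fun j => div_pos (hβ j) (hs j)
  have hT : 0 < ∏ p, ∏ q, (x p + y q) := prod_pos fun p _ => prod_pos fun q _ => hxy p q
  refine ⟨scaledCauchy x y u v, (∏ p, u p) * (∏ q, v q) / ∏ p, ∏ q, (x p + y q),
    totallyPositive_scaledCauchy hx hy hxy hu hv, fun i j => ?_⟩
  have key := det_submatrix_succAbove_scaledCauchy_mul x y u v (fun p q => (hxy p q).ne') i j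
  have := hα i; have := hβ j; have := hr i; have := hs j; have := hxy i j
  rw [← eq_div_iff (by positivity)] at key
  rw [key, show u i = α i / r i from rfl, show v j = β j / s j from rfl]
  field_simp
  simp only [α, β]
  ring

theorem exists_equiv_strictMono {α ι : Type*} [LinearOrder α] [Fintype ι] {n : ℕ}
    (hn : Fintype.card ι = n) {x : ι → α} (hx : Function.Injective x) :
    ∃ σ : Fin n ≃ ι, StrictMono (x ∘ σ) := by
  let e := (Fintype.equivFinOfCardEq hn).symm
  exact ⟨(Tuple.sort (x ∘ e)).trans e, (Tuple.monotone_sort (x ∘ e)).strictMono_of_injective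
    (hx.comp (e.injective.comp (Tuple.sort _).injective))⟩

theorem exists_totallyPositive_card_incidences_le {ι κ : Type*} [Fintype ι] [Fintype κ] {n : ℕ}
    (hι : Fintype.card ι = n + 1) (hκ : Fintype.card κ = n + 1) {x r : ι → ℝ} {y s : κ → ℝ}
    (hx : Function.Injective x) (hy : Function.Injective y) (hxy : ∀ i j, 0 < x i + y j)
    (hr : ∀ i, 0 < r i) (hs : ∀ j, 0 < s j) :
    ∃ (A : Matrix (Fin (n + 1)) (Fin (n + 1)) ℝ) (c : ℝ), TotallyPositive A ∧
      #{q : ι × κ | x q.1 + y q.2 = r q.1 * s q.2} ≤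
        #{q : Fin (n + 1) × Fin (n + 1) | (A.submatrix q.1.succAbove q.2.succAbove).det = c} := by
  obtain ⟨σ, hσ⟩ := exists_equiv_strictMono hι hx
  obtain ⟨τ, hτ⟩ := exists_equiv_strictMono hκ hy
  obtain ⟨A, c, hA, hminor⟩ := exists_totallyPositive_det_submatrix_succAbove_eq (r := r ∘ σ)
    (s := s ∘ τ) hσ hτ (fun _ _ => hxy _ _) (fun _ => hr _) (fun _ => hs _)
  refine ⟨A, c, hA, card_le_card_of_injOn (σ.symm.prodCongr τ.symm) (fun q hq => ?_)
    (σ.symm.prodCongr τ.symm).injective.injOn⟩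
  simp only [mem_coe, mem_filter, mem_univ, true_and] at hq ⊢
  simp [hminor, ← hq, (hxy q.1 q.2).ne']

theorem card_grid_incidences (k : ℕ) :
    k ^ 4 ≤ #{q : (Fin k × Fin (2 * k ^ 2)) × (Fin k × Fin (2 * k ^ 2)) |
      (q.2.2 : ℕ) = q.1.1 * q.2.1 + q.1.2} := by
  have hcard : #(univ : Finset (Fin k × Fin k × Fin (k ^ 2))) = k ^ 4 := by
    simp only [card_univ, Fintype.card_prod, Fintype.card_fin]
    ring
  rw [← hcard]
  refine card_le_card_of_injOn
    (fun t => ((t.1, ⟨t.2.2, by omega⟩), (t.2.1, ⟨t.1 * t.2.1 + t.2.2, ?_⟩))) ?_ ?_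
  · have := Nat.mul_le_mul t.1.isLt.le t.2.1.isLt.le
    have := sq k
    omega
  · intro t _
    simp
  · intro t _ t' _ h
    simp only [Prod.mk.injEq, Fin.mk.injEq] at h
    ext <;> omega

theorem exists_injective_incidences (k : ℕ) :
    ∃ x r y s : Fin k × Fin (2 * k ^ 2) → ℝ, Function.Injective x ∧ Function.Injective y ∧
      (∀ i j, 0 < x i + y j) ∧ (∀ i, 0 < r i) ∧ (∀ j, 0 < s j) ∧
      k ^ 4 ≤ #{q : (Fin k × Fin (2 * k ^ 2)) × (Fin k × Fin (2 * k ^ 2)) |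
        x q.1 + y q.2 = r q.1 * s q.2} := by
  set M := 2 * k ^ 2
  have hkM : k ≤ M := by have := Nat.le_self_pow two_ne_zero k; omega
  have hcode : Function.Injective fun l : Fin k × Fin M => ((finProdFinEquiv l : ℕ) : ℝ) :=
    (Nat.cast_injective.comp Fin.val_injective).comp finProdFinEquiv.injective
  -- the line `b = σ a + h` becomes `(x, r) = (M σ + h, σ + M)` and the point `(a, b)` becomes
  -- `(y, s) = (M² - (M a + b), M - a)`, so that `x + y - r s = h + σ a - b`
  refine ⟨fun l => (finProdFinEquiv l : ℕ), fun l => l.1 + M,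
    fun p => M ^ 2 - (finProdFinEquiv p : ℕ), fun p => M - p.1, hcode,
    sub_right_injective.comp hcode, fun l p => ?_, fun l => ?_, fun p => ?_, ?_⟩
  · have : (finProdFinEquiv p : ℕ) < M ^ 2 :=
      (finProdFinEquiv p).isLt.trans_le (by rw [sq]; exact Nat.mul_le_mul_right M hkM)
    exact add_pos_of_nonneg_of_pos (Nat.cast_nonneg _) (sub_pos.2 (by exact_mod_cast this))
  · exact add_pos_of_nonneg_of_pos (Nat.cast_nonneg _)
      (Nat.cast_pos.2 (by have := l.1.isLt; omega))
  · exact sub_pos.2 (by exact_mod_cast p.1.isLt.trans_le hkM)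
  · refine (card_grid_incidences k).trans (card_le_card fun q hq => ?_)
    simp only [mem_filter, mem_univ, true_and, finProdFinEquiv_apply_val] at hq ⊢
    rw [hq]
    push_cast
    ring

theorem two_mul_pow_three_rpow_le {x : ℝ} (hx : 0 ≤ x) :
    (2 * x ^ 3) ^ ((4 : ℝ) / 3) ≤ 4 * x ^ 4 := by
  have h2 : (2 : ℝ) ^ ((4 : ℝ) / 3) ≤ 4 :=
    calc (2 : ℝ) ^ ((4 : ℝ) / 3) ≤ 2 ^ (2 : ℝ) :=
          Real.rpow_le_rpow_of_exponent_le (by norm_num) (by norm_num)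
      _ = 4 := by norm_num
  have hx3 : (x ^ 3) ^ ((4 : ℝ) / 3) = x ^ 4 := by
    rw [← Real.rpow_natCast, ← Real.rpow_mul hx]
    norm_num
  rw [Real.mul_rpow (by norm_num) (by positivity), hx3]
  gcongr

/-- for infinitely many sizes there is a totally positive square
matrix and a value v attained by at least c·(size)^{4/3} of its maximal
(codimension-one) minors. -/
theorem stmt_7 : ∃ c : ℝ, 0 < c ∧ ∀ N : ℕ, ∃ n : ℕ, N ≤ n ∧
    ∃ (A : Matrix (Fin (n + 1)) (Fin (n + 1)) ℝ) (v : ℝ), TotallyPositive A ∧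
      c * ((n + 1 : ℕ) : ℝ) ^ ((4 : ℝ) / 3)
        ≤ ((Finset.univ.filter fun q : Fin (n + 1) × Fin (n + 1) =>
            (A.submatrix q.1.succAbove q.2.succAbove).det = v).card : ℝ) := by
  refine ⟨1 / 4, by norm_num, fun N => ?_⟩
  set k := N + 1
  obtain ⟨n, hn⟩ : ∃ n, n + 1 = 2 * k ^ 3 :=
    ⟨2 * k ^ 3 - 1, by have := Nat.one_le_pow 3 k N.succ_pos; omega⟩
  have hcard : Fintype.card (Fin k × Fin (2 * k ^ 2)) = n + 1 := by
    rw [Fintype.card_prod, Fintype.card_fin, Fintype.card_fin, hn]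
    ring
  obtain ⟨x, r, y, s, hx, hy, hxy, hr, hs, hcount⟩ := exists_injective_incidences k
  obtain ⟨A, c, hA, hle⟩ := exists_totallyPositive_card_incidences_le hcard hcard hx hy hxy hr hs
  refine ⟨n, by have := Nat.le_self_pow three_ne_zero k; omega, A, c, hA, ?_⟩
  calc 1 / 4 * ((n + 1 : ℕ) : ℝ) ^ ((4 : ℝ) / 3)
      = 1 / 4 * (2 * (k : ℝ) ^ 3) ^ ((4 : ℝ) / 3) := by rw [hn]; push_cast; rfl
    _ ≤ (k ^ 4 : ℕ) := by
        push_cast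
        linarith [two_mul_pow_three_rpow_le k.cast_nonneg]
    _ ≤ _ := by exact_mod_cast hcount.trans hle
end

section
/- Let A be an n-by-n totally positive real matrix and let k ≥ 1. Then the number of positions (i,j) whose entry A i j is among the k smallest entries of A is at most (2^k − 1)(2n − 1). -/
noncomputable def cA {n : ℕ} (A : Matrix (Fin n) (Fin n) ℝ) (p : Fin n × Fin n) : ℕ :=
  ((Finset.univ.image fun r : Fin n × Fin n => A r.1 r.2).filter
    fun v => v < A p.1 p.2).card

lemma cA_lt {n : ℕ} (A : Matrix (Fin n) (Fin n) ℝ) {p p' : Fin n × Fin n}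
    (h : A p.1 p.2 < A p'.1 p'.2) : cA A p < cA A p' := by
  apply Finset.card_lt_card
  have hsub : ((Finset.univ.image fun r : Fin n × Fin n => A r.1 r.2).filter
      fun v => v < A p.1 p.2) ⊆ ((Finset.univ.image fun r : Fin n × Fin n => A r.1 r.2).filter
      fun v => v < A p'.1 p'.2) := by
    intro v hv
    simp only [Finset.mem_filter] at *
    exact ⟨hv.1, hv.2.trans h⟩
  rw [Finset.ssubset_iff_of_subset hsub]
  refine ⟨A p.1 p.2, ?_, ?_⟩
  · simp only [Finset.mem_filter, Finset.mem_image]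
    exact ⟨⟨p, Finset.mem_univ p, rfl⟩, h⟩
  · simp only [Finset.mem_filter]
    rintro ⟨-, h2⟩
    exact lt_irrefl _ h2

lemma tp_pos {n : ℕ} {A : Matrix (Fin n) (Fin n) ℝ} (hA : TotallyPositive A)
    (i j : Fin n) : 0 < A i j := by
  have := hA 1 (fun _ => i) (fun _ => j) (Subsingleton.strictMono _) (Subsingleton.strictMono _)
  rwa [Matrix.det_fin_one, Matrix.submatrix_apply] at this

lemma tp_two {n : ℕ} {A : Matrix (Fin n) (Fin n) ℝ} (hA : TotallyPositive A)
    {i1 i2 j1 j2 : Fin n} (hi : i1 < i2) (hj : j1 < j2) :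
    A i1 j2 * A i2 j1 < A i1 j1 * A i2 j2 := by
  have hf : StrictMono ![i1, i2] := by
    intro a b hab
    fin_cases a <;> fin_cases b <;> simp_all
  have hg : StrictMono ![j1, j2] := by
    intro a b hab
    fin_cases a <;> fin_cases b <;> simp_all
  have := hA 2 ![i1, i2] ![j1, j2] hf hg
  rw [Matrix.det_fin_two] at this
  simp only [Matrix.submatrix_apply, Matrix.cons_val_zero, Matrix.cons_val_one,
    Matrix.head_cons] at this
  linarith

lemma chain_bound {n : ℕ} {A : Matrix (Fin n) (Fin n) ℝ} (hA : TotallyPositive A) :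
    ∀ (j : ℕ) (q : ℕ → Fin n × Fin n),
      (∀ a b, a < b → b < 2 ^ j → ((q a).1 < (q b).1 ∧ (q a).2 < (q b).2)) →
      (∀ a, a < 2 ^ j → cA A (q a) < j) → False := by
  intro j
  induction j with
  | zero =>
    intro q _ hc
    exact absurd (hc 0 (by norm_num)) (by omega)
  | succ j ih =>
    intro q hchain hc
    have hp : (2:ℕ) ^ (j+1) = 2 ^ j * 2 := pow_succ 2 j
    refine ih (fun a =>
      if A ((q (2*a)).1) ((q (2*a+1)).2) ≤ A ((q (2*a+1)).1) ((q (2*a)).2)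
      then ((q (2*a)).1, (q (2*a+1)).2) else ((q (2*a+1)).1, (q (2*a)).2)) ?_ ?_
    · intro a b hab hb
      have c1 := hchain (2*a) (2*a+1) (by omega) (by omega)
      have c2 := hchain (2*a+1) (2*b) (by omega) (by omega)
      have c3 := hchain (2*b) (2*b+1) (by omega) (by omega)
      simp only [Fin.lt_def] at c1 c2 c3
      split_ifs <;> refine ⟨?_, ?_⟩ <;> (simp only [Fin.lt_def]; omega)
    · intro a ha
      have c1 := hchain (2*a) (2*a+1) (by omega) (by omega)
      have hmin := tp_two hA c1.1 c1.2
      have P1 := tp_pos hA ((q (2*a)).1) ((q (2*a+1)).2)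
      have P2 := tp_pos hA ((q (2*a+1)).1) ((q (2*a)).2)
      have P3 := tp_pos hA ((q (2*a)).1) ((q (2*a)).2)
      have P4 := tp_pos hA ((q (2*a+1)).1) ((q (2*a+1)).2)
      have hA1 := hc (2*a) (by omega)
      have hA2 := hc (2*a+1) (by omega)
      split_ifs with h
      · have hor : A ((q (2*a)).1) ((q (2*a+1)).2) < A ((q (2*a)).1) ((q (2*a)).2) ∨
            A ((q (2*a)).1) ((q (2*a+1)).2) < A ((q (2*a+1)).1) ((q (2*a+1)).2) := by
          by_contra hcon
          push_neg at hcon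
          nlinarith
        rcases hor with h' | h'
        · have := cA_lt A (p := ((q (2*a)).1, (q (2*a+1)).2)) (p' := q (2*a)) h'
          omega
        · have := cA_lt A (p := ((q (2*a)).1, (q (2*a+1)).2)) (p' := q (2*a+1)) h'
          omega
      · push_neg at h
        have hor : A ((q (2*a+1)).1) ((q (2*a)).2) < A ((q (2*a)).1) ((q (2*a)).2) ∨
            A ((q (2*a+1)).1) ((q (2*a)).2) < A ((q (2*a+1)).1) ((q (2*a+1)).2) := by
          by_contra hcon
          push_neg at hcon
          nlinarith
        rcases hor with h' | h'
        · have := cA_lt A (p := ((q (2*a+1)).1, (q (2*a)).2)) (p' := q (2*a)) h'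
          omega
        · have := cA_lt A (p := ((q (2*a+1)).1, (q (2*a)).2)) (p' := q (2*a+1)) h'
          omega

/-- in an n-by-n totally positive matrix, at most
(2^k − 1)(2n − 1) positions hold entries among the k smallest entries, where an
entry is among the k smallest if at most k−1 distinct entry values are strictly
smaller than it. -/
theorem stmt_8 (n k : ℕ) (hk : 1 ≤ k) (A : Matrix (Fin n) (Fin n) ℝ)
    (hA : TotallyPositive A) :
    (Finset.univ.filter fun q : Fin n × Fin n =>
        ((Finset.univ.image fun r : Fin n × Fin n => A r.1 r.2).filter
          fun v => v < A q.1 q.2).card ≤ k - 1).card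
      ≤ (2 ^ k - 1) * (2 * n - 1) := by
  classical
  show (Finset.univ.filter fun q : Fin n × Fin n => cA A q ≤ k - 1).card
      ≤ (2 ^ k - 1) * (2 * n - 1)
  set S := Finset.univ.filter fun q : Fin n × Fin n => cA A q ≤ k - 1 with hS
  rcases Nat.eq_zero_or_pos n with hn | hn
  · subst hn
    calc S.card ≤ (Finset.univ : Finset (Fin 0 × Fin 0)).card := Finset.card_filter_le _ _
      _ = 0 := by simp
      _ ≤ _ := Nat.zero_le _
  · set d : Fin n × Fin n → ℕ := fun p => n - 1 + (p.2 : ℕ) - (p.1 : ℕ) with hd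
    have hmem : ∀ p ∈ S, d p ∈ Finset.range (2 * n - 1) := by
      intro p _
      have h1 := p.1.isLt
      have h2 := p.2.isLt
      simp only [Finset.mem_range, hd]
      omega
    rw [Finset.card_eq_sum_card_fiberwise hmem]
    have hbound : ∀ t ∈ Finset.range (2 * n - 1),
        (S.filter fun p => d p = t).card ≤ 2 ^ k - 1 := by
      intro t _
      by_contra hcon
      push_neg at hcon
      set F := S.filter fun p => d p = t with hF
      have hFS : ∀ p ∈ F, cA A p ≤ k - 1 ∧ d p = t := by
        intro p hp
        rw [hF, Finset.mem_filter, hS, Finset.mem_filter] at hp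
        exact ⟨hp.1.2, hp.2⟩
      have hdiag : ∀ p ∈ F, ∀ p' ∈ F, (p.1 : ℕ) < (p'.1 : ℕ) → (p.2 : ℕ) < (p'.2 : ℕ) := by
        intro p hp p' hp' hlt
        have h1 := (hFS p hp).2
        have h2 := (hFS p' hp').2
        have := p.1.isLt
        have := p'.1.isLt
        simp only [hd] at h1 h2
        omega
      have hinj : Set.InjOn Prod.fst (F : Set (Fin n × Fin n)) := by
        intro p hp p' hp' h
        have h1 := (hFS p hp).2
        have h2 := (hFS p' hp').2
        have hv : (p.1 : ℕ) = (p'.1 : ℕ) := by rw [h]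
        have := p.1.isLt
        have := p'.1.isLt
        simp only [hd] at h1 h2
        have hv2 : (p.2 : ℕ) = (p'.2 : ℕ) := by omega
        exact Prod.ext h (Fin.ext hv2)
      set F1 := F.image Prod.fst with hF1
      have hcard : F1.card = F.card := Finset.card_image_of_injOn hinj
      have h2k : 2 ^ k ≤ F1.card := by
        have := Nat.one_le_two_pow (n := k)
        omega
      have hex : ∀ i : Fin F1.card, ∃ p, p ∈ F ∧ p.1 = F1.orderEmbOfFin rfl i := by
        intro i
        have := Finset.orderEmbOfFin_mem F1 rfl i
        obtain ⟨p, hp, hpe⟩ := Finset.mem_image.mp this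
        exact ⟨p, hp, hpe⟩
      choose P hPF hPe using hex
      apply chain_bound hA k
        (fun a => if h : a < F1.card then P ⟨a, h⟩ else (⟨0, hn⟩, ⟨0, hn⟩))
      · intro a b hab hb
        have hb' : b < F1.card := lt_of_lt_of_le hb h2k
        have ha' : a < F1.card := by omega
        simp only [dif_pos ha', dif_pos hb']
        have hlt1 : (P ⟨a, ha'⟩).1 < (P ⟨b, hb'⟩).1 := by
          rw [hPe, hPe]
          exact (F1.orderEmbOfFin rfl).strictMono (show (⟨a, ha'⟩ : Fin F1.card) < ⟨b, hb'⟩ from hab)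
        refine ⟨hlt1, ?_⟩
        exact Fin.lt_def.mpr (hdiag _ (hPF ⟨a, ha'⟩) _ (hPF ⟨b, hb'⟩) (Fin.lt_def.mp hlt1))
      · intro a ha
        have ha' : a < F1.card := lt_of_lt_of_le ha h2k
        simp only [dif_pos ha']
        have := (hFS _ (hPF ⟨a, ha'⟩)).1
        omega
    calc ∑ t ∈ Finset.range (2 * n - 1), (S.filter fun p => d p = t).card
        ≤ (Finset.range (2 * n - 1)).card • (2 ^ k - 1) :=
          Finset.sum_le_card_nsmul _ _ _ hbound
      _ = (2 ^ k - 1) * (2 * n - 1) := by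
          simp [Finset.card_range, smul_eq_mul, Nat.mul_comm]
end

section
/- Let A be an n-by-n totally positive real matrix and let k ≥ 1. Then the number of positions (i,j) whose entry A i j is among the k largest entries of A is at most (2^k − 1)(2n − 1). -/
/-!
The positions on an antidiagonal `i + j = a` run from the lower left to the upper right. For two
consecutive ones, positivity of the 2×2 minor on their rows and columns forces one of the two
other corners of their rectangle to hold an entry larger than the smaller of the two. Replacing
each consecutive pair by such a corner halves the chain and leaves one fewer admissible value
above its entries; so fewer than `2^k` positions of an antidiagonal hold one of the `k` largest
entries, and there are `2n - 1` antidiagonals.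
-/

open Finset

theorem min_lt_max_of_mul_lt_mul_of_nonneg {α : Type*} [MulZeroClass α] [LinearOrder α]
    [PosMulMono α] [MulPosMono α] {a b c d : α} (h : a * b < c * d) (ha : 0 ≤ a) (hd : 0 ≤ d) :
    min a b < max c d := by
  by_contra! hle
  exact h.not_ge (mul_le_mul (le_of_max_le_left (hle.trans (min_le_left a b)))
    (le_of_max_le_right (hle.trans (min_le_right a b))) hd ha)

section ValuesAbove

variable {α β : Type*} [Fintype α] [LinearOrder β] (f : α → β)

def valuesAbove (x : β) : Finset β :=
  (univ.image f).filter (x < ·)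

variable {f}

theorem card_valuesAbove_lt_of_lt {x : β} {a : α} (h : x < f a) :
    #(valuesAbove f (f a)) < #(valuesAbove f x) := by
  refine card_lt_card ((ssubset_iff_of_subset fun v hv => ?_).2 ⟨f a, ?_, ?_⟩)
  · simp only [valuesAbove, mem_filter] at hv ⊢
    exact ⟨hv.1, h.trans hv.2⟩
  · simpa [valuesAbove] using h
  · simp [valuesAbove]

theorem card_valuesAbove_lt_or_lt {a b c d : α} {K : ℕ} (h : min (f a) (f b) < max (f c) (f d))
    (ha : #(valuesAbove f (f a)) ≤ K) (hb : #(valuesAbove f (f b)) ≤ K) :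
    #(valuesAbove f (f c)) < K ∨ #(valuesAbove f (f d)) < K := by
  have hmin : #(valuesAbove f (min (f a) (f b))) ≤ K := by
    rcases min_choice (f a) (f b) with hab | hab <;> rwa [hab]
  rcases max_choice (f c) (f d) with hcd | hcd <;> rw [hcd] at h
  · exact .inl ((card_valuesAbove_lt_of_lt h).trans_le hmin)
  · exact .inr ((card_valuesAbove_lt_of_lt h).trans_le hmin)

end ValuesAbove

theorem exists_strictMono_strictAnti_of_antidiagonal {m n : ℕ} (S : Finset (Fin m × Fin n))
    {a : ℕ} (hS : ∀ p ∈ S, p.1.val + p.2.val = a) :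
    ∃ (r : Fin #S → Fin m) (c : Fin #S → Fin n), StrictMono r ∧ StrictAnti c ∧
      ∀ t, (r t, c t) ∈ S := by
  have hinj : Set.InjOn Prod.fst (S : Set (Fin m × Fin n)) := fun p hp q hq hpq =>
    Prod.ext hpq <| Fin.ext <| by
      have := hS p hp; have := hS q hq; have := Fin.val_eq_of_eq hpq; omega
  let r := (S.image Prod.fst).orderEmbOfFin (card_image_of_injOn hinj)
  have hrow (t : Fin #S) : ∃ p ∈ S, p.1 = r t := mem_image.1 (orderEmbOfFin_mem _ _ t)
  choose p hpS hpr using hrow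
  refine ⟨r, fun t => (p t).2, r.strictMono, fun s t hst => ?_, fun t => ?_⟩
  · show (p t).2 < (p s).2
    have := r.strictMono hst
    rw [← hpr, ← hpr, Fin.lt_def] at this
    have := hS _ (hpS s)
    have := hS _ (hpS t)
    exact Fin.lt_def.2 (by omega)
  · simpa [← hpr] using hpS t

namespace TotallyPositive

variable {m n : ℕ} {A : Matrix (Fin m) (Fin n) ℝ}

theorem entry_pos_s9 (hA : TotallyPositive A) (i : Fin m) (j : Fin n) : 0 < A i j := by
  have h := hA 1 ![i] ![j] (Subsingleton.strictMono _) (Subsingleton.strictMono _)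
  rwa [Matrix.det_fin_one] at h

theorem mul_lt_mul_of_lt_of_lt_s9 (hA : TotallyPositive A) {i i' : Fin m} {j j' : Fin n}
    (hi : i < i') (hj : j < j') : A i j' * A i' j < A i j * A i' j' := by
  have h := hA 2 ![i, i'] ![j, j'] (Fin.strictMono_iff_lt_succ.2 (by simpa using hi))
    (Fin.strictMono_iff_lt_succ.2 (by simpa using hj))
  rw [Matrix.det_fin_two] at h
  simp only [Matrix.submatrix_apply] at h
  simpa [sub_pos] using h

theorem min_lt_max_of_lt_of_lt (hA : TotallyPositive A) {i i' : Fin m} {j j' : Fin n}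
    (hi : i < i') (hj : j < j') : min (A i j') (A i' j) < max (A i j) (A i' j') :=
  min_lt_max_of_mul_lt_mul_of_nonneg (hA.mul_lt_mul_of_lt_of_lt_s9 hi hj) (hA.entry_pos_s9 _ _).le
    (hA.entry_pos_s9 _ _).le

theorem exists_card_valuesAbove_lt (hA : TotallyPositive A) {i i' : Fin m} {j j' : Fin n}
    (hi : i < i') (hj : j < j') {K : ℕ} (h : #(valuesAbove (Function.uncurry A) (A i j')) ≤ K)
    (h' : #(valuesAbove (Function.uncurry A) (A i' j)) ≤ K) :
    ∃ p : Fin m × Fin n, i ≤ p.1 ∧ p.1 ≤ i' ∧ j ≤ p.2 ∧ p.2 ≤ j' ∧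
      #(valuesAbove (Function.uncurry A) (A p.1 p.2)) < K := by
  rcases card_valuesAbove_lt_or_lt (a := (i, j')) (b := (i', j)) (c := (i, j)) (d := (i', j'))
    (hA.min_lt_max_of_lt_of_lt hi hj) h h' with hlt | hlt
  · exact ⟨(i, j), le_rfl, hi.le, le_rfl, hj.le, hlt⟩
  · exact ⟨(i', j'), hi.le, le_rfl, hj.le, le_rfl, hlt⟩

theorem lt_two_pow_of_strictMono_of_strictAnti (hA : TotallyPositive A) {K l : ℕ}
    {r : Fin l → Fin m} {c : Fin l → Fin n} (hr : StrictMono r) (hc : StrictAnti c)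
    (hK : ∀ t, #(valuesAbove (Function.uncurry A) (A (r t) (c t))) < K) : l < 2 ^ K := by
  induction K generalizing l with
  | zero =>
    obtain _ | l := l
    · exact Nat.one_pos
    · exact absurd (hK 0) (Nat.not_lt_zero _)
  | succ K ih =>
    have hpair : ∀ t : Fin (l / 2), ∃ p : Fin m × Fin n,
        r ⟨2 * t, by omega⟩ ≤ p.1 ∧ p.1 ≤ r ⟨2 * t + 1, by omega⟩ ∧
        c ⟨2 * t + 1, by omega⟩ ≤ p.2 ∧ p.2 ≤ c ⟨2 * t, by omega⟩ ∧
        #(valuesAbove (Function.uncurry A) (A p.1 p.2)) < K := fun t =>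
      have hlt : (⟨2 * t, by omega⟩ : Fin l) < ⟨2 * t + 1, by omega⟩ := Fin.mk_lt_mk.2 (by omega)
      hA.exists_card_valuesAbove_lt (hr hlt) (hc hlt) (Nat.lt_succ_iff.1 (hK _))
        (Nat.lt_succ_iff.1 (hK _))
    choose p hp using hpair
    have hgap {s t : Fin (l / 2)} (hst : s < t) :
        (⟨2 * s + 1, by omega⟩ : Fin l) < ⟨2 * t, by omega⟩ := Fin.mk_lt_mk.2 (by omega)
    have hhalf : l / 2 < 2 ^ K := ih (r := fun t => (p t).1) (c := fun t => (p t).2)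
      (fun s t hst => (hp s).2.1.trans_lt ((hr (hgap hst)).trans_le (hp t).1))
      (fun s t hst => (hp t).2.2.2.1.trans_lt ((hc (hgap hst)).trans_le (hp s).2.2.1))
      (fun t => (hp t).2.2.2.2)
    rw [pow_succ]
    omega

theorem card_lt_two_pow_of_antidiagonal (hA : TotallyPositive A) {S : Finset (Fin m × Fin n)}
    {a K : ℕ} (hS : ∀ p ∈ S, p.1.val + p.2.val = a)
    (hK : ∀ p ∈ S, #(valuesAbove (Function.uncurry A) (A p.1 p.2)) < K) : #S < 2 ^ K := by
  obtain ⟨r, c, hr, hc, hmem⟩ := exists_strictMono_strictAnti_of_antidiagonal S hS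
  exact hA.lt_two_pow_of_strictMono_of_strictAnti hr hc fun t => hK _ (hmem t)

end TotallyPositive

/-- in an n-by-n totally positive matrix, at most
(2^k − 1)(2n − 1) positions hold entries among the k largest entries, where an
entry is among the k largest if at most k−1 distinct entry values are strictly
larger than it. -/
theorem stmt_9 (n k : ℕ) (hk : 1 ≤ k) (A : Matrix (Fin n) (Fin n) ℝ)
    (hA : TotallyPositive A) :
    (Finset.univ.filter fun q : Fin n × Fin n =>
        ((Finset.univ.image fun r : Fin n × Fin n => A r.1 r.2).filter
          fun v => A q.1 q.2 < v).card ≤ k - 1).card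
      ≤ (2 ^ k - 1) * (2 * n - 1) := by
  rw [← card_range (2 * n - 1)]
  refine card_le_mul_card_image_of_maps_to (f := fun q => q.1.val + q.2.val)
    (fun q _ => mem_range.2 (by omega)) _ fun a _ => Nat.le_sub_one_of_lt ?_
  refine hA.card_lt_two_pow_of_antidiagonal (fun p hp => (mem_filter.1 hp).2) fun p hp => ?_
  have : #(valuesAbove (Function.uncurry A) (A p.1 p.2)) ≤ k - 1 :=
    (mem_filter.1 (mem_filter.1 hp).1).2
  omega
end

section
/- Let A be an n-by-n totally positive real matrix, let k ≥ 1, and let c be an integer. Then the number of positions (i,j) with i − j = c whose entry A i j is among the k smallest entries of A is at most 2^k − 1; in particular, each diagonal of A contains at most 2^k − 1 entries that are among the k smallest entries of A. -/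
namespace Stmt10Aux

variable {n : ℕ} (A : Matrix (Fin n) (Fin n) ℝ)

noncomputable def rk (x : ℝ) : ℕ :=
  ((Finset.univ.image fun r : Fin n × Fin n => A r.1 r.2).filter fun v => v < x).card

lemma entry_pos (hA : TotallyPositive A) (i j : Fin n) : 0 < A i j := by
  have h := hA 1 (fun _ => i) (fun _ => j)
    (fun a b h => absurd (Subsingleton.elim a b) (ne_of_lt h))
    (fun a b h => absurd (Subsingleton.elim a b) (ne_of_lt h))
  simpa [Matrix.det_fin_one, Matrix.submatrix] using h

lemma minor2 (hA : TotallyPositive A) {i1 i2 j1 j2 : Fin n} (hi : i1 < i2) (hj : j1 < j2) :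
    A i1 j2 * A i2 j1 < A i1 j1 * A i2 j2 := by
  have hf : StrictMono ![i1, i2] := by
    intro a b hab
    fin_cases a <;> fin_cases b <;> simp_all
  have hg : StrictMono ![j1, j2] := by
    intro a b hab
    fin_cases a <;> fin_cases b <;> simp_all
  have h := hA 2 ![i1, i2] ![j1, j2] hf hg
  rw [Matrix.det_fin_two] at h
  simp [Matrix.submatrix] at h
  linarith

lemma rk_lt_rk {x y : ℝ}
    (hx : x ∈ (Finset.univ.image fun r : Fin n × Fin n => A r.1 r.2)) (hxy : x < y) :
    rk A x < rk A y := by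
  apply Finset.card_lt_card
  constructor
  · intro v hv
    simp only [Finset.mem_filter] at hv ⊢
    exact ⟨hv.1, lt_trans hv.2 hxy⟩
  · intro hsub
    have hx' : x ∈ (Finset.univ.image fun r : Fin n × Fin n => A r.1 r.2).filter
        (fun v => v < y) := Finset.mem_filter.2 ⟨hx, hxy⟩
    have := hsub hx'
    simp at this

lemma cross (hA : TotallyPositive A) {p q : Fin n × Fin n} (h1 : p.1 < q.1) (h2 : p.2 < q.2) :
    ∃ r : Fin n × Fin n, p.1 ≤ r.1 ∧ r.1 ≤ q.1 ∧ p.2 ≤ r.2 ∧ r.2 ≤ q.2 ∧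
      A r.1 r.2 < max (A p.1 p.2) (A q.1 q.2) := by
  have hm := minor2 A hA h1 h2
  have e1 := entry_pos A hA p.1 p.2
  have e2 := entry_pos A hA q.1 q.2
  have e3 := entry_pos A hA p.1 q.2
  have e4 := entry_pos A hA q.1 p.2
  have hM1 : A p.1 p.2 ≤ max (A p.1 p.2) (A q.1 q.2) := le_max_left _ _
  have hM2 : A q.1 q.2 ≤ max (A p.1 p.2) (A q.1 q.2) := le_max_right _ _
  rcases le_total (A p.1 q.2) (A q.1 p.2) with h | h
  · exact ⟨(p.1, q.2), le_refl _, le_of_lt h1, le_of_lt h2, le_refl _, by nlinarith⟩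
  · exact ⟨(q.1, p.2), le_of_lt h1, le_refl _, le_refl _, le_of_lt h2, by nlinarith⟩

lemma chain_bound (hA : TotallyPositive A) :
    ∀ (k t : ℕ) (p : Fin t → Fin n × Fin n),
      (∀ a b : Fin t, a < b → (p a).1 < (p b).1 ∧ (p a).2 < (p b).2) →
      (∀ a, rk A (A (p a).1 (p a).2) < k) → t < 2 ^ k := by
  intro k
  induction k with
  | zero =>
    intro t p _ hr
    by_contra h
    push_neg at h
    have ht : 0 < t := by
      have : (1 : ℕ) ≤ t := by simpa using h
      omega
    exact absurd (hr ⟨0, ht⟩) (Nat.not_lt_zero _)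
  | succ k ih =>
    intro t p hmono hr
    have hidx : ∀ a : Fin (t / 2), 2 * (a : ℕ) + 1 < t := by
      intro a; have := a.2; omega
    have hidx0 : ∀ a : Fin (t / 2), 2 * (a : ℕ) < t := by
      intro a; have := hidx a; omega
    have key : ∀ a : Fin (t / 2), ∃ r : Fin n × Fin n,
        (p ⟨2 * a, hidx0 a⟩).1 ≤ r.1 ∧ r.1 ≤ (p ⟨2 * a + 1, hidx a⟩).1 ∧
        (p ⟨2 * a, hidx0 a⟩).2 ≤ r.2 ∧ r.2 ≤ (p ⟨2 * a + 1, hidx a⟩).2 ∧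
        rk A (A r.1 r.2) < k := by
      intro a
      have hab : (⟨2 * a, hidx0 a⟩ : Fin t) < ⟨2 * a + 1, hidx a⟩ := by
        simp [Fin.mk_lt_mk]
      obtain ⟨hm1, hm2⟩ := hmono _ _ hab
      obtain ⟨r, h1, h2, h3, h4, h5⟩ := cross A hA hm1 hm2
      refine ⟨r, h1, h2, h3, h4, ?_⟩
      have hrin : A r.1 r.2 ∈ (Finset.univ.image fun r : Fin n × Fin n => A r.1 r.2) :=
        Finset.mem_image.2 ⟨r, Finset.mem_univ r, rfl⟩
      rcases max_cases (A (p ⟨2 * a, hidx0 a⟩).1 (p ⟨2 * a, hidx0 a⟩).2)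
          (A (p ⟨2 * a + 1, hidx a⟩).1 (p ⟨2 * a + 1, hidx a⟩).2) with ⟨he, _⟩ | ⟨he, _⟩ <;>
        rw [he] at h5
      · have := rk_lt_rk A hrin h5
        have h6 := hr ⟨2 * a, hidx0 a⟩
        omega
      · have := rk_lt_rk A hrin h5
        have h6 := hr ⟨2 * a + 1, hidx a⟩
        omega
    choose q hq1 hq2 hq3 hq4 hq5 using key
    have hqmono : ∀ a b : Fin (t / 2), a < b → (q a).1 < (q b).1 ∧ (q a).2 < (q b).2 := by
      intro a b hab
      have hlt : (⟨2 * a + 1, hidx a⟩ : Fin t) < ⟨2 * b, hidx0 b⟩ := by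
        have : (a : ℕ) < b := hab
        simp [Fin.mk_lt_mk]; omega
      obtain ⟨hm1, hm2⟩ := hmono _ _ hlt
      exact ⟨lt_of_le_of_lt (hq2 a) (lt_of_lt_of_le hm1 (hq1 b)),
             lt_of_le_of_lt (hq4 a) (lt_of_lt_of_le hm2 (hq3 b))⟩
    have hs := ih (t / 2) q hqmono hq5
    have h2k : 2 ^ (k + 1) = 2 * 2 ^ k := by ring
    omega

end Stmt10Aux

/-- in an n-by-n totally positive matrix, each diagonal
{(i,j) : i − j = c} contains at most 2^k − 1 positions whose entries are among
the k smallest entries of the matrix. -/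
theorem stmt_10 (n k : ℕ) (hk : 1 ≤ k) (c : ℤ)
    (A : Matrix (Fin n) (Fin n) ℝ) (hA : TotallyPositive A) :
    (Finset.univ.filter fun q : Fin n × Fin n =>
        ((q.1 : ℤ) - (q.2 : ℤ) = c) ∧
        ((Finset.univ.image fun r : Fin n × Fin n => A r.1 r.2).filter
          fun v => v < A q.1 q.2).card ≤ k - 1).card
      ≤ 2 ^ k - 1 := by
  classical
  set S := (Finset.univ.filter fun q : Fin n × Fin n =>
        ((q.1 : ℤ) - (q.2 : ℤ) = c) ∧
        ((Finset.univ.image fun r : Fin n × Fin n => A r.1 r.2).filter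
          fun v => v < A q.1 q.2).card ≤ k - 1) with hS
  have hSdiag : ∀ q ∈ S, ((q.1 : ℤ) - (q.2 : ℤ) = c) := by
    intro q hq; rw [hS] at hq; exact (Finset.mem_filter.1 hq).2.1
  have hSrk : ∀ q ∈ S, Stmt10Aux.rk A (A q.1 q.2) < k := by
    intro q hq; rw [hS] at hq
    have := (Finset.mem_filter.1 hq).2.2
    unfold Stmt10Aux.rk
    omega
  have hinj : Set.InjOn Prod.fst (S : Set (Fin n × Fin n)) := by
    intro a ha b hb hab
    have h1 := hSdiag a ha
    have h2 := hSdiag b hb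
    have : (a.2 : ℤ) = (b.2 : ℤ) := by rw [hab] at h1; omega
    have h2eq : a.2 = b.2 := by
      apply Fin.ext
      exact_mod_cast this
    exact Prod.ext hab h2eq
  set T := S.image Prod.fst with hT
  have hTcard : T.card = S.card := Finset.card_image_of_injOn hinj
  let e := T.orderIsoOfFin rfl
  have hmem : ∀ a : Fin T.card, ∃ q ∈ S, q.1 = (e a : Fin n) := by
    intro a
    have h := (e a).2
    have h' : (e a : Fin n) ∈ S.image Prod.fst := h
    exact Finset.mem_image.1 h'
  choose f hfS hf1 using hmem
  have hmono : ∀ a b : Fin T.card, a < b → (f a).1 < (f b).1 ∧ (f a).2 < (f b).2 := by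
    intro a b hab
    have h1 : (f a).1 < (f b).1 := by
      rw [hf1 a, hf1 b]
      exact_mod_cast e.strictMono hab
    refine ⟨h1, ?_⟩
    have d1 := hSdiag _ (hfS a)
    have d2 := hSdiag _ (hfS b)
    have h1' : ((f a).1 : ℤ) < ((f b).1 : ℤ) := by exact_mod_cast h1
    have : ((f a).2 : ℤ) < ((f b).2 : ℤ) := by omega
    exact_mod_cast this
  have hrk : ∀ a : Fin T.card, Stmt10Aux.rk A (A (f a).1 (f a).2) < k :=
    fun a => hSrk _ (hfS a)
  have hb := Stmt10Aux.chain_bound A hA k T.card f hmono hrk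
  omega
end

section
/- Let S be a set of positions in {1,…,m}×{1,…,n} such that there are no row indices i < i' and column indices j < j' with all four positions (i,j), (i,j'), (i',j), (i',j') in S. Suppose some finite collection of orthogonal cycles, all of whose positions lie in S, is positive. Then there exists no m-by-n TP₂ real matrix A with A i j = 1 for every (i,j) ∈ S; in particular, the partial matrix with data all equal to 1 at the positions of S (which is partial TP₂) admits no TP₂ completion. -/
/-- `p 0, p 1, …, p (2k)` is an orthogonal cycle: it closes up, consecutive
even/odd positions share a row and consecutive odd/even positions share a
column. -/
def IsOrthoCycle {m n : ℕ} (k : ℕ) (p : ℕ → Fin m × Fin n) : Prop :=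
  1 ≤ k ∧ p 0 = p (2 * k) ∧
    ∀ i < k, (p (2 * i)).1 = (p (2 * i + 1)).1 ∧ (p (2 * i + 1)).2 = (p (2 * i + 2)).2

/-- The function 𝔠_C(i,j): the number of even-indexed positions p_{2l}
(1 ≤ l ≤ k) lying strictly below-right of (i,j), minus the corresponding
number of odd-indexed positions p_{2l−1}. -/
def cycleCount {m n : ℕ} (k : ℕ) (p : ℕ → Fin m × Fin n) (i j : ℕ) : ℤ :=
  (((Finset.Icc 1 k).filter fun l =>
      i < ((p (2 * l)).1 : ℕ) + 1 ∧ j < ((p (2 * l)).2 : ℕ) + 1).card : ℤ) -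
  (((Finset.Icc 1 k).filter fun l =>
      i < ((p (2 * l - 1)).1 : ℕ) + 1 ∧ j < ((p (2 * l - 1)).2 : ℕ) + 1).card : ℤ)

/-- A finite collection of orthogonal cycles is positive if the sum of the
functions 𝔠 is nonnegative at every pair and positive at some pair. -/
def IsPositiveCollection {m n N : ℕ} (K : Fin N → ℕ)
    (P : Fin N → ℕ → Fin m × Fin n) : Prop :=
  (∀ i j : ℕ, 0 ≤ ∑ a : Fin N, cycleCount (K a) (P a) i j) ∧
  (∃ i j : ℕ, 0 < ∑ a : Fin N, cycleCount (K a) (P a) i j)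

/-!
Write `L = log A`, shifted to 1-based indices and bordered by a zero row and column, and let
`D i j` be its mixed second differences. Positivity of the `2 × 2` minors of `A` is positivity
of `D` off the border. Each entry of `L` is the sum of `D` over the positions weakly above and to
the left of it, so for an orthogonal cycle `∑ₗ (L p₂ₗ - L p₂ₗ₋₁) = ∑ᵢⱼ 𝔠(i, j) D i j`.
Consecutive positions of a cycle share rows and columns, so `𝔠` vanishes on the border; for a
positive collection the total is therefore a nonnegative combination of positive numbers with a
positive coefficient, hence positive. If `A = 1` on `S`, every `L pₗ` vanishes and the total is `0`.
-/

open Finset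

section MixedDiff

variable {R : Type*} [AddCommGroup R]

def mixedDiff (f : ℕ → ℕ → R) (i j : ℕ) : R :=
  f (i + 1) (j + 1) - f (i + 1) j - f i (j + 1) + f i j

theorem sum_range_sum_range_mixedDiff (f : ℕ → ℕ → R) (u v : ℕ) :
    ∑ i ∈ range u, ∑ j ∈ range v, mixedDiff f i j = f u v - f u 0 - f 0 v + f 0 0 := by
  have hrow : ∀ i, ∑ j ∈ range v, mixedDiff f i j
      = (f (i + 1) v - f i v) - (f (i + 1) 0 - f i 0) := fun i => by
    rw [← sum_range_sub (fun j => f (i + 1) j - f i j)]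
    exact sum_congr rfl fun j _ => by simp only [mixedDiff]; abel
  rw [sum_congr rfl fun i _ => hrow i, sum_sub_distrib, sum_range_sub (f · v),
    sum_range_sub (f · 0)]
  abel

end MixedDiff

theorem sum_range_ite_lt {M : Type*} [AddCommMonoid M] {a b : ℕ} (h : a ≤ b) (f : ℕ → M) :
    ∑ i ∈ range b, (if i < a then f i else 0) = ∑ i ∈ range a, f i := by
  rw [← sum_filter]
  congr 1
  ext i
  simp only [mem_filter, mem_range]
  omega

section Extension

variable {R : Type*} [AddCommGroup R] {m n : ℕ}

/-- The matrix `w` shifted to 1-based indices and bordered by zeros, so that its mixed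
differences sum over a quadrant `[0, u] × [0, v]` to the entry `w u v`. -/
def borderExt (w : Fin m → Fin n → R) : ℕ → ℕ → R
  | i + 1, j + 1 => if h : i < m ∧ j < n then w ⟨i, h.1⟩ ⟨j, h.2⟩ else 0
  | _, _ => 0

/-- The indicator of `q ∈ P(i, j)`, in 0-based coordinates for `q`. -/
def quadrantInd (q : Fin m × Fin n) (i j : ℕ) : ℤ :=
  if i < (q.1 : ℕ) + 1 ∧ j < (q.2 : ℕ) + 1 then 1 else 0

theorem quadrantInd_eq_zero_of_le {q : Fin m × Fin n} {i j : ℕ} (h : m ≤ i ∨ n ≤ j) :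
    quadrantInd q i j = 0 := by
  have := q.1.isLt
  have := q.2.isLt
  rw [quadrantInd, if_neg (by omega)]

theorem sum_quadrantInd_smul_mixedDiff (w : Fin m → Fin n → R) (q : Fin m × Fin n) :
    ∑ i ∈ range m, ∑ j ∈ range n, quadrantInd q i j • mixedDiff (borderExt w) i j =
      w q.1 q.2 := by
  have hrestrict : ∀ i, ∑ j ∈ range n, quadrantInd q i j • mixedDiff (borderExt w) i j
      = if i < (q.1 : ℕ) + 1 then ∑ j ∈ range ((q.2 : ℕ) + 1), mixedDiff (borderExt w) i j
        else 0 := fun i => by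
    split_ifs with hi
    · rw [← sum_range_ite_lt q.2.isLt]
      simp [quadrantInd, hi, ite_smul]
    · simp [quadrantInd, hi]
  simp only [hrestrict, sum_range_ite_lt q.1.isLt, sum_range_sum_range_mixedDiff]
  simp [borderExt]

theorem mixedDiff_borderExt_succ (w : Fin m → Fin n → R) {i j : ℕ} (hi : i + 1 < m)
    (hj : j + 1 < n) :
    mixedDiff (borderExt w) (i + 1) (j + 1)
      = w ⟨i + 1, hi⟩ ⟨j + 1, hj⟩ - w ⟨i + 1, hi⟩ ⟨j, by omega⟩
        - w ⟨i, by omega⟩ ⟨j + 1, hj⟩ + w ⟨i, by omega⟩ ⟨j, by omega⟩ := by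
  simp [mixedDiff, borderExt, hi, hj, (Nat.lt_succ_self i).trans hi,
    (Nat.lt_succ_self j).trans hj]

end Extension

section Cycles

variable {m n : ℕ}

theorem cycleCount_eq_sum (k : ℕ) (p : ℕ → Fin m × Fin n) (i j : ℕ) :
    cycleCount k p i j
      = ∑ l ∈ Icc 1 k, (quadrantInd (p (2 * l)) i j - quadrantInd (p (2 * l - 1)) i j) := by
  simp only [cycleCount, card_filter, sum_sub_distrib, quadrantInd]
  push_cast
  rfl

theorem cycleCount_eq_zero_of_le (k : ℕ) (p : ℕ → Fin m × Fin n) {i j : ℕ}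
    (h : m ≤ i ∨ n ≤ j) : cycleCount k p i j = 0 := by
  simp [cycleCount_eq_sum, quadrantInd_eq_zero_of_le h]

theorem sum_cycleCount_smul_mixedDiff {R : Type*} [AddCommGroup R] (w : Fin m → Fin n → R)
    (k : ℕ) (p : ℕ → Fin m × Fin n) :
    ∑ i ∈ range m, ∑ j ∈ range n, cycleCount k p i j • mixedDiff (borderExt w) i j
      = ∑ l ∈ Icc 1 k,
          (w (p (2 * l)).1 (p (2 * l)).2 - w (p (2 * l - 1)).1 (p (2 * l - 1)).2) := by
  simp only [cycleCount_eq_sum, sum_smul, sub_smul]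
  rw [sum_congr rfl fun i _ => sum_comm, sum_comm]
  simp only [sum_sub_distrib, sum_quadrantInd_smul_mixedDiff]

namespace IsOrthoCycle

variable {k : ℕ} {p : ℕ → Fin m × Fin n}

theorem sum_col_even_eq_odd {M : Type*} [AddCommMonoid M] (hc : IsOrthoCycle k p)
    (f : Fin n → M) :
    ∑ l ∈ Icc 1 k, f (p (2 * l)).2 = ∑ l ∈ Icc 1 k, f (p (2 * l - 1)).2 := by
  refine sum_congr rfl fun l hl => ?_
  obtain ⟨hl1, hlk⟩ := mem_Icc.mp hl
  have := (hc.2.2 (l - 1) (by omega)).2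
  rw [show 2 * (l - 1) + 1 = 2 * l - 1 by omega, show 2 * (l - 1) + 2 = 2 * l by omega] at this
  rw [this]

theorem sum_row_even_eq_odd {M : Type*} [AddCancelCommMonoid M] (hc : IsOrthoCycle k p)
    (f : Fin m → M) :
    ∑ l ∈ Icc 1 k, f (p (2 * l)).1 = ∑ l ∈ Icc 1 k, f (p (2 * l - 1)).1 := by
  have hshift : ∀ g : ℕ → M, ∑ l ∈ Icc 1 k, g l = ∑ l ∈ range k, g (l + 1) := fun g => by
    rw [range_eq_Ico, sum_Ico_add']
    rfl
  -- the closing condition `p 0 = p (2k)` lets the even positions be shifted back by one step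
  have hcyclic : ∑ l ∈ range k, f (p (2 * (l + 1))).1 = ∑ l ∈ range k, f (p (2 * l)).1 := by
    have h := sum_range_succ (fun l => f (p (2 * l)).1) k
    rw [sum_range_succ', ← hc.2.1] at h
    exact add_right_cancel h
  rw [hshift, hshift, hcyclic]
  refine sum_congr rfl fun l hl => ?_
  rw [(hc.2.2 l (mem_range.mp hl)).1, show 2 * (l + 1) - 1 = 2 * l + 1 by omega]

theorem cycleCount_zero_left (hc : IsOrthoCycle k p) (j : ℕ) : cycleCount k p 0 j = 0 := by
  rw [cycleCount_eq_sum, sum_sub_distrib, sub_eq_zero]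
  simpa [quadrantInd] using
    hc.sum_col_even_eq_odd fun c : Fin n => if j < (c : ℕ) + 1 then (1 : ℤ) else 0

theorem cycleCount_zero_right (hc : IsOrthoCycle k p) (i : ℕ) : cycleCount k p i 0 = 0 := by
  rw [cycleCount_eq_sum, sum_sub_distrib, sub_eq_zero]
  simpa [quadrantInd] using
    hc.sum_row_even_eq_odd fun r : Fin m => if i < (r : ℕ) + 1 then (1 : ℤ) else 0

end IsOrthoCycle

end Cycles

theorem sum_range_sum_range_zsmul_pos {m n : ℕ} {c : ℕ → ℕ → ℤ} {D : ℕ → ℕ → ℝ}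
    (hc : ∀ i j, 0 ≤ c i j) (hc_left : ∀ j, c 0 j = 0) (hc_right : ∀ i, c i 0 = 0)
    (hD : ∀ i j, i + 1 < m → j + 1 < n → 0 < D (i + 1) (j + 1))
    {i₀ j₀ : ℕ} (hi₀ : i₀ < m) (hj₀ : j₀ < n) (h₀ : 0 < c i₀ j₀) :
    0 < ∑ i ∈ range m, ∑ j ∈ range n, c i j • D i j := by
  have hterm : ∀ i j, i < m → j < n → 0 < c i j → 0 < c i j • D i j := by
    rintro (_ | i) (_ | j) hi hj hcij
    iterate 2 · simp [hc_left] at hcij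
    · simp [hc_right] at hcij
    · exact zsmul_pos (hD i j hi hj) hcij
  rw [← sum_product']
  refine sum_pos' (fun x hx => ?_)
    ⟨(i₀, j₀), mem_product.mpr ⟨mem_range.mpr hi₀, mem_range.mpr hj₀⟩, hterm _ _ hi₀ hj₀ h₀⟩
  obtain ⟨hi, hj⟩ := mem_product.mp hx
  rcases (hc x.1 x.2).eq_or_lt with hzero | hpos
  · simp [← hzero]
  · exact (hterm _ _ (mem_range.mp hi) (mem_range.mp hj) hpos).le

def IsTP2 {m n : ℕ} (A : Matrix (Fin m) (Fin n) ℝ) : Prop :=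
  (∀ i j, 0 < A i j) ∧
    ∀ (i i' : Fin m) (j j' : Fin n), i < i' → j < j' → 0 < A i j * A i' j' - A i j' * A i' j

namespace IsTP2

variable {m n : ℕ} {A : Matrix (Fin m) (Fin n) ℝ}

theorem mixedDiff_log_pos (hA : IsTP2 A) {i j : ℕ} (hi : i + 1 < m) (hj : j + 1 < n) :
    0 < mixedDiff (borderExt fun i j => Real.log (A i j)) (i + 1) (j + 1) := by
  rw [mixedDiff_borderExt_succ _ hi hj]
  set r : Fin m := ⟨i, by omega⟩
  set r' : Fin m := ⟨i + 1, hi⟩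
  set s : Fin n := ⟨j, by omega⟩
  set s' : Fin n := ⟨j + 1, hj⟩
  have hminor :=
    hA.2 r r' s s' (Fin.mk_lt_mk.mpr i.lt_succ_self) (Fin.mk_lt_mk.mpr j.lt_succ_self)
  have hlog : Real.log (A r s' * A r' s) < Real.log (A r s * A r' s') :=
    Real.log_lt_log (mul_pos (hA.1 _ _) (hA.1 _ _)) (by linarith)
  rw [Real.log_mul (hA.1 _ _).ne' (hA.1 _ _).ne', Real.log_mul (hA.1 _ _).ne' (hA.1 _ _).ne']
    at hlog
  linarith

theorem sum_log_cycles_pos (hA : IsTP2 A) {N : ℕ} {K : Fin N → ℕ} {P : Fin N → ℕ → Fin m × Fin n}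
    (hcyc : ∀ a, IsOrthoCycle (K a) (P a)) (hpos : IsPositiveCollection K P) :
    0 < ∑ a, ∑ l ∈ Icc 1 (K a),
      (Real.log (A (P a (2 * l)).1 (P a (2 * l)).2)
        - Real.log (A (P a (2 * l - 1)).1 (P a (2 * l - 1)).2)) := by
  obtain ⟨hnonneg, i₀, j₀, h₀⟩ := hpos
  have hin : i₀ < m ∧ j₀ < n := by
    by_contra h
    rw [not_and_or, not_lt, not_lt] at h
    simp [cycleCount_eq_zero_of_le _ _ h] at h₀
  simp only [← sum_cycleCount_smul_mixedDiff fun i j => Real.log (A i j)]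
  rw [sum_comm, sum_congr rfl fun i _ => sum_comm]
  simp only [← sum_smul]
  exact sum_range_sum_range_zsmul_pos hnonneg
    (fun j => sum_eq_zero fun a _ => (hcyc a).cycleCount_zero_left j)
    (fun i => sum_eq_zero fun a _ => (hcyc a).cycleCount_zero_right i)
    (fun i j hi hj => hA.mixedDiff_log_pos hi hj) hin.1 hin.2 h₀

end IsTP2

theorem stmt_11_general (m n : ℕ) (S : Set (Fin m × Fin n))
    (N : ℕ) (K : Fin N → ℕ) (P : Fin N → ℕ → Fin m × Fin n)
    (hcyc : ∀ a, IsOrthoCycle (K a) (P a))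
    (hsupp : ∀ a, ∀ i ≤ 2 * K a, P a i ∈ S)
    (hpos : IsPositiveCollection K P) :
    ¬ ∃ A : Matrix (Fin m) (Fin n) ℝ,
        (∀ i j, 0 < A i j) ∧
        (∀ (i i' : Fin m) (j j' : Fin n), i < i' → j < j' →
          0 < A i j * A i' j' - A i j' * A i' j) ∧
        (∀ q ∈ S, A q.1 q.2 = 1) := by
  rintro ⟨A, hApos, hAtp, hAone⟩
  have hzero : ∀ a, ∀ l ∈ Icc 1 (K a),
      Real.log (A (P a (2 * l)).1 (P a (2 * l)).2)
        - Real.log (A (P a (2 * l - 1)).1 (P a (2 * l - 1)).2) = 0 := by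
    intro a l hl
    have hlk := (mem_Icc.mp hl).2
    rw [hAone _ (hsupp a _ (by omega)), hAone _ (hsupp a _ (by omega)), sub_self]
  have hlt := IsTP2.sum_log_cycles_pos ⟨hApos, hAtp⟩ hcyc hpos
  rw [sum_eq_zero fun a _ => sum_eq_zero (hzero a)] at hlt
  exact hlt.false

/-- if a set S of positions contains no 2-by-2 submatrix and
some finite collection of orthogonal cycles supported in S is positive, then
no TP₂ matrix equals 1 on all of S, i.e. the all-ones partial matrix with
pattern S has no TP₂ completion. -/
theorem stmt_11 (m n : ℕ) (S : Set (Fin m × Fin n))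
    (hS : ¬ ∃ (i i' : Fin m) (j j' : Fin n), i < i' ∧ j < j' ∧
        (i, j) ∈ S ∧ (i, j') ∈ S ∧ (i', j) ∈ S ∧ (i', j') ∈ S)
    (N : ℕ) (K : Fin N → ℕ) (P : Fin N → ℕ → Fin m × Fin n)
    (hcyc : ∀ a, IsOrthoCycle (K a) (P a))
    (hsupp : ∀ a, ∀ i ≤ 2 * K a, P a i ∈ S)
    (hpos : IsPositiveCollection K P) :
    ¬ ∃ A : Matrix (Fin m) (Fin n) ℝ,
        (∀ i j, 0 < A i j) ∧
        (∀ (i i' : Fin m) (j j' : Fin n), i < i' → j < j' →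
          0 < A i j * A i' j' - A i j' * A i' j) ∧
        (∀ q ∈ S, A q.1 q.2 = 1) :=
  stmt_11_general m n S N K P hcyc hsupp hpos
end

section
/- Let π and σ be permutations of {1,…,n} with π(i) ≠ σ(i) for every i, and let C = (p_0, p_1, …, p_{2n}) be an orthogonal cycle such that the set of positions {p_0, p_2, …, p_{2n−2}} equals {(i, π(i)) : 1 ≤ i ≤ n}, the set {p_1, p_3, …, p_{2n−1}} equals {(i, σ(i)) : 1 ≤ i ≤ n}, and p_0 and p_1 both lie in the first row with the column of p_0 strictly smaller than the column of p_1. Then C is a positive orthogonal cycle if and only if π ≤ σ in the Bruhat order, i.e., if and only if for all 1 ≤ i, j ≤ n one has #{a ≤ i : π(a) ≤ j} ≥ #{a ≤ i : σ(a) ≤ j}. -/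
open Finset

section Aux
variable {n : ℕ}

private lemma permCard (τ : Equiv.Perm (Fin n)) (Q : Fin n → Prop) [DecidablePred Q] :
    (univ.filter fun a => Q (τ a)).card = (univ.filter Q).card := by
  apply Finset.card_bij (fun a _ => τ a)
  · intro a ha
    rw [mem_filter] at ha ⊢
    exact ⟨mem_univ _, ha.2⟩
  · intro a _ b _ h
    exact τ.injective h
  · intro b hb
    rw [mem_filter] at hb
    exact ⟨τ⁻¹ b, by rw [mem_filter]; simpa using hb.2, by simp⟩

private lemma keyCard (hn : 1 ≤ n) (f : ℕ → Fin n × Fin n) (τ : Equiv.Perm (Fin n))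
    (hf : ∀ q, (∃ l < n, f l = q) ↔ ∃ i, q = (i, τ i))
    (P : Fin n × Fin n → Prop) [DecidablePred P] :
    ((Finset.range n).filter fun l => P (f l)).card
      = (univ.filter fun a : Fin n => P (a, τ a)).card := by
  have hgraph : ∀ l < n, f l = ((f l).1, τ (f l).1) := by
    intro l hl
    obtain ⟨i, hi⟩ := (hf (f l)).1 ⟨l, hl, rfl⟩
    rw [hi]
  have hinj : Set.InjOn f (Finset.range n) := by
    apply Finset.injOn_of_card_image_eq
    have himg : (Finset.range n).image f = univ.image (fun i : Fin n => (i, τ i)) := by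
      ext q
      simp only [mem_image, mem_range, mem_univ, true_and]
      constructor
      · rintro ⟨l, hl, rfl⟩
        obtain ⟨i, hi⟩ := (hf (f l)).1 ⟨l, hl, rfl⟩
        exact ⟨i, hi.symm⟩
      · rintro ⟨i, rfl⟩
        obtain ⟨l, hl, hfl⟩ := (hf (i, τ i)).2 ⟨i, rfl⟩
        exact ⟨l, hl, hfl⟩
    rw [himg, Finset.card_image_of_injective _ (fun a b h => congrArg Prod.fst h),
      card_univ, Fintype.card_fin, card_range]
  apply Finset.card_bij (fun l _ => (f l).1)
  · intro l hl
    rw [mem_filter] at hl ⊢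
    refine ⟨mem_univ _, ?_⟩
    rw [← hgraph l (mem_range.1 hl.1)]
    exact hl.2
  · intro l hl l' hl' h
    rw [mem_filter] at hl hl'
    apply hinj (Finset.mem_coe.2 hl.1) (Finset.mem_coe.2 hl'.1)
    rw [hgraph l (mem_range.1 hl.1), hgraph l' (mem_range.1 hl'.1), h]
  · intro b hb
    rw [mem_filter] at hb
    obtain ⟨l, hl, hfl⟩ := (hf (b, τ b)).2 ⟨b, rfl⟩
    refine ⟨l, ?_, by rw [hfl]⟩
    rw [mem_filter]
    exact ⟨mem_range.2 hl, by rw [hfl]; exact hb.2⟩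

private lemma shiftIcc (hn : 1 ≤ n) (Q : ℕ → Prop) [DecidablePred Q] (hQ : Q n ↔ Q 0) :
    ((Finset.Icc 1 n).filter Q).card = ((Finset.range n).filter Q).card := by
  have h1 : Finset.Icc 1 n = insert n (Finset.Ico 1 n) := (Finset.Ico_insert_right hn).symm
  have h2 : Finset.range n = insert 0 (Finset.Ico 1 n) := by
    ext a; simp only [Finset.mem_range, Finset.mem_insert, Finset.mem_Ico]; omega
  rw [h1, h2, Finset.filter_insert, Finset.filter_insert]
  by_cases h : Q 0
  · rw [if_pos (hQ.2 h), if_pos h, Finset.card_insert_of_notMem (by simp),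
      Finset.card_insert_of_notMem (by simp [Finset.mem_filter])]
  · rw [if_neg (fun hn' => h (hQ.1 hn')), if_neg h]

private lemma shiftIcc' (Q : ℕ → Prop) [DecidablePred Q] :
    ((Finset.Icc 1 n).filter Q).card = ((Finset.range n).filter fun l => Q (l + 1)).card := by
  apply Finset.card_bij (fun l _ => l - 1)
  · intro l hl
    rw [mem_filter, mem_Icc] at hl
    rw [mem_filter, mem_range]
    have h : l - 1 + 1 = l := by omega
    exact ⟨by omega, by rw [h]; exact hl.2⟩
  · intro l hl l' hl' h
    rw [mem_filter, mem_Icc] at hl hl'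
    omega
  · intro b hb
    rw [mem_filter, mem_range] at hb
    refine ⟨b + 1, ?_, by omega⟩
    rw [mem_filter, mem_Icc]
    exact ⟨⟨by omega, by omega⟩, hb.2⟩

private lemma ieCard (τ : Equiv.Perm (Fin n)) (i j : ℕ) :
    ((univ.filter fun a : Fin n => i ≤ (a : ℕ) ∧ j ≤ (τ a : ℕ)).card : ℤ)
      = ((univ.filter fun a : Fin n => i ≤ (a : ℕ)).card : ℤ)
        - ((univ.filter fun b : Fin n => (b : ℕ) < j).card : ℤ)
        + ((univ.filter fun a : Fin n => (a : ℕ) < i ∧ (τ a : ℕ) < j).card : ℤ) := by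
  have h1 := Finset.card_filter_add_card_filter_not
      (s := univ.filter fun a : Fin n => i ≤ (a : ℕ)) (p := fun a => j ≤ (τ a : ℕ))
  have h2 := Finset.card_filter_add_card_filter_not
      (s := univ.filter fun a : Fin n => (τ a : ℕ) < j) (p := fun a => i ≤ (a : ℕ))
  simp only [not_le, Finset.filter_filter] at h1 h2
  have e1 : (univ.filter fun a : Fin n => i ≤ (a : ℕ) ∧ (τ a : ℕ) < j)
      = (univ.filter fun a : Fin n => (τ a : ℕ) < j ∧ i ≤ (a : ℕ)) := by
    apply Finset.filter_congr; intro a _; exact and_comm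
  have e2 : (univ.filter fun a : Fin n => (τ a : ℕ) < j ∧ (a : ℕ) < i)
      = (univ.filter fun a : Fin n => (a : ℕ) < i ∧ (τ a : ℕ) < j) := by
    apply Finset.filter_congr; intro a _; exact and_comm
  have e3 : (univ.filter fun a : Fin n => (τ a : ℕ) < j).card
      = (univ.filter fun b : Fin n => (b : ℕ) < j).card :=
    permCard τ (fun b => (b : ℕ) < j)
  rw [e1] at h1
  rw [e2, e3] at h2
  omega

end Aux


/-- an orthogonal cycle whose even positions form the graph of a
permutation π, whose odd positions form the graph of σ (with π(i) ≠ σ(i) for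
all i), and which starts in the first row with p₀ strictly to the left of p₁,
is positive if and only if π ≤ σ in the Bruhat order (expressed via the
counting criterion on leading submatrices of permutation matrices). -/
theorem stmt_12 (n : ℕ) (π σ : Equiv.Perm (Fin n)) (hd : ∀ i, π i ≠ σ i)
    (p : ℕ → Fin n × Fin n) (hcyc : IsOrthoCycle n p)
    (heven : ∀ q : Fin n × Fin n, (∃ l < n, p (2 * l) = q) ↔ ∃ i, q = (i, π i))
    (hodd : ∀ q : Fin n × Fin n, (∃ l < n, p (2 * l + 1) = q) ↔ ∃ i, q = (i, σ i))
    (h0 : ((p 0).1 : ℕ) = 0) (h1 : ((p 1).1 : ℕ) = 0) (h01 : (p 0).2 < (p 1).2) :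
    ((∀ i j : ℕ, 0 ≤ cycleCount n p i j) ∧ (∃ i j : ℕ, 0 < cycleCount n p i j)) ↔
    (∀ i j : Fin n,
      (Finset.univ.filter fun a : Fin n => a ≤ i ∧ σ a ≤ j).card ≤
      (Finset.univ.filter fun a : Fin n => a ≤ i ∧ π a ≤ j).card) := by
  obtain ⟨hn, hclose, hrows⟩ := hcyc
  -- 𝔠(i,j) = #{a<i, πa<j} − #{a<i, σa<j}
  have hceq : ∀ i j : ℕ, cycleCount n p i j =
      ((univ.filter fun a : Fin n => (a : ℕ) < i ∧ (π a : ℕ) < j).card : ℤ)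
      - ((univ.filter fun a : Fin n => (a : ℕ) < i ∧ (σ a : ℕ) < j).card : ℤ) := by
    intro i j
    unfold cycleCount
    simp only [Nat.lt_succ_iff]
    have hE : ((Finset.Icc 1 n).filter fun l =>
          i ≤ ((p (2 * l)).1 : ℕ) ∧ j ≤ ((p (2 * l)).2 : ℕ)).card
        = (univ.filter fun a : Fin n => i ≤ (a : ℕ) ∧ j ≤ (π a : ℕ)).card := by
      rw [shiftIcc hn _ (by rw [← hclose])]
      exact keyCard hn (fun l => p (2 * l)) π heven
        (fun q => i ≤ (q.1 : ℕ) ∧ j ≤ (q.2 : ℕ))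
    have hO : ((Finset.Icc 1 n).filter fun l =>
          i ≤ ((p (2 * l - 1)).1 : ℕ) ∧ j ≤ ((p (2 * l - 1)).2 : ℕ)).card
        = (univ.filter fun a : Fin n => i ≤ (a : ℕ) ∧ j ≤ (σ a : ℕ)).card := by
      rw [shiftIcc']
      simp only [show ∀ l : ℕ, 2 * (l + 1) - 1 = 2 * l + 1 from fun l => by omega]
      exact keyCard hn (fun l => p (2 * l + 1)) σ hodd
        (fun q => i ≤ (q.1 : ℕ) ∧ j ≤ (q.2 : ℕ))
    rw [hE, hO, ieCard π i j, ieCard σ i j]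
    ring
  -- π 0 < σ 0
  have hlt : ((π ⟨0, hn⟩ : Fin n) : ℕ) < ((σ ⟨0, hn⟩ : Fin n) : ℕ) := by
    obtain ⟨i0, hp0⟩ := (heven (p 0)).1 ⟨0, hn, rfl⟩
    obtain ⟨i1, hp1⟩ := (hodd (p 1)).1 ⟨0, hn, rfl⟩
    rw [hp0] at h0
    rw [hp1] at h1
    have hi0 : i0 = ⟨0, hn⟩ := Fin.ext h0
    have hi1 : i1 = ⟨0, hn⟩ := Fin.ext h1
    rw [hp0, hp1, hi0, hi1] at h01
    exact h01
  -- the existence part holds unconditionally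
  have hex : ∃ i j : ℕ, 0 < cycleCount n p i j := by
    have h00 : ((⟨0, hn⟩ : Fin n) : ℕ) = 0 := rfl
    refine ⟨1, ((π ⟨0, hn⟩ : Fin n) : ℕ) + 1, ?_⟩
    rw [hceq]
    have hπpos : 0 < (univ.filter fun a : Fin n =>
        (a : ℕ) < 1 ∧ (π a : ℕ) < ((π ⟨0, hn⟩ : Fin n) : ℕ) + 1).card := by
      apply Finset.card_pos.2
      exact ⟨⟨0, hn⟩, mem_filter.2 ⟨mem_univ _, by omega⟩⟩
    have hσ0 : (univ.filter fun a : Fin n =>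
        (a : ℕ) < 1 ∧ (σ a : ℕ) < ((π ⟨0, hn⟩ : Fin n) : ℕ) + 1).card = 0 := by
      rw [Finset.card_eq_zero, Finset.filter_eq_empty_iff]
      rintro a - ⟨ha1, ha2⟩
      have ha : a = ⟨0, hn⟩ := Fin.ext (by omega)
      rw [ha] at ha2
      omega
    rw [hσ0]
    omega
  constructor
  · rintro ⟨hall, -⟩ i j
    have h := hall ((i : ℕ) + 1) ((j : ℕ) + 1)
    rw [hceq] at h
    have eπ : (univ.filter fun a : Fin n => (a : ℕ) < (i : ℕ) + 1 ∧ (π a : ℕ) < (j : ℕ) + 1)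
        = (univ.filter fun a : Fin n => a ≤ i ∧ π a ≤ j) := by
      apply Finset.filter_congr; intro a _
      simp only [Fin.le_def, Nat.lt_succ_iff]
    have eσ : (univ.filter fun a : Fin n => (a : ℕ) < (i : ℕ) + 1 ∧ (σ a : ℕ) < (j : ℕ) + 1)
        = (univ.filter fun a : Fin n => a ≤ i ∧ σ a ≤ j) := by
      apply Finset.filter_congr; intro a _
      simp only [Fin.le_def, Nat.lt_succ_iff]
    rw [eπ, eσ] at h
    have h2 := sub_nonneg.1 h
    exact_mod_cast h2
  · intro hR
    refine ⟨?_, hex⟩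
    intro i j
    rw [hceq, sub_nonneg, Nat.cast_le]
    rcases Nat.eq_zero_or_pos i with hi | hi
    · subst hi; simp
    rcases Nat.eq_zero_or_pos j with hj | hj
    · subst hj; simp
    have hi' : min i n - 1 < n := by omega
    have hj' : min j n - 1 < n := by omega
    have h := hR ⟨min i n - 1, hi'⟩ ⟨min j n - 1, hj'⟩
    have e : ∀ τ : Equiv.Perm (Fin n),
        (univ.filter fun a : Fin n =>
            a ≤ (⟨min i n - 1, hi'⟩ : Fin n) ∧ τ a ≤ (⟨min j n - 1, hj'⟩ : Fin n))
        = (univ.filter fun a : Fin n => (a : ℕ) < i ∧ (τ a : ℕ) < j) := by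
      intro τ
      apply Finset.filter_congr
      intro a _
      have ha := a.isLt
      have hτa := (τ a).isLt
      simp only [Fin.le_def]
      omega
    rw [e π, e σ] at h
    exact h
end

section
/- Let A be a 2-by-n totally positive real matrix, let 1 ≤ i < j < k < w ≤ n, and let α > 0. Then it is not the case that all four 2-by-2 minors of A on column pairs (i,j), (i,k), (j,w), and (k,w) equal α; that is, not all of det A[{1,2}|{i,j}], det A[{1,2}|{i,k}], det A[{1,2}|{j,w}], det A[{1,2}|{k,w}] can equal α. -/
lemma minor_pos {n : ℕ} (A : Matrix (Fin 2) (Fin n) ℝ)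
    (hA : TotallyPositive A) {u v : Fin n} (huv : u < v) :
    0 < A 0 u * A 1 v - A 0 v * A 1 u := by
  have h := hA 2 id ![u, v] strictMono_id ?_
  · simpa [Matrix.det_fin_two, Matrix.submatrix] using h
  · intro a b hab
    fin_cases a <;> fin_cases b <;> simp_all <;> omega

/-- in a 2-by-n totally positive matrix, for columns
i < j < k < w, the four 2-by-2 minors on column pairs (i,j), (i,k), (j,w),
(k,w) cannot all equal the same α > 0. -/
theorem stmt_14 (n : ℕ) (A : Matrix (Fin 2) (Fin n) ℝ)
    (hA : TotallyPositive A) (i j k w : Fin n)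
    (hij : i < j) (hjk : j < k) (hkw : k < w) (α : ℝ) (hα : 0 < α) :
    ¬ (A 0 i * A 1 j - A 0 j * A 1 i = α ∧
       A 0 i * A 1 k - A 0 k * A 1 i = α ∧
       A 0 j * A 1 w - A 0 w * A 1 j = α ∧
       A 0 k * A 1 w - A 0 w * A 1 k = α) := by
  rintro ⟨h1, h2, h3, h4⟩
  have hjk' := minor_pos A hA hjk
  have hiw' := minor_pos A hA (hij.trans (hjk.trans hkw))
  -- Plücker: d(i,k)*d(j,w) = d(i,j)*d(k,w) + d(i,w)*d(j,k)
  have plucker : (A 0 i * A 1 k - A 0 k * A 1 i) * (A 0 j * A 1 w - A 0 w * A 1 j)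
      = (A 0 i * A 1 j - A 0 j * A 1 i) * (A 0 k * A 1 w - A 0 w * A 1 k)
      + (A 0 i * A 1 w - A 0 w * A 1 i) * (A 0 j * A 1 k - A 0 k * A 1 j) := by
    ring
  rw [h1, h2, h3, h4] at plucker
  nlinarith [mul_pos hiw' hjk']
end

section
/- Let A be a 2-by-n totally positive real matrix, let 1 ≤ i < j < k < w ≤ n, and let α > 0. Then it is not the case that all four 2-by-2 minors of A on column pairs (i,k), (i,w), (j,k), and (j,w) equal α; that is, not all of det A[{1,2}|{i,k}], det A[{1,2}|{i,w}], det A[{1,2}|{j,k}], det A[{1,2}|{j,w}] can equal α. -/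
/-- in a 2-by-n totally positive matrix, for columns
i < j < k < w, the four 2-by-2 minors on column pairs (i,k), (i,w), (j,k),
(j,w) cannot all equal the same α > 0. -/
theorem stmt_15 (n : ℕ) (A : Matrix (Fin 2) (Fin n) ℝ)
    (hA : TotallyPositive A) (i j k w : Fin n)
    (hij : i < j) (hjk : j < k) (hkw : k < w) (α : ℝ) (hα : 0 < α) :
    ¬ (A 0 i * A 1 k - A 0 k * A 1 i = α ∧
       A 0 i * A 1 w - A 0 w * A 1 i = α ∧
       A 0 j * A 1 k - A 0 k * A 1 j = α ∧
       A 0 j * A 1 w - A 0 w * A 1 j = α) := by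
  have minor_pos : ∀ u v : Fin n, u < v → 0 < A 0 u * A 1 v - A 0 v * A 1 u := by
    intro u v huv
    have hg : StrictMono (![u, v] : Fin 2 → Fin n) := by
      intro a b hab
      fin_cases a <;> fin_cases b <;> simp_all <;> exact absurd hab (by omega)
    have := hA 2 id ![u, v] strictMono_id hg
    simpa [Matrix.det_fin_two, Matrix.submatrix] using this
  rintro ⟨h1, h2, h3, h4⟩
  have hij' := minor_pos i j hij
  have hkw' := minor_pos k w hkw
  have key : (A 0 i * A 1 k - A 0 k * A 1 i) * (A 0 j * A 1 w - A 0 w * A 1 j)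
      - (A 0 i * A 1 w - A 0 w * A 1 i) * (A 0 j * A 1 k - A 0 k * A 1 j)
      = (A 0 i * A 1 j - A 0 j * A 1 i) * (A 0 k * A 1 w - A 0 w * A 1 k) := by
    ring
  rw [h1, h2, h3, h4] at key
  nlinarith [mul_pos hij' hkw']
end
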